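/- arXiv:2308.01107 — 9 statements merged into one kernel-verified Lean document; each statement's English description precedes it below -/
import Mathlib

section
/- For every entire function F : ℂ² → ℂ with Taylor expansion F(u,v) = Σ_{p,q} a_{p,q} u^p v^q at the origin, and for every compact set K ⊆ Ω₀ = {(z,w) ∈ ℂ × ℂ : z·w ≠ 1}, the series Σ_{p,q∈ℕ} |a_{p,q}| · sup_{(z,w)∈K} |f_{p,q}(z,w)| is finite; in particular the series Σ_{p,q} a_{p,q} f_{p,q} converges absolutely and uniformly on every compact subset of Ω₀. -/
open Complex

/-- The affine chart of the complement of the complexified unit circle. -/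
def Omega0 : Set (ℂ × ℂ) := {p | p.1 * p.2 ≠ 1}

/-- The basis functions f_{p,q}(z,w) = z^p w^q / (1−zw)^{max(p,q)}. -/
noncomputable def fpq (p q : ℕ) (zw : ℂ × ℂ) : ℂ :=
  zw.1 ^ p * zw.2 ^ q / (1 - zw.1 * zw.2) ^ max p q

/-- for every entire F with Taylor coefficients a_{p,q} and every compact
K ⊆ Ω₀, the series Σ_{p,q} |a_{p,q}| · sup_K |f_{p,q}| is finite; in particular
Σ a_{p,q} f_{p,q} converges absolutely and uniformly on compact subsets of Ω₀. -/
theorem series_converges_on_compacts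
    (F : ℂ × ℂ → ℂ) (hF : Differentiable ℂ F)
    (a : ℕ → ℕ → ℂ)
    (ha : ∀ u v : ℂ, HasSum (fun pq : ℕ × ℕ => a pq.1 pq.2 * u ^ pq.1 * v ^ pq.2) (F (u, v)))
    (K : Set (ℂ × ℂ)) (hK : IsCompact K) (hKΩ : K ⊆ Omega0) :
    Summable (fun pq : ℕ × ℕ =>
      ‖a pq.1 pq.2‖ * ⨆ zw : K, ‖fpq pq.1 pq.2 (zw : ℂ × ℂ)‖) := by
  rcases K.eq_empty_or_nonempty with hKe | hne
  · subst hKe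
    have : ∀ pq : ℕ × ℕ,
        ‖a pq.1 pq.2‖ * ⨆ zw : (∅ : Set (ℂ × ℂ)), ‖fpq pq.1 pq.2 (zw : ℂ × ℂ)‖ = 0 := by
      intro pq
      rw [Real.iSup_of_isEmpty, mul_zero]
    simpa [this] using summable_zero
  · -- minimum of ‖1 - z*w‖ on K
    have hcont : ContinuousOn (fun zw : ℂ × ℂ => ‖1 - zw.1 * zw.2‖) K :=
      (continuous_const.sub (continuous_fst.mul continuous_snd)).norm.continuousOn
    obtain ⟨x0, hx0K, hmin⟩ := hK.exists_isMinOn hne hcont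
    set δ : ℝ := ‖1 - x0.1 * x0.2‖ with hδdef
    have hδ : 0 < δ := by
      rw [hδdef, norm_pos_iff, sub_ne_zero]
      exact fun h => hKΩ hx0K h.symm
    -- max of norm on K
    obtain ⟨y0, hy0K, hmax⟩ := hK.exists_isMaxOn hne continuous_norm.continuousOn
    set M : ℝ := max ‖y0‖ 1 with hMdef
    have hM1 : (1 : ℝ) ≤ M := le_max_right _ _
    set d : ℝ := min δ 1 with hddef
    have hd : 0 < d := lt_min hδ one_pos
    have hd1 : d ≤ 1 := min_le_right _ _
    set C : ℝ := M / d with hCdef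
    have hC0 : 0 ≤ C := div_nonneg (le_trans zero_le_one hM1) hd.le
    -- key pointwise bound
    have hbound : ∀ (p q : ℕ) (zw : ℂ × ℂ), zw ∈ K →
        ‖fpq p q zw‖ ≤ C ^ p * C ^ q := by
      intro p q zw hzw
      have hz : ‖zw.1‖ ≤ M := le_trans (le_trans (norm_fst_le zw) (hmax hzw)) (le_max_left _ _)
      have hw : ‖zw.2‖ ≤ M := le_trans (le_trans (norm_snd_le zw) (hmax hzw)) (le_max_left _ _)
      have hden : d ≤ ‖1 - zw.1 * zw.2‖ := le_trans (min_le_left _ _) (hmin hzw)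
      have hnum : ‖zw.1‖ ^ p * ‖zw.2‖ ^ q ≤ M ^ (p + q) := by
        rw [pow_add]
        exact mul_le_mul (pow_le_pow_left₀ (norm_nonneg _) hz p)
          (pow_le_pow_left₀ (norm_nonneg _) hw q) (by positivity) (by positivity)
      have hden2 : d ^ (p + q) ≤ ‖1 - zw.1 * zw.2‖ ^ max p q := by
        calc d ^ (p + q) ≤ d ^ max p q :=
              pow_le_pow_of_le_one hd.le hd1 (by omega)
          _ ≤ ‖1 - zw.1 * zw.2‖ ^ max p q := pow_le_pow_left₀ hd.le hden _
      have : ‖fpq p q zw‖ = ‖zw.1‖ ^ p * ‖zw.2‖ ^ q / ‖1 - zw.1 * zw.2‖ ^ max p q := by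
        simp [fpq, norm_div, norm_mul, norm_pow]
      rw [this]
      calc ‖zw.1‖ ^ p * ‖zw.2‖ ^ q / ‖1 - zw.1 * zw.2‖ ^ max p q
          ≤ M ^ (p + q) / d ^ (p + q) :=
            div_le_div₀ (by positivity) hnum (by positivity) hden2
        _ = C ^ p * C ^ q := by rw [hCdef, pow_add, pow_add, div_pow, div_pow, div_mul_div_comm]
    -- summability of the majorant from entire function
    have hsum : Summable (fun pq : ℕ × ℕ =>
        ‖a pq.1 pq.2 * (C : ℂ) ^ pq.1 * (C : ℂ) ^ pq.2‖) :=
      summable_norm_iff.mpr (ha (C : ℂ) (C : ℂ)).summable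
    refine Summable.of_nonneg_of_le (fun pq => ?_) (fun pq => ?_) hsum
    · exact mul_nonneg (norm_nonneg _) (Real.iSup_nonneg fun zw => norm_nonneg _)
    · have h1 : (⨆ zw : K, ‖fpq pq.1 pq.2 (zw : ℂ × ℂ)‖) ≤ C ^ pq.1 * C ^ pq.2 := by
        have : Nonempty K := hne.to_subtype
        exact ciSup_le fun zw => hbound pq.1 pq.2 zw zw.2
      calc ‖a pq.1 pq.2‖ * ⨆ zw : K, ‖fpq pq.1 pq.2 (zw : ℂ × ℂ)‖
          ≤ ‖a pq.1 pq.2‖ * (C ^ pq.1 * C ^ pq.2) :=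
            mul_le_mul_of_nonneg_left h1 (norm_nonneg _)
        _ = ‖a pq.1 pq.2 * (C : ℂ) ^ pq.1 * (C : ℂ) ^ pq.2‖ := by
            rw [norm_mul, norm_mul, norm_pow, norm_pow, Complex.norm_real,
              Real.norm_of_nonneg hC0, mul_assoc]
end

section
/- For every entire function F : ℂ² → ℂ with Taylor expansion F(u,v) = Σ_{p,q} a_{p,q} u^p v^q at the origin, and for every compact set K ⊆ {(u,v) ∈ ℂ × ℂ : u·v ≠ 1}, the series Σ_{p,q∈ℕ} |a_{p,q}| · sup_{(u,v)∈K} |g_{p,q}(u,v)| is finite, where g_{p,q}(u,v) = u^{p−q}/(uv−1)^p for p ≥ q and g_{p,q}(u,v) = v^{q−p}/(uv−1)^q for p < q; in particular Σ_{p,q} a_{p,q} g_{p,q} converges absolutely and uniformly on every compact subset of {uv ≠ 1}. -/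
open Complex

/-- The flip-chart basis functions: g_{p,q}(u,v) = u^{p−q}/(uv−1)^p for p ≥ q and
g_{p,q}(u,v) = v^{q−p}/(uv−1)^q for p < q. -/
noncomputable def gpq (p q : ℕ) (uv : ℂ × ℂ) : ℂ :=
  if q ≤ p then uv.1 ^ (p - q) / (uv.1 * uv.2 - 1) ^ p
  else uv.2 ^ (q - p) / (uv.1 * uv.2 - 1) ^ q

/-- for every entire F with Taylor coefficients a_{p,q} and every compact
K ⊆ {(u,v) : u·v ≠ 1}, the series Σ_{p,q} |a_{p,q}| · sup_K |g_{p,q}| is finite;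
in particular Σ a_{p,q} g_{p,q} converges absolutely and uniformly on compacts. -/
theorem series_converges_on_compacts_flipChart
    (F : ℂ × ℂ → ℂ) (hF : Differentiable ℂ F)
    (a : ℕ → ℕ → ℂ)
    (ha : ∀ u v : ℂ, HasSum (fun pq : ℕ × ℕ => a pq.1 pq.2 * u ^ pq.1 * v ^ pq.2) (F (u, v)))
    (K : Set (ℂ × ℂ)) (hK : IsCompact K) (hKΩ : K ⊆ {q : ℂ × ℂ | q.1 * q.2 ≠ 1}) :
    Summable (fun pq : ℕ × ℕ =>
      ‖a pq.1 pq.2‖ * ⨆ uv : K, ‖gpq pq.1 pq.2 (uv : ℂ × ℂ)‖) := by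
  rcases K.eq_empty_or_nonempty with hKe | hKne
  · subst hKe
    have hz : ∀ pq : ℕ × ℕ,
        (‖a pq.1 pq.2‖ * ⨆ uv : (∅ : Set (ℂ × ℂ)), ‖gpq pq.1 pq.2 (uv : ℂ × ℂ)‖) = 0 := by
      intro pq
      rw [Real.iSup_of_isEmpty, mul_zero]
    simpa [hz] using summable_zero
  -- bound on the norms of points of K
  obtain ⟨M, hM⟩ := hK.isBounded.exists_norm_le
  set MC : ℝ := max M 1 with hMC
  have hMC1 : (1 : ℝ) ≤ MC := le_max_right _ _
  -- positive lower bound for ‖u*v - 1‖ on K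
  have hcont : Continuous fun uv : ℂ × ℂ => ‖uv.1 * uv.2 - 1‖ := by fun_prop
  obtain ⟨z0, hz0K, hz0min⟩ := hK.exists_isMinOn hKne hcont.continuousOn
  set δ : ℝ := ‖z0.1 * z0.2 - 1‖ with hδ
  have hδpos : 0 < δ := by
    rw [hδ, norm_pos_iff, sub_ne_zero]
    exact hKΩ hz0K
  set D : ℝ := max δ⁻¹ 1 with hD
  have hD1 : (1 : ℝ) ≤ D := le_max_right _ _
  set B : ℝ := MC * D with hB
  have hB1 : (1 : ℝ) ≤ B := one_le_mul_of_one_le_of_one_le hMC1 hD1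
  have hBpos : (0 : ℝ) < B := lt_of_lt_of_le one_pos hB1
  -- the radius
  set R : ℝ := 2 * B with hR
  have hRpos : (0 : ℝ) < R := by positivity
  -- summability of coefficients times R^(p+q)
  have hsum : Summable fun pq : ℕ × ℕ =>
      ‖a pq.1 pq.2 * (R : ℂ) ^ pq.1 * (R : ℂ) ^ pq.2‖ :=
    summable_norm_iff.mpr (ha (R : ℂ) (R : ℂ)).summable
  set C : ℝ := ∑' pq : ℕ × ℕ, ‖a pq.1 pq.2 * (R : ℂ) ^ pq.1 * (R : ℂ) ^ pq.2‖ with hC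
  have hterm : ∀ p q : ℕ, ‖a p q‖ * R ^ (p + q) ≤ C := by
    intro p q
    have h1 : ‖a p q * (R : ℂ) ^ p * (R : ℂ) ^ q‖ = ‖a p q‖ * R ^ (p + q) := by
      rw [norm_mul, norm_mul, norm_pow, norm_pow, Complex.norm_real,
        Real.norm_of_nonneg hRpos.le, pow_add, mul_assoc]
    calc ‖a p q‖ * R ^ (p + q) = ‖a p q * (R : ℂ) ^ p * (R : ℂ) ^ q‖ := h1.symm
      _ ≤ C := Summable.le_tsum hsum (p, q) fun j _ => norm_nonneg _
  -- bound on the sup of ‖gpq‖ over K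
  have hsup : ∀ p q : ℕ, (⨆ uv : K, ‖gpq p q (uv : ℂ × ℂ)‖) ≤ B ^ (p + q) := by
    intro p q
    apply Real.iSup_le _ (by positivity)
    rintro ⟨⟨u, v⟩, huv⟩
    have hu : ‖u‖ ≤ MC := le_trans (le_trans (norm_fst_le (u, v)) (hM _ huv)) (le_max_left _ _)
    have hv : ‖v‖ ≤ MC := le_trans (le_trans (norm_snd_le (u, v)) (hM _ huv)) (le_max_left _ _)
    have hden : δ ≤ ‖u * v - 1‖ := isMinOn_iff.mp hz0min (u, v) huv
    have hdenpos : 0 < ‖u * v - 1‖ := lt_of_lt_of_le hδpos hden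
    have hinv : ‖u * v - 1‖⁻¹ ≤ D := le_trans (by
      exact inv_anti₀ hδpos hden) (le_max_left _ _)
    have hkey : ∀ w : ℂ, ∀ r : ℕ, ‖w‖ ≤ MC → r ≤ max p q →
        ‖w ^ (max p q - min p q) / (u * v - 1) ^ r‖ ≤ B ^ (p + q) → True := fun _ _ _ _ _ =>
      trivial
    -- handle both branches uniformly
    show ‖gpq p q (u, v)‖ ≤ B ^ (p + q)
    unfold gpq
    have main : ∀ (w : ℂ) (s r : ℕ), ‖w‖ ≤ MC → s ≤ p + q → r ≤ p + q →
        ‖w ^ s / (u * v - 1) ^ r‖ ≤ B ^ (p + q) := by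
      intro w s r hw hs hr
      rw [norm_div, norm_pow, norm_pow]
      have h1 : ‖w‖ ^ s ≤ MC ^ (p + q) := by
        calc ‖w‖ ^ s ≤ MC ^ s := pow_le_pow_left₀ (norm_nonneg _) hw s
          _ ≤ MC ^ (p + q) := pow_le_pow_right₀ hMC1 hs
      have h2 : (‖u * v - 1‖ ^ r)⁻¹ ≤ D ^ (p + q) := by
        rw [← inv_pow]
        calc (‖u * v - 1‖⁻¹) ^ r ≤ D ^ r := pow_le_pow_left₀ (by positivity) hinv r
          _ ≤ D ^ (p + q) := pow_le_pow_right₀ hD1 hr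
      calc ‖w‖ ^ s / ‖u * v - 1‖ ^ r = ‖w‖ ^ s * (‖u * v - 1‖ ^ r)⁻¹ := div_eq_mul_inv _ _
        _ ≤ MC ^ (p + q) * D ^ (p + q) := by
            apply mul_le_mul h1 h2 (by positivity) (by positivity)
        _ = B ^ (p + q) := (mul_pow _ _ _).symm
    split
    · exact main u (p - q) p hu (le_trans (Nat.sub_le _ _) (Nat.le_add_right _ _)) (Nat.le_add_right _ _)
    · exact main v (q - p) q hv (le_trans (Nat.sub_le _ _) (Nat.le_add_left _ _)) (Nat.le_add_left _ _)
  -- comparison with geometric series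
  have hgeo : Summable fun pq : ℕ × ℕ => C * ((1 / 2 : ℝ) ^ pq.1 * (1 / 2 : ℝ) ^ pq.2) := by
    apply Summable.mul_left
    exact (summable_geometric_of_lt_one (by norm_num) (by norm_num)).mul_of_nonneg
      (summable_geometric_of_lt_one (by norm_num) (by norm_num))
      (fun n => by positivity) (fun n => by positivity)
  apply Summable.of_nonneg_of_le _ _ hgeo
  · intro pq
    exact mul_nonneg (norm_nonneg _) (Real.iSup_nonneg fun _ => norm_nonneg _)
  · rintro ⟨p, q⟩
    have h1 : ‖a p q‖ * (⨆ uv : K, ‖gpq p q (uv : ℂ × ℂ)‖) ≤ ‖a p q‖ * B ^ (p + q) :=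
      mul_le_mul_of_nonneg_left (hsup p q) (norm_nonneg _)
    have h2 : ‖a p q‖ * B ^ (p + q) = (‖a p q‖ * R ^ (p + q)) * (1 / 2 : ℝ) ^ (p + q) := by
      rw [mul_assoc, ← mul_pow]
      congr 2
      rw [hR]; ring
    have h3 : (‖a p q‖ * R ^ (p + q)) * (1 / 2 : ℝ) ^ (p + q) ≤ C * (1 / 2 : ℝ) ^ (p + q) :=
      mul_le_mul_of_nonneg_right (hterm p q) (by positivity)
    calc ‖a p q‖ * (⨆ uv : K, ‖gpq p q (uv : ℂ × ℂ)‖)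
        ≤ ‖a p q‖ * B ^ (p + q) := h1
      _ = (‖a p q‖ * R ^ (p + q)) * (1 / 2 : ℝ) ^ (p + q) := h2
      _ ≤ C * (1 / 2 : ℝ) ^ (p + q) := h3
      _ = C * ((1 / 2 : ℝ) ^ p * (1 / 2 : ℝ) ^ q) := by rw [pow_add]
end

section
/- Let f : Ω₀ → ℂ be holomorphic on Ω₀ = {(z,w) ∈ ℂ × ℂ : z·w ≠ 1} and let (a_{p,q})_{p,q∈ℕ} be complex numbers such that f(z,w) = Σ_{p,q} a_{p,q} f_{p,q}(z,w) with Σ_{p,q} |a_{p,q}|·sup_K |f_{p,q}| < ∞ for every compact K ⊆ Ω₀. Then for every r ∈ (0,1) and all p,q ∈ ℕ: if p ≥ q then a_{p,q} = (2πi)^{−2} ∮_{|w|=r} ∮_{|z|=r} f(z/(1+zw), w) · z^{−p−1} w^{−q−1} dz dw, while if p < q then a_{p,q} = (2πi)^{−2} ∮_{|w|=r} ∮_{|z|=r} f(z, w/(1+zw)) · z^{−p−1} w^{−q−1} dz dw. (For |z|, |w| ≤ r < 1 one has 1+zw ≠ 0 and the arguments of f lie in Ω₀, so the integrands are well defined.)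 -/
open Complex

open Metric MeasureTheory


private lemma hasSum_circleIntegral_aux {ι : Type*} [Countable ι] {F : ι → ℂ → ℂ} {g : ℂ → ℂ}
    {r : ℝ} (hr : 0 < r) (hFc : ∀ i, ContinuousOn (F i) (sphere (0:ℂ) r))
    {M : ι → ℝ} (hM : ∀ i, ∀ z ∈ sphere (0:ℂ) r, ‖F i z‖ ≤ M i) (hMs : Summable M)
    (hg : ∀ z ∈ sphere (0:ℂ) r, HasSum (fun i => F i z) (g z)) :
    HasSum (fun i => circleIntegral (F i) 0 r) (circleIntegral g 0 r) := by
  have hmem : ∀ θ : ℝ, circleMap 0 r θ ∈ sphere (0:ℂ) r := circleMap_mem_sphere 0 hr.le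
  set F' : ι → ℝ → ℂ := fun i θ => (circleMap 0 r θ * Complex.I) • F i (circleMap 0 r θ) with hF'
  have hcont : ∀ i, Continuous (F' i) := fun i =>
    ((continuous_circleMap 0 r).mul continuous_const).smul
      ((hFc i).comp_continuous (continuous_circleMap 0 r) hmem)
  have hint : ∀ i, IntegrableOn (F' i) (Set.Ioc 0 (2*Real.pi)) := fun i =>
    (hcont i).integrableOn_Ioc
  have hnorm : ∀ i θ, ‖F' i θ‖ ≤ r * M i := by
    intro i θ
    rw [hF']
    simp only [smul_eq_mul, norm_mul, norm_circleMap_zero, Complex.norm_I, mul_one,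
      abs_of_pos hr]
    exact mul_le_mul_of_nonneg_left (hM i _ (hmem θ)) hr.le
  have hsum' : Summable (fun i => ∫ θ in Set.Ioc 0 (2*Real.pi), ‖F' i θ‖) := by
    apply Summable.of_nonneg_of_le (fun i => integral_nonneg fun θ => norm_nonneg _)
      (fun i => ?_) (hMs.mul_left (2 * Real.pi * r))
    calc ∫ θ in Set.Ioc 0 (2*Real.pi), ‖F' i θ‖
        ≤ ∫ _ in Set.Ioc 0 (2*Real.pi), r * M i := by
          apply setIntegral_mono_on (hint i).norm
            (integrableOn_const measure_Ioc_lt_top.ne) measurableSet_Ioc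
          exact fun θ _ => hnorm i θ
      _ = 2 * Real.pi * r * M i := by
          rw [setIntegral_const, Real.volume_real_Ioc, sub_zero, max_eq_left
            Real.two_pi_pos.le, smul_eq_mul]
          ring
  have key := hasSum_integral_of_summable_integral_norm
    (μ := volume.restrict (Set.Ioc 0 (2*Real.pi))) hint hsum'
  have h1 : ∀ h : ℂ → ℂ, circleIntegral h 0 r
      = ∫ θ in Set.Ioc 0 (2*Real.pi), (circleMap 0 r θ * Complex.I) • h (circleMap 0 r θ) := by
    intro h
    rw [circleIntegral, intervalIntegral.integral_of_le Real.two_pi_pos.le]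
    simp only [deriv_circleMap]
  have h2 : (fun θ => ∑' i, F' i θ)
      = fun θ => (circleMap 0 r θ * Complex.I) • g (circleMap 0 r θ) := by
    funext θ
    exact ((hg _ (hmem θ)).const_smul _).tsum_eq
  have h3 : (fun i => circleIntegral (F i) 0 r) = fun i => ∫ θ in Set.Ioc 0 (2*Real.pi), F' i θ :=
    funext fun i => h1 (F i)
  rw [h3, h1 g, ← h2]
  exact key


private lemma circleIntegral_zpow {r : ℝ} (hr : 0 < r) (n : ℤ) :
    (∮ z in C(0, r), z ^ n) = if n = -1 then 2 * Real.pi * Complex.I else 0 := by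
  split_ifs with h
  · subst h
    have := circleIntegral.integral_sub_inv_of_mem_ball (c := (0:ℂ)) (w := 0) (R := r)
      (Metric.mem_ball_self hr)
    simpa [zpow_neg_one] using this
  · simpa using circleIntegral.integral_sub_zpow_of_ne h 0 0 r

private lemma circleIntegral_finset_sum {ι : Type*} (s : Finset ι) (F : ι → ℂ → ℂ) {r : ℝ}
    (hr : 0 < r) (h : ∀ i ∈ s, ContinuousOn (F i) (sphere (0:ℂ) r)) :
    (∮ z in C(0, r), ∑ i ∈ s, F i z) = ∑ i ∈ s, ∮ z in C(0, r), F i z := by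
  rw [circleIntegral]
  have h0 : (fun θ : ℝ => deriv (circleMap 0 r) θ • ∑ i ∈ s, F i (circleMap 0 r θ))
      = fun θ => ∑ i ∈ s, deriv (circleMap 0 r) θ • F i (circleMap 0 r θ) := by
    funext θ; exact Finset.smul_sum
  rw [h0, intervalIntegral.integral_finset_sum]
  · rfl
  · intro i hi
    apply Continuous.intervalIntegrable
    simp only [deriv_circleMap]
    exact ((continuous_circleMap 0 r).mul continuous_const).smul
      ((h i hi).comp_continuous (continuous_circleMap 0 r) (circleMap_mem_sphere 0 hr.le))

private noncomputable def Efun (a : ℕ → ℕ → ℂ) (m : ℕ × ℕ → ℕ) (p q : ℕ) (pq' : ℕ × ℕ)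
    (w : ℂ) : ℂ :=
  if pq'.1 ≤ p ∧ p - pq'.1 ≤ m pq' then
    a pq'.1 pq'.2 * ((m pq').choose (p - pq'.1)) * (2 * Real.pi * Complex.I) *
      w ^ ((pq'.2 : ℤ) + ((p - pq'.1 : ℕ) : ℤ) - ((q : ℤ) + 1))
  else 0

private lemma Efun_continuousOn (a : ℕ → ℕ → ℂ) (m : ℕ × ℕ → ℕ) (p q : ℕ) (pq' : ℕ × ℕ)
    {r : ℝ} (hr : 0 < r) : ContinuousOn (Efun a m p q pq') (sphere (0:ℂ) r) := by
  have hz0 : ∀ z ∈ sphere (0:ℂ) r, z ≠ 0 := by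
    intro z hz h0
    rw [mem_sphere_zero_iff_norm, h0, norm_zero] at hz
    exact hr.ne' hz.symm
  unfold Efun
  by_cases h : pq'.1 ≤ p ∧ p - pq'.1 ≤ m pq'
  · simp only [if_pos h]
    exact continuousOn_const.mul
      (fun w hw => (continuousAt_zpow₀ w _ (Or.inl (hz0 w hw))).continuousWithinAt)
  · simp only [if_neg h]
    exact continuousOn_const

private lemma Efun_integral (a : ℕ → ℕ → ℂ) (m : ℕ × ℕ → ℕ) (p q : ℕ) (pq' : ℕ × ℕ)
    {r : ℝ} (hr : 0 < r) :
    (∮ w in C(0, r), Efun a m p q pq' w)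
      = if pq'.1 ≤ p ∧ p - pq'.1 ≤ m pq' ∧ pq'.2 + (p - pq'.1) = q then
          (2 * Real.pi * Complex.I) ^ 2 * (a pq'.1 pq'.2 * ((m pq').choose (p - pq'.1)))
        else 0 := by
  unfold Efun
  by_cases h : pq'.1 ≤ p ∧ p - pq'.1 ≤ m pq'
  · simp only [if_pos h]
    simp only [mul_assoc, circleIntegral.integral_const_mul, circleIntegral_zpow hr]
    by_cases h2 : pq'.2 + (p - pq'.1) = q
    · rw [if_pos (by omega), if_pos ⟨h.1, h.2, h2⟩]
      ring
    · rw [if_neg (by omega), if_neg (by tauto)]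
      simp
  · simp only [if_neg h]
    rw [if_neg (by tauto)]
    simp [circleIntegral]

private lemma main_aux (a : ℕ → ℕ → ℂ) {r : ℝ} (hr0 : 0 < r) (p q : ℕ) (m : ℕ × ℕ → ℕ)
    (g : ℂ → ℂ → ℂ) (M : ℕ × ℕ → ℝ) (hMs : Summable M)
    (hbound : ∀ (pq' : ℕ × ℕ), ∀ z ∈ sphere (0:ℂ) r, ∀ w ∈ sphere (0:ℂ) r,
      ‖a pq'.1 pq'.2 * (z ^ pq'.1 * w ^ pq'.2 * (1 + z * w) ^ m pq') /
        (z ^ (p+1) * w ^ (q+1))‖ ≤ M pq')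
    (hg : ∀ z ∈ sphere (0:ℂ) r, ∀ w ∈ sphere (0:ℂ) r,
      HasSum (fun pq' : ℕ × ℕ => a pq'.1 pq'.2 *
        (z ^ pq'.1 * w ^ pq'.2 * (1 + z * w) ^ m pq') / (z ^ (p+1) * w ^ (q+1))) (g z w))
    (hm : ∀ pq' : ℕ × ℕ, pq'.1 ≤ p → p - pq'.1 ≤ m pq' → pq'.2 + (p - pq'.1) = q →
      pq' = (p, q))
    (hmpq : m (p, q) = 0) :
    a p q = ((2 * Real.pi * Complex.I) ^ 2)⁻¹ *
      circleIntegral (fun w => circleIntegral (fun z => g z w) 0 r) 0 r := by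
  have hz0 : ∀ z ∈ sphere (0:ℂ) r, z ≠ 0 := by
    intro z hz h0
    rw [mem_sphere_zero_iff_norm, h0, norm_zero] at hz
    exact hr0.ne' hz.symm
  -- Step A : inner integral is Efun
  have inner_eq : ∀ (pq' : ℕ × ℕ), ∀ w ∈ sphere (0:ℂ) r,
      (∮ z in C(0, r), a pq'.1 pq'.2 * (z ^ pq'.1 * w ^ pq'.2 * (1 + z * w) ^ m pq') /
        (z ^ (p+1) * w ^ (q+1))) = Efun a m p q pq' w := by
    rintro ⟨p', q'⟩ w hw
    have hw0 : w ≠ 0 := hz0 w hw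
    set n := m (p', q') with hn
    have hexp : ∀ z ∈ sphere (0:ℂ) r,
        a p' q' * (z ^ p' * w ^ q' * (1 + z * w) ^ n) / (z ^ (p+1) * w ^ (q+1))
          = ∑ k ∈ Finset.range (n+1),
            (a p' q' * (n.choose k) * w ^ ((q' : ℤ) + (k : ℤ) - ((q : ℤ) + 1))) *
              z ^ ((p' : ℤ) + (k : ℤ) - ((p : ℤ) + 1)) := by
      intro z hz
      have hzz0 : z ≠ 0 := hz0 z hz
      have hbin : (1 + z * w) ^ n = ∑ k ∈ Finset.range (n+1), (z * w) ^ k * (n.choose k : ℂ) := by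
        rw [add_comm, add_pow]
        simp
      rw [hbin, Finset.mul_sum, Finset.mul_sum, Finset.sum_div]
      refine Finset.sum_congr rfl fun k _ => ?_
      have hzz : z ^ ((p' : ℤ) + (k : ℤ) - ((p : ℤ) + 1)) = z ^ (p' + k) / z ^ (p+1) := by
        rw [zpow_sub₀ hzz0]
        norm_cast
      have hww : w ^ ((q' : ℤ) + (k : ℤ) - ((q : ℤ) + 1)) = w ^ (q' + k) / w ^ (q+1) := by
        rw [zpow_sub₀ hw0]
        norm_cast
      rw [hzz, hww]
      field_simp
      ring
    rw [circleIntegral.integral_congr hr0.le (fun z hz => hexp z hz)]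
    rw [circleIntegral_finset_sum _ (fun k z => (a p' q' * (n.choose k) * w ^ ((q' : ℤ) + (k : ℤ) - ((q : ℤ) + 1))) *
        z ^ ((p' : ℤ) + (k : ℤ) - ((p : ℤ) + 1))) hr0 (fun k _ => continuousOn_const.mul
      (fun z hz => (continuousAt_zpow₀ z _ (Or.inl (hz0 z hz))).continuousWithinAt))]
    simp only [circleIntegral.integral_const_mul, circleIntegral_zpow hr0]
    unfold Efun
    by_cases hp' : p' ≤ p
    · have hc : ∀ k ∈ Finset.range (n+1),
          (a p' q' * (n.choose k) * w ^ ((q' : ℤ) + (k : ℤ) - ((q : ℤ) + 1))) *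
            (if (p' : ℤ) + (k : ℤ) - ((p : ℤ) + 1) = -1 then 2 * Real.pi * Complex.I else 0)
          = if k = p - p' then
              (a p' q' * (n.choose k) * w ^ ((q' : ℤ) + (k : ℤ) - ((q : ℤ) + 1))) *
                (2 * Real.pi * Complex.I) else 0 := by
        intro k _
        by_cases hk : k = p - p'
        · rw [if_pos (by omega), if_pos hk]
        · rw [if_neg (by omega), if_neg hk, mul_zero]
      rw [Finset.sum_congr rfl hc, Finset.sum_ite_eq' (Finset.range (n+1)) (p - p')]
      by_cases hle : p - p' ≤ n
      · rw [if_pos (Finset.mem_range.mpr (by omega)), if_pos ⟨hp', hle⟩]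
        push_cast
        ring
      · rw [if_neg (by simp [Finset.mem_range]; omega), if_neg (by tauto)]
    · rw [Finset.sum_eq_zero, if_neg (by tauto)]
      intro k _
      rw [if_neg (by omega), mul_zero]
  -- step B : bound for Efun
  have hM0 : ∀ pq' : ℕ × ℕ, 0 ≤ M pq' := by
    intro pq'
    have hr' : (r : ℂ) ∈ sphere (0:ℂ) r := by
      simp [mem_sphere_zero_iff_norm, abs_of_pos hr0]
    exact (norm_nonneg _).trans (hbound pq' _ hr' _ hr')
  have hEbound : ∀ pq' : ℕ × ℕ, ∀ w ∈ sphere (0:ℂ) r,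
      ‖Efun a m p q pq' w‖ ≤ 2 * Real.pi * r * M pq' := by
    intro pq' w hw
    rw [← inner_eq pq' w hw]
    exact circleIntegral.norm_integral_le_of_norm_le_const hr0.le
      (fun z hz => hbound pq' z hz w hw)
  -- step C : inner HasSum
  have hStep1 : ∀ w ∈ sphere (0:ℂ) r,
      HasSum (fun pq' : ℕ × ℕ => Efun a m p q pq' w) (circleIntegral (fun z => g z w) 0 r) := by
    intro w hw
    have hw0 : w ≠ 0 := hz0 w hw
    have hcont : ∀ pq' : ℕ × ℕ, ContinuousOn (fun z => a pq'.1 pq'.2 *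
        (z ^ pq'.1 * w ^ pq'.2 * (1 + z * w) ^ m pq') / (z ^ (p+1) * w ^ (q+1)))
        (sphere (0:ℂ) r) := by
      intro pq'
      apply ContinuousOn.div (by fun_prop) (by fun_prop)
      intro z hz
      exact mul_ne_zero (pow_ne_zero _ (hz0 z hz)) (pow_ne_zero _ hw0)
    have := hasSum_circleIntegral_aux hr0 hcont
      (fun pq' z hz => hbound pq' z hz w hw) hMs (fun z hz => hg z hz w hw)
    rwa [show (fun pq' : ℕ × ℕ => circleIntegral (fun z => a pq'.1 pq'.2 *
        (z ^ pq'.1 * w ^ pq'.2 * (1 + z * w) ^ m pq') / (z ^ (p+1) * w ^ (q+1))) 0 r)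
      = fun pq' => Efun a m p q pq' w from funext fun pq' => inner_eq pq' w hw] at this
  -- step D : outer HasSum
  have hStep2 := hasSum_circleIntegral_aux hr0 (fun pq' => Efun_continuousOn a m p q pq' hr0)
    hEbound (hMs.mul_left (2 * Real.pi * r)) hStep1
  -- step E : identify terms
  have hfun : (fun pq' : ℕ × ℕ => ∮ w in C(0, r), Efun a m p q pq' w)
      = fun pq' => if pq' = (p, q) then (2 * Real.pi * Complex.I) ^ 2 * a p q else 0 := by
    funext pq'
    rw [Efun_integral a m p q pq' hr0]
    by_cases h : pq'.1 ≤ p ∧ p - pq'.1 ≤ m pq' ∧ pq'.2 + (p - pq'.1) = q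
    · have hpq : pq' = (p, q) := hm pq' h.1 h.2.1 h.2.2
      subst hpq
      rw [if_pos rfl]
      simp [hmpq]
    · rw [if_neg h, if_neg ?_]
      intro hpq
      subst hpq
      exact h ⟨le_refl p, by simp [hmpq], by simp⟩
  rw [hfun] at hStep2
  have h1 : HasSum (fun pq' : ℕ × ℕ =>
      if pq' = (p, q) then (2 * Real.pi * Complex.I) ^ 2 * a p q else 0)
      ((2 * Real.pi * Complex.I) ^ 2 * a p q) := hasSum_ite_eq (p, q) _
  have heq := h1.unique hStep2
  have hne : ((2 * Real.pi * Complex.I) ^ 2 : ℂ) ≠ 0 := by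
    apply pow_ne_zero
    refine mul_ne_zero (mul_ne_zero two_ne_zero ?_) Complex.I_ne_zero
    exact_mod_cast Real.pi_ne_zero
  rw [← heq, inv_mul_cancel_left₀ hne]

/-- the Schauder coefficient formula. If f = Σ a_{p,q} f_{p,q} with
locally absolutely convergent sum, then for every r ∈ (0,1) the coefficients are given
by the stated double contour integrals over |z| = |w| = r. -/
theorem schauder_coefficient_formula
    (f : ℂ × ℂ → ℂ) (hf : DifferentiableOn ℂ f Omega0)
    (a : ℕ → ℕ → ℂ)
    (hsum : ∀ zw ∈ Omega0,
      HasSum (fun pq : ℕ × ℕ => a pq.1 pq.2 * fpq pq.1 pq.2 zw) (f zw))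
    (habs : ∀ K : Set (ℂ × ℂ), IsCompact K → K ⊆ Omega0 →
      Summable (fun pq : ℕ × ℕ =>
        ‖a pq.1 pq.2‖ * ⨆ zw : K, ‖fpq pq.1 pq.2 (zw : ℂ × ℂ)‖))
    (r : ℝ) (hr0 : 0 < r) (hr1 : r < 1) (p q : ℕ) :
    (q ≤ p →
      a p q = ((2 * Real.pi * Complex.I) ^ 2)⁻¹ *
        circleIntegral (fun w =>
          circleIntegral (fun z =>
            f (z / (1 + z * w), w) / (z ^ (p + 1) * w ^ (q + 1))) 0 r) 0 r) ∧
    (p < q →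
      a p q = ((2 * Real.pi * Complex.I) ^ 2)⁻¹ *
        circleIntegral (fun w =>
          circleIntegral (fun z =>
            f (z, w / (1 + z * w)) / (z ^ (p + 1) * w ^ (q + 1))) 0 r) 0 r) := by
  have h1 : ∀ z ∈ sphere (0:ℂ) r, ∀ w ∈ sphere (0:ℂ) r, 1 + z * w ≠ 0 := by
    intro z hz w hw h
    have hzw : ‖z * w‖ = r * r := by
      rw [norm_mul, mem_sphere_zero_iff_norm.mp hz, mem_sphere_zero_iff_norm.mp hw]
    have h2 : z * w = -1 := by linear_combination h
    rw [h2] at hzw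
    simp only [norm_neg, norm_one] at hzw
    nlinarith
  have hfc : ∀ p' q' : ℕ, ContinuousOn (fpq p' q') Omega0 := by
    intro p' q'
    unfold fpq
    apply ContinuousOn.div (by fun_prop) (by fun_prop)
    intro zw hzw
    exact pow_ne_zero _ (sub_ne_zero.mpr (Ne.symm hzw))
  constructor
  · -- case q ≤ p
    intro hqp
    have hΩ : ∀ z ∈ sphere (0:ℂ) r, ∀ w ∈ sphere (0:ℂ) r,
        ((z / (1 + z * w), w) : ℂ × ℂ) ∈ Omega0 := by
      intro z hz w hw
      simp only [Omega0, Set.mem_setOf_eq]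
      intro hcon
      rw [div_mul_eq_mul_div, div_eq_iff (h1 z hz w hw), one_mul] at hcon
      exact one_ne_zero (right_eq_add.mp hcon)
    set ψ : ℂ × ℂ → ℂ × ℂ := fun zw => (zw.1 / (1 + zw.1 * zw.2), zw.2) with hψ
    have hψc : ContinuousOn ψ (sphere (0:ℂ) r ×ˢ sphere (0:ℂ) r) := by
      apply ContinuousOn.prodMk
      · apply ContinuousOn.div (by fun_prop) (by fun_prop)
        intro zw hzw
        exact h1 _ hzw.1 _ hzw.2
      · fun_prop
    set K : Set (ℂ × ℂ) := ψ '' (sphere (0:ℂ) r ×ˢ sphere (0:ℂ) r) with hK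
    have hKc : IsCompact K :=
      ((isCompact_sphere 0 r).prod (isCompact_sphere 0 r)).image_of_continuousOn hψc
    have hKΩ : K ⊆ Omega0 := by
      rintro x ⟨zw, hzw, rfl⟩
      exact hΩ _ hzw.1 _ hzw.2
    have hS := habs K hKc hKΩ
    have hSle : ∀ (pq' : ℕ × ℕ), ∀ x ∈ K,
        ‖fpq pq'.1 pq'.2 x‖ ≤ ⨆ zw : K, ‖fpq pq'.1 pq'.2 (zw : ℂ × ℂ)‖ := by
      intro pq' x hx
      obtain ⟨C, hC⟩ := hKc.exists_bound_of_continuousOn ((hfc pq'.1 pq'.2).mono hKΩ)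
      have hbdd : BddAbove (Set.range fun zw : K => ‖fpq pq'.1 pq'.2 (zw : ℂ × ℂ)‖) := by
        refine ⟨C, ?_⟩
        rintro y ⟨zw, rfl⟩
        exact hC zw zw.2
      exact le_ciSup hbdd ⟨x, hx⟩
    have heq1 : ∀ z ∈ sphere (0:ℂ) r, ∀ w ∈ sphere (0:ℂ) r, ∀ p' q' : ℕ,
        fpq p' q' (z / (1 + z * w), w) = z ^ p' * w ^ q' * (1 + z * w) ^ (max p' q' - p') := by
      intro z hz w hw p' q'
      have hzw := h1 z hz w hw
      have h2 : 1 - z / (1 + z * w) * w = (1 + z * w)⁻¹ := by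
        field_simp
        ring
      unfold fpq
      dsimp only
      rw [h2, inv_pow, div_pow]
      have h3 : (1 + z * w) ^ (max p' q') = (1 + z * w) ^ (max p' q' - p') * (1 + z * w) ^ p' := by
        rw [← pow_add]
        congr 1
        omega
      rw [h3]
      field_simp
    refine main_aux a hr0 p q (fun pq' => max pq'.1 pq'.2 - pq'.1)
      (fun z w => f (z / (1 + z * w), w) / (z ^ (p + 1) * w ^ (q + 1)))
      (fun pq' => ‖a pq'.1 pq'.2‖ * (⨆ zw : K, ‖fpq pq'.1 pq'.2 (zw : ℂ × ℂ)‖) /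
        (r ^ (p + 1) * r ^ (q + 1)))
      (hS.div_const _) ?_ ?_ ?_ ?_
    · intro pq' z hz w hw
      rw [← heq1 z hz w hw pq'.1 pq'.2]
      rw [norm_div, norm_mul, norm_mul, norm_pow, norm_pow,
        mem_sphere_zero_iff_norm.mp hz, mem_sphere_zero_iff_norm.mp hw]
      rw [div_eq_mul_inv, div_eq_mul_inv]
      apply mul_le_mul_of_nonneg_right _ (by positivity)
      apply mul_le_mul_of_nonneg_left _ (norm_nonneg _)
      exact hSle pq' _ (Set.mem_image_of_mem ψ (Set.mk_mem_prod hz hw))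
    · intro z hz w hw
      have h := (hsum _ (hΩ z hz w hw)).div_const (z ^ (p + 1) * w ^ (q + 1))
      have hfe : (fun pq' : ℕ × ℕ => a pq'.1 pq'.2 * fpq pq'.1 pq'.2 (z / (1 + z * w), w) /
            (z ^ (p + 1) * w ^ (q + 1)))
          = fun pq' => a pq'.1 pq'.2 *
            (z ^ pq'.1 * w ^ pq'.2 * (1 + z * w) ^ (max pq'.1 pq'.2 - pq'.1)) /
            (z ^ (p + 1) * w ^ (q + 1)) :=
        funext fun pq' => by rw [heq1 z hz w hw]
      rwa [hfe] at h
    · rintro ⟨p', q'⟩ h1' h2' h3'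
      simp only at h1' h2' h3' ⊢
      have hmx := max_choice p' q'
      have hpq' : p' = p ∧ q' = q := by
        rcases hmx with h|h <;> rw [h] at h2' <;> omega
      rw [Prod.mk.injEq]
      exact hpq'
    · show max p q - p = 0
      rw [max_eq_left hqp, Nat.sub_self]
  · -- case p < q
    intro hpq
    have hΩ : ∀ z ∈ sphere (0:ℂ) r, ∀ w ∈ sphere (0:ℂ) r,
        ((z, w / (1 + z * w)) : ℂ × ℂ) ∈ Omega0 := by
      intro z hz w hw
      simp only [Omega0, Set.mem_setOf_eq]
      intro hcon
      rw [mul_div_assoc', div_eq_iff (h1 z hz w hw), one_mul] at hcon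
      exact one_ne_zero (right_eq_add.mp hcon)
    set ψ : ℂ × ℂ → ℂ × ℂ := fun zw => (zw.1, zw.2 / (1 + zw.1 * zw.2)) with hψ
    have hψc : ContinuousOn ψ (sphere (0:ℂ) r ×ˢ sphere (0:ℂ) r) := by
      apply ContinuousOn.prodMk
      · fun_prop
      · apply ContinuousOn.div (by fun_prop) (by fun_prop)
        intro zw hzw
        exact h1 _ hzw.1 _ hzw.2
    set K : Set (ℂ × ℂ) := ψ '' (sphere (0:ℂ) r ×ˢ sphere (0:ℂ) r) with hK
    have hKc : IsCompact K :=
      ((isCompact_sphere 0 r).prod (isCompact_sphere 0 r)).image_of_continuousOn hψc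
    have hKΩ : K ⊆ Omega0 := by
      rintro x ⟨zw, hzw, rfl⟩
      exact hΩ _ hzw.1 _ hzw.2
    have hS := habs K hKc hKΩ
    have hSle : ∀ (pq' : ℕ × ℕ), ∀ x ∈ K,
        ‖fpq pq'.1 pq'.2 x‖ ≤ ⨆ zw : K, ‖fpq pq'.1 pq'.2 (zw : ℂ × ℂ)‖ := by
      intro pq' x hx
      obtain ⟨C, hC⟩ := hKc.exists_bound_of_continuousOn ((hfc pq'.1 pq'.2).mono hKΩ)
      have hbdd : BddAbove (Set.range fun zw : K => ‖fpq pq'.1 pq'.2 (zw : ℂ × ℂ)‖) := by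
        refine ⟨C, ?_⟩
        rintro y ⟨zw, rfl⟩
        exact hC zw zw.2
      exact le_ciSup hbdd ⟨x, hx⟩
    have heq1 : ∀ z ∈ sphere (0:ℂ) r, ∀ w ∈ sphere (0:ℂ) r, ∀ p' q' : ℕ,
        fpq p' q' (z, w / (1 + z * w)) = z ^ p' * w ^ q' * (1 + z * w) ^ (max p' q' - q') := by
      intro z hz w hw p' q'
      have hzw := h1 z hz w hw
      have h2 : 1 - z * (w / (1 + z * w)) = (1 + z * w)⁻¹ := by
        field_simp
        ring
      unfold fpq
      dsimp only
      rw [h2, inv_pow, div_pow]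
      have h3 : (1 + z * w) ^ (max p' q') = (1 + z * w) ^ (max p' q' - q') * (1 + z * w) ^ q' := by
        rw [← pow_add]
        congr 1
        omega
      rw [h3]
      field_simp
    refine main_aux a hr0 p q (fun pq' => max pq'.1 pq'.2 - pq'.2)
      (fun z w => f (z, w / (1 + z * w)) / (z ^ (p + 1) * w ^ (q + 1)))
      (fun pq' => ‖a pq'.1 pq'.2‖ * (⨆ zw : K, ‖fpq pq'.1 pq'.2 (zw : ℂ × ℂ)‖) /
        (r ^ (p + 1) * r ^ (q + 1)))
      (hS.div_const _) ?_ ?_ ?_ ?_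
    · intro pq' z hz w hw
      rw [← heq1 z hz w hw pq'.1 pq'.2]
      rw [norm_div, norm_mul, norm_mul, norm_pow, norm_pow,
        mem_sphere_zero_iff_norm.mp hz, mem_sphere_zero_iff_norm.mp hw]
      rw [div_eq_mul_inv, div_eq_mul_inv]
      apply mul_le_mul_of_nonneg_right _ (by positivity)
      apply mul_le_mul_of_nonneg_left _ (norm_nonneg _)
      exact hSle pq' _ (Set.mem_image_of_mem ψ (Set.mk_mem_prod hz hw))
    · intro z hz w hw
      have h := (hsum _ (hΩ z hz w hw)).div_const (z ^ (p + 1) * w ^ (q + 1))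
      have hfe : (fun pq' : ℕ × ℕ => a pq'.1 pq'.2 * fpq pq'.1 pq'.2 (z, w / (1 + z * w)) /
            (z ^ (p + 1) * w ^ (q + 1)))
          = fun pq' => a pq'.1 pq'.2 *
            (z ^ pq'.1 * w ^ pq'.2 * (1 + z * w) ^ (max pq'.1 pq'.2 - pq'.2)) /
            (z ^ (p + 1) * w ^ (q + 1)) :=
        funext fun pq' => by rw [heq1 z hz w hw]
      rwa [hfe] at h
    · rintro ⟨p', q'⟩ h1' h2' h3'
      simp only at h1' h2' h3' ⊢
      have hmx := max_choice p' q'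
      have hpq' : p' = p ∧ q' = q := by
        rcases hmx with h|h <;> rw [h] at h2' <;> omega
      rw [Prod.mk.injEq]
      exact hpq'
    · show max p q - q = 0
      rw [max_eq_right hpq.le, Nat.sub_self]
end

section
/- Let D₁, D₂ ⊆ ℂ be nonempty open sets, and let H₁ : D₁ → ℂ and H₂ : D₂ → ℂ be holomorphic functions satisfying (H₁(z) − H₂(w))² = (z − w)² · H₁′(z) · H₂′(w) for all (z,w) ∈ D₁ × D₂. Then either H₁ and H₂ are both constant with the same constant value, or there exist a,b,c,d ∈ ℂ with ad − bc ≠ 0 such that cz + d ≠ 0 and H₁(z) = (az+b)/(cz+d) for all z ∈ D₁, and cw + d ≠ 0 and H₂(w) = (aw+b)/(cw+d) for all w ∈ D₂. -/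
open Complex


lemma poly3 {c₂ c₁ c₀ t₁ t₂ t₃ : ℂ} (h12 : t₁ ≠ t₂) (h13 : t₁ ≠ t₃) (h23 : t₂ ≠ t₃)
    (e1 : c₂*t₁^2 + c₁*t₁ + c₀ = 0) (e2 : c₂*t₂^2 + c₁*t₂ + c₀ = 0)
    (e3 : c₂*t₃^2 + c₁*t₃ + c₀ = 0) : c₂ = 0 ∧ c₁ = 0 ∧ c₀ = 0 := by
  have d12 : t₁ - t₂ ≠ 0 := sub_ne_zero.mpr h12
  have d13 : t₁ - t₃ ≠ 0 := sub_ne_zero.mpr h13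
  have d23 : t₂ - t₃ ≠ 0 := sub_ne_zero.mpr h23
  have k12 : c₂*(t₁+t₂) + c₁ = 0 := by
    have h : (t₁ - t₂) * (c₂*(t₁+t₂) + c₁) = 0 := by linear_combination e1 - e2
    rcases mul_eq_zero.mp h with h | h
    · exact absurd h d12
    · exact h
  have k13 : c₂*(t₁+t₃) + c₁ = 0 := by
    have h : (t₁ - t₃) * (c₂*(t₁+t₃) + c₁) = 0 := by linear_combination e1 - e3
    rcases mul_eq_zero.mp h with h | h
    · exact absurd h d13
    · exact h
  have hc2 : c₂ = 0 := by
    have h : (t₂ - t₃) * c₂ = 0 := by linear_combination k12 - k13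
    rcases mul_eq_zero.mp h with h | h
    · exact absurd h d23
    · exact h
  have hc1 : c₁ = 0 := by linear_combination k12 - (t₁+t₂) * hc2
  have hc0 : c₀ = 0 := by linear_combination e1 - t₁^2 * hc2 - t₁ * hc1
  exact ⟨hc2, hc1, hc0⟩

lemma keyalg {α β γ δ X x z t₁ t₂ t₃ : ℂ} (he : α*δ - β*γ ≠ 0)
    (h12 : t₁ ≠ t₂) (h13 : t₁ ≠ t₃) (h23 : t₂ ≠ t₃)
    (e1 : (X*(γ*t₁+δ) - (α*t₁+β))^2 = x*(α*δ-β*γ)*(z-t₁)^2)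
    (e2 : (X*(γ*t₂+δ) - (α*t₂+β))^2 = x*(α*δ-β*γ)*(z-t₂)^2)
    (e3 : (X*(γ*t₃+δ) - (α*t₃+β))^2 = x*(α*δ-β*γ)*(z-t₃)^2) :
    γ*z + δ ≠ 0 ∧ X*(γ*z+δ) = α*z+β ∧ x*(γ*z+δ)^2 = α*δ - β*γ := by
  have q1 : ((X*γ-α)^2 - x*(α*δ-β*γ))*t₁^2 + (2*((X*γ-α)*(X*δ-β) + x*(α*δ-β*γ)*z))*t₁
      + ((X*δ-β)^2 - x*(α*δ-β*γ)*z^2) = 0 := by linear_combination e1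
  have q2 : ((X*γ-α)^2 - x*(α*δ-β*γ))*t₂^2 + (2*((X*γ-α)*(X*δ-β) + x*(α*δ-β*γ)*z))*t₂
      + ((X*δ-β)^2 - x*(α*δ-β*γ)*z^2) = 0 := by linear_combination e2
  have q3 : ((X*γ-α)^2 - x*(α*δ-β*γ))*t₃^2 + (2*((X*γ-α)*(X*δ-β) + x*(α*δ-β*γ)*z))*t₃
      + ((X*δ-β)^2 - x*(α*δ-β*γ)*z^2) = 0 := by linear_combination e3
  obtain ⟨hc2, hc1, hc0⟩ := poly3 h12 h13 h23 q1 q2 q3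
  have hQzR : ((X*γ-α)*z + (X*δ-β))^2 = 0 := by
    linear_combination z^2 * hc2 + z * hc1 + hc0
  have hQzR0 : (X*γ-α)*z + (X*δ-β) = 0 := by
    exact pow_eq_zero_iff (two_ne_zero) |>.mp hQzR
  have hQd : (X*γ-α)*(γ*z+δ) = -(α*δ-β*γ) := by linear_combination γ * hQzR0
  have hdz : γ*z + δ ≠ 0 := by
    intro h
    rw [h, mul_zero] at hQd
    exact he (by linear_combination hQd)
  have hX : X*(γ*z+δ) = α*z+β := by linear_combination hQzR0
  have hcan : (α*δ-β*γ) * (x*(γ*z+δ)^2) = (α*δ-β*γ) * (α*δ-β*γ) := by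
    linear_combination ((X*γ-α)*(γ*z+δ) - (α*δ-β*γ)) * hQd - (γ*z+δ)^2 * hc2
  exact ⟨hdz, hX, mul_left_cancel₀ he hcan⟩

lemma three_points {s : Set ℂ} (hs : IsOpen s) (hne : s.Nonempty) :
    ∃ t₁ t₂ t₃ : ℂ, t₁ ∈ s ∧ t₂ ∈ s ∧ t₃ ∈ s ∧ t₁ ≠ t₂ ∧ t₁ ≠ t₃ ∧ t₂ ≠ t₃ := by
  obtain ⟨x, hx⟩ := hne
  obtain ⟨r, hr, hball⟩ := Metric.isOpen_iff.mp hs x hx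
  have hrC : (r:ℂ) ≠ 0 := Complex.ofReal_ne_zero.mpr hr.ne'
  have hm : ∀ c : ℂ, ‖c‖ < r → x + c ∈ s := by
    intro c hc
    apply hball
    simp [Metric.mem_ball, Complex.dist_eq, hc]
  have habs : ‖(r:ℂ)/2‖ < r := by
    rw [norm_div, Complex.norm_real, Complex.norm_two, Real.norm_of_nonneg hr.le]
    linarith
  have habs' : ‖-((r:ℂ)/2)‖ < r := by rwa [norm_neg]
  refine ⟨x, x + (r:ℂ)/2, x + -((r:ℂ)/2), hx, hm _ habs, hm _ habs', ?_, ?_, ?_⟩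
  · intro h
    apply hrC
    have : (r:ℂ)/2 = 0 := by linear_combination -h
    linear_combination 2 * this
  · intro h
    apply hrC
    have : -((r:ℂ)/2) = 0 := by linear_combination -h
    linear_combination -2 * this
  · intro h
    apply hrC
    have : (r:ℂ)/2 = -((r:ℂ)/2) := by
      have := add_left_cancel h
      exact this
    linear_combination this

/-- solutions of (H₁(z) − H₂(w))² = (z − w)² H₁′(z) H₂′(w) on D₁ × D₂ are
either both the same constant, or both restrictions of one Möbius transformation. -/
theorem hawley_schiffer_functional_equation
    (D₁ D₂ : Set ℂ) (hD₁ : IsOpen D₁) (hD₂ : IsOpen D₂)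
    (hD₁ne : D₁.Nonempty) (hD₂ne : D₂.Nonempty)
    (H₁ H₂ : ℂ → ℂ)
    (hH₁ : DifferentiableOn ℂ H₁ D₁) (hH₂ : DifferentiableOn ℂ H₂ D₂)
    (heq : ∀ z ∈ D₁, ∀ w ∈ D₂,
      (H₁ z - H₂ w) ^ 2 = (z - w) ^ 2 * deriv H₁ z * deriv H₂ w) :
    (∃ c : ℂ, (∀ z ∈ D₁, H₁ z = c) ∧ (∀ w ∈ D₂, H₂ w = c)) ∨
    (∃ a b c d : ℂ, a * d - b * c ≠ 0 ∧
      (∀ z ∈ D₁, c * z + d ≠ 0 ∧ H₁ z = (a * z + b) / (c * z + d)) ∧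
      (∀ w ∈ D₂, c * w + d ≠ 0 ∧ H₂ w = (a * w + b) / (c * w + d))) := by
  by_cases hdeg : (∀ z ∈ D₁, deriv H₁ z = 0) ∨ (∀ w ∈ D₂, deriv H₂ w = 0)
  · left
    obtain ⟨zz, hzz⟩ := hD₁ne
    obtain ⟨ww, hww⟩ := hD₂ne
    have key : ∀ z ∈ D₁, ∀ w ∈ D₂, H₁ z = H₂ w := by
      intro z hz w hw
      have h := heq z hz w hw
      have h0 : (H₁ z - H₂ w)^2 = 0 := by
        rcases hdeg with h1 | h2
        · rw [h, h1 z hz]; ring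
        · rw [h, h2 w hw]; ring
      have := pow_eq_zero_iff (two_ne_zero) |>.mp h0
      exact sub_eq_zero.mp this
    refine ⟨H₂ ww, fun z hz => key z hz ww hww, fun w hw => ?_⟩
    exact (key zz hzz w hw).symm.trans (key zz hzz ww hww)
  · right
    push_neg at hdeg
    obtain ⟨⟨z₀, hz₀, ha⟩, ⟨w₁, hw₁, hb⟩⟩ := hdeg
    -- basic analyticity facts
    have han : AnalyticOnNhd ℂ H₂ D₂ := hH₂.analyticOnNhd hD₂
    have hderivcont : ContinuousOn (deriv H₂) D₂ := han.deriv.continuousOn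
    have hH₂cont : ContinuousOn H₂ D₂ := hH₂.continuousOn
    -- the basic ODE relation
    have hstar : ∀ w ∈ D₂, (H₂ w - H₁ z₀)^2 = deriv H₁ z₀ * (w - z₀)^2 * deriv H₂ w := by
      intro w hw
      linear_combination heq z₀ hz₀ w hw
    -- choose w₀ ∈ D₂ with deriv H₂ w₀ ≠ 0 and w₀ ≠ z₀
    have hw₀ex : ∃ w₀, w₀ ∈ D₂ ∧ deriv H₂ w₀ ≠ 0 ∧ w₀ ≠ z₀ := by
      have hsopen : IsOpen (D₂ ∩ deriv H₂ ⁻¹' {(0:ℂ)}ᶜ) :=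
        hderivcont.isOpen_inter_preimage hD₂ isOpen_compl_singleton
      obtain ⟨t₁, t₂, t₃, ht₁, ht₂, ht₃, ht12, ht13, ht23⟩ :=
        three_points hsopen ⟨w₁, hw₁, hb⟩
      rcases eq_or_ne t₁ z₀ with h | h
      · exact ⟨t₂, ht₂.1, ht₂.2, by rw [← h]; exact ht12.symm⟩
      · exact ⟨t₁, ht₁.1, ht₁.2, h⟩
    obtain ⟨w₀, hw₀D, hw₀d, hw₀ne⟩ := hw₀ex
    have hA : H₂ w₀ ≠ H₁ z₀ := by
      intro h
      have h2 := hstar w₀ hw₀D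
      rw [h, sub_self] at h2
      have : deriv H₁ z₀ * (w₀ - z₀)^2 * deriv H₂ w₀ ≠ 0 :=
        mul_ne_zero (mul_ne_zero ha (pow_ne_zero 2 (sub_ne_zero.mpr hw₀ne))) hw₀d
      exact this (by linear_combination -h2)
    -- a ball around w₀ inside D₂ where H₂ ≠ H₁ z₀ and w ≠ z₀
    have htopen : IsOpen ((D₂ ∩ H₂ ⁻¹' {H₁ z₀}ᶜ) ∩ {z₀}ᶜ) :=
      (hH₂cont.isOpen_inter_preimage hD₂ isOpen_compl_singleton).inter isOpen_compl_singleton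
    have hw₀t : w₀ ∈ (D₂ ∩ H₂ ⁻¹' {H₁ z₀}ᶜ) ∩ {z₀}ᶜ := ⟨⟨hw₀D, hA⟩, hw₀ne⟩
    obtain ⟨ρ, hρ, hballt⟩ := Metric.isOpen_iff.mp htopen w₀ hw₀t
    set V := Metric.ball w₀ ρ with hV
    have hVD₂ : ∀ w ∈ V, w ∈ D₂ := fun w hw => (hballt hw).1.1
    have hVA : ∀ w ∈ V, H₂ w ≠ H₁ z₀ := fun w hw => (hballt hw).1.2
    have hVne : ∀ w ∈ V, w ≠ z₀ := fun w hw => (hballt hw).2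
    -- the function φ with zero derivative
    set φ : ℂ → ℂ := fun w => (H₂ w - H₁ z₀)⁻¹ - (deriv H₁ z₀ * (w - z₀))⁻¹ with hφ
    have hφd : ∀ w ∈ V, HasDerivAt φ 0 w := by
      intro w hw
      have hwD := hVD₂ w hw
      have hH2w : HasDerivAt H₂ (deriv H₂ w) w :=
        (hH₂.differentiableAt (hD₂.mem_nhds hwD)).hasDerivAt
      have hne1 : H₂ w - H₁ z₀ ≠ 0 := sub_ne_zero.mpr (hVA w hw)
      have hu : w - z₀ ≠ 0 := sub_ne_zero.mpr (hVne w hw)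
      have hne2 : deriv H₁ z₀ * (w - z₀) ≠ 0 := mul_ne_zero ha hu
      have hd2ne : deriv H₂ w ≠ 0 := by
        intro h0
        apply pow_ne_zero 2 hne1
        rw [hstar w hwD, h0]; ring
      have h1 : HasDerivAt (fun w => (H₂ w - H₁ z₀)⁻¹)
          (-(deriv H₂ w) / (H₂ w - H₁ z₀)^2) w := (hH2w.sub_const _).inv hne1
      have h2' : HasDerivAt (fun w => deriv H₁ z₀ * (w - z₀)) (deriv H₁ z₀ * 1) w :=
        ((hasDerivAt_id w).sub_const z₀).const_mul _
      have h2 : HasDerivAt (fun w => (deriv H₁ z₀ * (w - z₀))⁻¹)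
          (-(deriv H₁ z₀ * 1) / (deriv H₁ z₀ * (w - z₀))^2) w := h2'.inv hne2
      have h3 := h1.sub h2
      refine h3.congr_deriv ?_
      rw [hstar w hwD]
      field_simp
      ring
    -- φ is constant on V
    have hconst : ∀ w ∈ V, φ w = φ w₀ := by
      intro w hw
      have hconv : Convex ℝ V := convex_ball w₀ ρ
      have hφdiff : DifferentiableOn ℂ φ V := fun x hx =>
        (hφd x hx).differentiableAt.differentiableWithinAt
      refine hconv.is_const_of_fderivWithin_eq_zero hφdiff ?_ hw (Metric.mem_ball_self hρ)
      intro x hx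
      rw [fderivWithin_of_isOpen Metric.isOpen_ball hx, (hφd x hx).hasFDerivAt.fderiv]
      ext y
      simp
    set C : ℂ := φ w₀ with hCdef
    -- Möbius coefficients
    set mα : ℂ := H₁ z₀ * C * deriv H₁ z₀ + deriv H₁ z₀ with hmα
    set mβ : ℂ := H₁ z₀ * (1 - C * deriv H₁ z₀ * z₀) - deriv H₁ z₀ * z₀ with hmβ
    set mγ : ℂ := C * deriv H₁ z₀ with hmγ
    set mδ : ℂ := 1 - C * deriv H₁ z₀ * z₀ with hmδ
    have hdet : mα*mδ - mβ*mγ = deriv H₁ z₀ := by rw [hmα, hmβ, hmγ, hmδ]; ring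
    have he' : mα*mδ - mβ*mγ ≠ 0 := by rw [hdet]; exact ha
    have hid : ∀ w : ℂ, mα*w + mβ = H₁ z₀ * (mγ*w + mδ) + deriv H₁ z₀ * (w - z₀) := by
      intro w; rw [hmα, hmβ, hmγ, hmδ]; ring
    have hidd : ∀ w : ℂ, mγ*w + mδ = 1 + C*(deriv H₁ z₀*(w - z₀)) := by
      intro w; rw [hmγ, hmδ]; ring
    clear_value C mα mβ mγ mδ
    -- H₂ is the Möbius map on V
    have main₂V : ∀ w ∈ V, (mγ*w + mδ ≠ 0) ∧ H₂ w * (mγ*w + mδ) = mα*w + mβ := by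
      intro w hw
      have hne1 : H₂ w - H₁ z₀ ≠ 0 := sub_ne_zero.mpr (hVA w hw)
      have hu : w - z₀ ≠ 0 := sub_ne_zero.mpr (hVne w hw)
      have hne2 : deriv H₁ z₀ * (w - z₀) ≠ 0 := mul_ne_zero ha hu
      have h1 : (H₂ w - H₁ z₀)⁻¹ = C + (deriv H₁ z₀ * (w - z₀))⁻¹ := by
        have h := hconst w hw
        rw [hφ] at h
        simp only at h
        linear_combination h
      have hmul : (H₂ w - H₁ z₀)⁻¹ * (deriv H₁ z₀ * (w - z₀))
          = 1 + C*(deriv H₁ z₀*(w - z₀)) := by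
        rw [h1, add_mul, inv_mul_cancel₀ hne2]
        ring
      have hd : 1 + C*(deriv H₁ z₀*(w - z₀)) ≠ 0 := by
        rw [← hmul]
        exact mul_ne_zero (inv_ne_zero hne1) hne2
      have he1 : deriv H₁ z₀ * (w - z₀) = (H₂ w - H₁ z₀) * (1 + C*(deriv H₁ z₀*(w - z₀))) := by
        rw [← hmul, ← mul_assoc, mul_inv_cancel₀ hne1, one_mul]
      refine ⟨by rw [hidd w]; exact hd, ?_⟩
      rw [hid w, hidd w]
      linear_combination -he1
    -- three distinct points in V
    obtain ⟨p₁, p₂, p₃, hp₁, hp₂, hp₃, hp12, hp13, hp23⟩ :=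
      three_points (Metric.isOpen_ball : IsOpen V) ⟨w₀, Metric.mem_ball_self hρ⟩
    -- H₁ is the Möbius map on D₁, together with its derivative
    have main₁ : ∀ z ∈ D₁, mγ*z + mδ ≠ 0 ∧ H₁ z * (mγ*z+mδ) = mα*z+mβ ∧
        deriv H₁ z * (mγ*z+mδ)^2 = mα*mδ - mβ*mγ := by
      intro z hz
      have hkey : ∀ w ∈ V, (H₁ z * (mγ*w+mδ) - (mα*w+mβ))^2
          = deriv H₁ z * (mα*mδ - mβ*mγ) * (z - w)^2 := by
        intro w hw
        obtain ⟨hdw, hBw⟩ := main₂V w hw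
        have hE := heq z hz w (hVD₂ w hw)
        have hS := hstar w (hVD₂ w hw)
        have hu : w - z₀ ≠ 0 := sub_ne_zero.mpr (hVne w hw)
        have hBA : (H₂ w - H₁ z₀) * (mγ*w+mδ) = deriv H₁ z₀ * (w-z₀) := by
          linear_combination hBw + hid w
        have hd2 : deriv H₂ w * (mγ*w+mδ)^2 = deriv H₁ z₀ := by
          have hcan : (deriv H₁ z₀ * (w-z₀)^2) * (deriv H₂ w * (mγ*w+mδ)^2)
              = (deriv H₁ z₀ * (w-z₀)^2) * deriv H₁ z₀ := by
            linear_combination ((H₂ w - H₁ z₀)*(mγ*w+mδ) + deriv H₁ z₀*(w-z₀)) * hBA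
              - (mγ*w+mδ)^2 * hS
          exact mul_left_cancel₀ (mul_ne_zero ha (pow_ne_zero 2 hu)) hcan
        linear_combination (mγ*w+mδ)^2 * hE + deriv H₁ z * (z-w)^2 * hd2
          - deriv H₁ z * (z-w)^2 * hdet
          + (2*H₁ z*(mγ*w+mδ) - (mα*w+mβ) - H₂ w*(mγ*w+mδ)) * hBw
      exact keyalg he' hp12 hp13 hp23 (hkey p₁ hp₁) (hkey p₂ hp₂) (hkey p₃ hp₃)
    -- three distinct points in D₁
    obtain ⟨q₁, q₂, q₃, hq₁, hq₂, hq₃, hq12, hq13, hq23⟩ := three_points hD₁ hD₁ne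
    -- H₂ is the Möbius map on D₂
    have main₂ : ∀ w ∈ D₂, mγ*w + mδ ≠ 0 ∧ H₂ w * (mγ*w+mδ) = mα*w+mβ := by
      intro w hw
      have hkey2 : ∀ z ∈ D₁, (H₂ w * (mγ*z+mδ) - (mα*z+mβ))^2
          = deriv H₂ w * (mα*mδ - mβ*mγ) * (w - z)^2 := by
        intro z hz
        obtain ⟨hdz, hXz, hxz⟩ := main₁ z hz
        have hE := heq z hz w hw
        linear_combination (mγ*z+mδ)^2 * hE + deriv H₂ w*(z-w)^2 * hxz
          + (2*H₂ w*(mγ*z+mδ) - (mα*z+mβ) - H₁ z*(mγ*z+mδ)) * hXz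
      obtain ⟨h1, h2, _⟩ := keyalg he' hq12 hq13 hq23 (hkey2 q₁ hq₁) (hkey2 q₂ hq₂) (hkey2 q₃ hq₃)
      exact ⟨h1, h2⟩
    refine ⟨mα, mβ, mγ, mδ, he', fun z hz => ?_, fun w hw => ?_⟩
    · obtain ⟨h1, h2, _⟩ := main₁ z hz
      exact ⟨h1, by rw [eq_div_iff h1]; exact h2⟩
    · obtain ⟨h1, h2⟩ := main₂ w hw
      exact ⟨h1, by rw [eq_div_iff h1]; exact h2⟩
end

section
/- Let O₁, O₂ ⊆ ℂ be nonempty open sets, and let H₁ : O₁ → ℂ and H₂ : O₂ → ℂ be holomorphic functions satisfying H₁′(z) · H₂′(w) · (1 − zw)² = (1 − H₁(z)H₂(w))² for all (z,w) ∈ O₁ × O₂. Then either H₁ and H₂ are constants c₁, c₂ with c₁·c₂ = 1, or there exist a,b,c,d ∈ ℂ with ad − bc ≠ 0 such that cz + d ≠ 0 and H₁(z) = (az+b)/(cz+d) for all z ∈ O₁, and bw + a ≠ 0 and H₂(w) = (dw+c)/(bw+a) for all w ∈ O₂ (equivalently, H₂(w) = 1/H₁(1/w)). -/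
open Complex

/-- A quadratic polynomial vanishing on a nonempty open subset of `ℂ` has zero
coefficients. -/
lemma omega_aux_quad_zero {α β γ : ℂ} {U : Set ℂ} (hU : IsOpen U) (hne : U.Nonempty)
    (h : ∀ z ∈ U, α * z ^ 2 + β * z + γ = 0) : α = 0 ∧ β = 0 ∧ γ = 0 := by
  obtain ⟨z₁, hz₁⟩ := hne
  obtain ⟨r, hr, hball⟩ := Metric.isOpen_iff.1 hU z₁ hz₁
  set δ : ℂ := ((r/2 : ℝ) : ℂ)
  have hδ : δ ≠ 0 := by
    simp [δ]
    positivity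
  have hm : ∀ t : ℂ, ‖t‖ < r → z₁ + t ∈ U := by
    intro t ht
    apply hball
    simp [Metric.mem_ball, Complex.dist_eq, ht]
  have habs : ‖δ‖ < r := by
    simp only [δ, Complex.norm_real, Real.norm_eq_abs]
    rw [abs_of_pos (by positivity)]
    linarith
  have habs' : ‖(-δ)‖ < r := by simpa using habs
  have e1 := h z₁ hz₁
  have e2 := h (z₁ + δ) (hm δ habs)
  have e3 := h (z₁ + -δ) (hm (-δ) habs')
  have hα : α = 0 := by
    have : α * δ ^ 2 * 2 = 0 := by linear_combination e2 + e3 - 2 * e1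
    rcases mul_eq_zero.1 this with h' | h'
    · rcases mul_eq_zero.1 h' with h'' | h''
      · exact h''
      · exact absurd (pow_eq_zero_iff (two_ne_zero) |>.1 h'') hδ
    · norm_num at h'
  have hβ : β = 0 := by
    have : β * δ * 2 = 0 := by linear_combination e2 - e3 - 4 * z₁ * δ * hα
    rcases mul_eq_zero.1 this with h' | h'
    · rcases mul_eq_zero.1 h' with h'' | h''
      · exact h''
      · exact absurd h'' hδ
    · norm_num at h'
  refine ⟨hα, hβ, ?_⟩
  linear_combination e1 - z₁^2 * hα - z₁ * hβ

/-- Derivative of a function agreeing with a Möbius map on an open set. -/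
lemma omega_aux_mob_deriv {H : ℂ → ℂ} {V : Set ℂ} (hV : IsOpen V) {a b c d : ℂ}
    (hden : ∀ z ∈ V, c * z + d ≠ 0)
    (hmob : ∀ z ∈ V, H z * (c * z + d) = a * z + b)
    {z : ℂ} (hz : z ∈ V) :
    deriv H z = (a * d - b * c) / (c * z + d) ^ 2 := by
  have hev : H =ᶠ[nhds z] fun x => (a * x + b) / (c * x + d) := by
    filter_upwards [hV.mem_nhds hz] with x hx
    exact (eq_div_iff (hden x hx)).2 (hmob x hx)
  rw [hev.deriv_eq]
  have hdz := hden z hz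
  have h1 : DifferentiableAt ℂ (fun x : ℂ => a * x + b) z := by fun_prop
  have h2 : DifferentiableAt ℂ (fun x : ℂ => c * x + d) z := by fun_prop
  rw [deriv_fun_div h1 h2 hdz]
  have d1 : deriv (fun x : ℂ => a * x + b) z = a * 1 :=
    HasDerivAt.deriv (((hasDerivAt_id z).const_mul a).add_const b)
  have d2 : deriv (fun x : ℂ => c * x + d) z = c * 1 :=
    HasDerivAt.deriv (((hasDerivAt_id z).const_mul c).add_const d)
  rw [d1, d2]
  ring

/-- Key step: if `H₁` is a Möbius map on a nonempty open set `V` and the functional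
equation holds for a point `w` at which `deriv H₂ w ≠ 0`, then `H₂ w` is the value of the
dual Möbius map. -/
lemma omega_aux_key {V : Set ℂ} (hV : IsOpen V) (hVne : V.Nonempty)
    (H₁ H₂ : ℂ → ℂ) (a b c d : ℂ) (hdet : a * d - b * c ≠ 0)
    (hmob : ∀ z ∈ V, H₁ z * (c * z + d) = a * z + b)
    (w : ℂ) (he : deriv H₂ w ≠ 0)
    (heqw : ∀ z ∈ V, deriv H₁ z * deriv H₂ w * (1 - z * w) ^ 2 = (1 - H₁ z * H₂ w) ^ 2) :
    b * w + a ≠ 0 ∧ H₂ w = (d * w + c) / (b * w + a) := by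
  set K := a * d - b * c with hK
  set e := deriv H₂ w with he'
  set X := H₂ w with hX'
  set p := c - a * X with hp'
  set q := d - b * X with hq'
  have hden : ∀ z ∈ V, c * z + d ≠ 0 := by
    intro z hz h0
    apply hdet
    have h1 := hmob z hz
    rw [h0, mul_zero] at h1
    linear_combination a * h0 + c * h1
  have hquad : ∀ z ∈ V,
      (K * e * w ^ 2 - p ^ 2) * z ^ 2 + (-(2 * K * e * w) - 2 * p * q) * z
        + (K * e - q ^ 2) = 0 := by
    intro z hz
    have hd := omega_aux_mob_deriv hV hden hmob hz
    have hh := heqw z hz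
    rw [hd] at hh
    have hcz := hden z hz
    have hsq : (c * z + d) ^ 2 ≠ 0 := pow_ne_zero _ hcz
    have hmz := hmob z hz
    have h2 : K * e * (1 - z * w) ^ 2 = (1 - H₁ z * X) ^ 2 * (c * z + d) ^ 2 := by
      rw [← hh, hK, div_mul_eq_mul_div, div_mul_eq_mul_div, div_mul_cancel₀ _ hsq]
    have h3 : K * e * (1 - z * w) ^ 2 = ((c * z + d) - (a * z + b) * X) ^ 2 := by
      rw [h2]
      linear_combination (-(X) * (2 * (c * z + d) - (H₁ z * (c * z + d) + (a * z + b)) * X)) * hmz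
    linear_combination h3
  obtain ⟨hα, hβ, hγ⟩ := omega_aux_quad_zero hV hVne hquad
  have hKe : K * e ≠ 0 := mul_ne_zero hdet he
  have hq : q ≠ 0 := by
    intro h0
    rw [h0] at hγ
    apply hKe
    linear_combination hγ
  have hpq : p + q * w = 0 := by
    have h0 : q * (p + q * w) = 0 := by linear_combination (-1/2 : ℂ) * hβ - w * hγ
    rcases mul_eq_zero.1 h0 with h | h
    · exact absurd h hq
    · exact h
  have hba : b * w + a ≠ 0 := by
    intro h0
    have hc : d * w + c = 0 := by
      have : X * (b * w + a) = d * w + c := by linear_combination -hpq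
      rw [h0, mul_zero] at this
      exact this.symm
    exact hdet (by linear_combination d * h0 - b * hc)
  refine ⟨hba, ?_⟩
  rw [eq_div_iff hba]
  linear_combination -hpq

/-- The degenerate case: if some derivative of `H₂` vanishes, both maps are constant. -/
lemma omega_aux_const {O₁ O₂ : Set ℂ} (hO₁ : IsOpen O₁)
    (hO₁ne : O₁.Nonempty) (H₁ H₂ : ℂ → ℂ)
    (heq : ∀ z ∈ O₁, ∀ w ∈ O₂,
      deriv H₁ z * deriv H₂ w * (1 - z * w) ^ 2 = (1 - H₁ z * H₂ w) ^ 2)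
    (w₁ : ℂ) (hw₁ : w₁ ∈ O₂) (hd : deriv H₂ w₁ = 0) :
    ∃ c₁ c₂ : ℂ, c₁ * c₂ = 1 ∧ (∀ z ∈ O₁, H₁ z = c₁) ∧ (∀ w ∈ O₂, H₂ w = c₂) := by
  set c₂' := H₂ w₁ with hc₂'
  have hprod : ∀ z ∈ O₁, H₁ z * c₂' = 1 := by
    intro z hz
    have h := heq z hz w₁ hw₁
    rw [hd] at h
    have h2 : (1 - H₁ z * c₂') ^ 2 = 0 := by linear_combination -h
    have h3 := pow_eq_zero_iff (two_ne_zero) |>.1 h2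
    linear_combination -h3
  obtain ⟨z₀, hz₀⟩ := hO₁ne
  have hc2 : c₂' ≠ 0 := by
    intro h0
    have := hprod z₀ hz₀
    rw [h0, mul_zero] at this
    exact one_ne_zero this.symm
  have hH1c : ∀ z ∈ O₁, H₁ z = c₂'⁻¹ := by
    intro z hz
    field_simp
    exact hprod z hz
  refine ⟨c₂'⁻¹, c₂', inv_mul_cancel₀ hc2, hH1c, ?_⟩
  intro w hw
  have hder : deriv H₁ z₀ = 0 := by
    have hev : H₁ =ᶠ[nhds z₀] fun _ => c₂'⁻¹ := by
      filter_upwards [hO₁.mem_nhds hz₀] with x hx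
      exact hH1c x hx
    rw [hev.deriv_eq, deriv_const]
  have h := heq z₀ hz₀ w hw
  rw [hder] at h
  have h2 : (1 - H₁ z₀ * H₂ w) ^ 2 = 0 := by linear_combination -h
  have h3 := pow_eq_zero_iff (two_ne_zero) |>.1 h2
  have h4 := hprod z₀ hz₀
  have h5 : H₁ z₀ ≠ 0 := by
    intro h0
    rw [h0, zero_mul] at h4
    exact one_ne_zero h4.symm
  have h6 : H₁ z₀ * H₂ w = H₁ z₀ * c₂' := by linear_combination -h3 - h4
  exact mul_left_cancel₀ h5 h6

/-- Final assembly in the nondegenerate case, given that `H₁` is a Möbius map on some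
nonempty open subset of `O₁`. -/
lemma omega_aux_final {O₁ O₂ : Set ℂ} (hO₂ : IsOpen O₂) (hO₂ne : O₂.Nonempty)
    {V : Set ℂ} (hV : IsOpen V) (hVne : V.Nonempty) (hVO : V ⊆ O₁)
    (H₁ H₂ : ℂ → ℂ) (a b c d : ℂ) (hdet : a * d - b * c ≠ 0)
    (hmob : ∀ z ∈ V, H₁ z * (c * z + d) = a * z + b)
    (hd1 : ∀ z ∈ O₁, deriv H₁ z ≠ 0) (hd2 : ∀ w ∈ O₂, deriv H₂ w ≠ 0)
    (heq : ∀ z ∈ O₁, ∀ w ∈ O₂,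
      deriv H₁ z * deriv H₂ w * (1 - z * w) ^ 2 = (1 - H₁ z * H₂ w) ^ 2) :
    (∀ z ∈ O₁, c * z + d ≠ 0 ∧ H₁ z = (a * z + b) / (c * z + d)) ∧
    (∀ w ∈ O₂, b * w + a ≠ 0 ∧ H₂ w = (d * w + c) / (b * w + a)) := by
  have hH2 : ∀ w ∈ O₂, b * w + a ≠ 0 ∧ H₂ w = (d * w + c) / (b * w + a) := by
    intro w hw
    exact omega_aux_key hV hVne H₁ H₂ a b c d hdet hmob w (hd2 w hw)
      (fun z hz => heq z (hVO hz) w hw)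
  have hH2mul : ∀ w ∈ O₂, H₂ w * (b * w + a) = d * w + c := by
    intro w hw
    obtain ⟨h1, h2⟩ := hH2 w hw
    rw [h2]
    rw [div_mul_cancel₀ _ h1]
  have hdet' : d * a - c * b ≠ 0 := fun h => hdet (by linear_combination h)
  refine ⟨?_, hH2⟩
  intro z hz
  exact omega_aux_key hO₂ hO₂ne H₂ H₁ d c b a hdet' hH2mul z (hd1 z hz)
    (fun w hw => by linear_combination heq z hz w hw)

/-- Ω-model functional equation. Solutions of
H₁′(z) H₂′(w) (1 − zw)² = (1 − H₁(z)H₂(w))² on O₁ × O₂ are either constants c₁, c₂ with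
c₁c₂ = 1, or H₁ = (az+b)/(cz+d) and H₂ = (dw+c)/(bw+a) (i.e. H₂(w) = 1/H₁(1/w)) for a
Möbius transformation. -/
theorem omega_model_functional_equation
    (O₁ O₂ : Set ℂ) (hO₁ : IsOpen O₁) (hO₂ : IsOpen O₂)
    (hO₁ne : O₁.Nonempty) (hO₂ne : O₂.Nonempty)
    (H₁ H₂ : ℂ → ℂ)
    (hH₁ : DifferentiableOn ℂ H₁ O₁) (hH₂ : DifferentiableOn ℂ H₂ O₂)
    (heq : ∀ z ∈ O₁, ∀ w ∈ O₂,
      deriv H₁ z * deriv H₂ w * (1 - z * w) ^ 2 = (1 - H₁ z * H₂ w) ^ 2) :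
    (∃ c₁ c₂ : ℂ, c₁ * c₂ = 1 ∧ (∀ z ∈ O₁, H₁ z = c₁) ∧ (∀ w ∈ O₂, H₂ w = c₂)) ∨
    (∃ a b c d : ℂ, a * d - b * c ≠ 0 ∧
      (∀ z ∈ O₁, c * z + d ≠ 0 ∧ H₁ z = (a * z + b) / (c * z + d)) ∧
      (∀ w ∈ O₂, b * w + a ≠ 0 ∧ H₂ w = (d * w + c) / (b * w + a))) := by
  -- Degenerate case 1: some derivative of H₂ vanishes.
  by_cases hw0 : ∃ w ∈ O₂, deriv H₂ w = 0
  · obtain ⟨w₁, hw₁, hd⟩ := hw0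
    exact Or.inl (omega_aux_const hO₁ hO₁ne H₁ H₂ heq w₁ hw₁ hd)
  -- Degenerate case 2: some derivative of H₁ vanishes.
  by_cases hz0 : ∃ z ∈ O₁, deriv H₁ z = 0
  · obtain ⟨z₁, hz₁, hd⟩ := hz0
    obtain ⟨c₁, c₂, hc, hA, hB⟩ := omega_aux_const hO₂ hO₂ne H₂ H₁
      (fun w hw z hz => by linear_combination heq z hz w hw) z₁ hz₁ hd
    exact Or.inl ⟨c₂, c₁, by linear_combination hc, hB, hA⟩
  push_neg at hw0 hz0
  right
  -- Nondegenerate case: derivatives never vanish.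
  obtain ⟨w₂, hw₂⟩ := hO₂ne
  have hO₂ne : O₂.Nonempty := ⟨w₂, hw₂⟩
  -- find w₁ ∈ O₂ with H₂ w₁ ≠ H₂ w₂
  have hex : ∃ w₁ ∈ O₂, H₂ w₁ ≠ H₂ w₂ := by
    by_contra hcon
    push_neg at hcon
    apply hw0 w₂ hw₂
    have hev : H₂ =ᶠ[nhds w₂] fun _ => H₂ w₂ := by
      filter_upwards [hO₂.mem_nhds hw₂] with x hx
      exact hcon x hx
    rw [hev.deriv_eq, deriv_const]
  obtain ⟨w₁, hw₁, hββ⟩ := hex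
  set β₁ := H₂ w₁ with hβ₁
  set β₂ := H₂ w₂ with hβ₂
  obtain ⟨s₁, hs₁⟩ := IsAlgClosed.exists_pow_nat_eq (deriv H₂ w₁) (zero_lt_two)
  obtain ⟨s₂, hs₂⟩ := IsAlgClosed.exists_pow_nat_eq (deriv H₂ w₂) (zero_lt_two)
  have hs₁0 : s₁ ≠ 0 := by
    intro h0; apply hw0 w₁ hw₁; rw [← hs₁, h0]; ring
  have hs₂0 : s₂ ≠ 0 := by
    intro h0; apply hw0 w₂ hw₂; rw [← hs₂, h0]; ring
  have hww : w₁ ≠ w₂ := by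
    intro h0; rw [hβ₁, hβ₂, h0] at hββ; exact hββ rfl
  -- the two candidate Möbius maps
  set A := -(s₁ * w₁) + s₂ * w₂ with hA
  set B := s₁ - s₂ with hB
  set C := -(β₂ * s₁ * w₁) + β₁ * s₂ * w₂ with hC
  set D := β₂ * s₁ - β₁ * s₂ with hD
  set A' := -(s₁ * w₁) - s₂ * w₂ with hA'
  set B' := s₁ + s₂ with hB'
  set C' := -(β₂ * s₁ * w₁) - β₁ * s₂ * w₂ with hC'
  set D' := β₂ * s₁ + β₁ * s₂ with hD'
  have hfac : s₁ * s₂ * (β₁ - β₂) * (w₁ - w₂) ≠ 0 :=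
    mul_ne_zero (mul_ne_zero (mul_ne_zero hs₁0 hs₂0) (sub_ne_zero.2 hββ)) (sub_ne_zero.2 hww)
  have hdetP : A * D - B * C ≠ 0 := by
    intro h0
    apply hfac
    linear_combination h0
  have hdetM : A' * D' - B' * C' ≠ 0 := by
    intro h0
    apply hfac
    linear_combination -h0
  have hcover : ∀ z ∈ O₁,
      H₁ z * (C * z + D) = A * z + B ∨ H₁ z * (C' * z + D') = A' * z + B' := by
    intro z hz
    have e1 := heq z hz w₁ hw₁
    have e2 := heq z hz w₂ hw₂
    rw [← hs₁] at e1
    rw [← hs₂] at e2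
    have hz' := hz0 z hz
    have key0 : deriv H₁ z *
        ((H₁ z * (C * z + D) - (A * z + B)) * (H₁ z * (C' * z + D') - (A' * z + B'))) = 0 := by
      linear_combination (1 - H₁ z * β₂) ^ 2 * e1 - (1 - H₁ z * β₁) ^ 2 * e2
    have h1 := (mul_eq_zero.1 key0).resolve_left hz'
    rcases mul_eq_zero.1 h1 with h | h
    · left; linear_combination h
    · right; linear_combination h
  -- the set where the `+` branch fails
  set U := O₁ ∩ (fun z => H₁ z * (C * z + D) - (A * z + B)) ⁻¹' {(0 : ℂ)}ᶜ with hU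
  have hUopen : IsOpen U := by
    apply ContinuousOn.isOpen_inter_preimage ?_ hO₁ (isOpen_compl_singleton)
    apply ContinuousOn.sub
    · exact hH₁.continuousOn.mul (Continuous.continuousOn (by fun_prop))
    · exact Continuous.continuousOn (by fun_prop)
  by_cases hUne : U.Nonempty
  · -- on U the `-` branch holds
    have hmob : ∀ z ∈ U, H₁ z * (C' * z + D') = A' * z + B' := by
      intro z hz
      have hz2 : H₁ z * (C * z + D) - (A * z + B) ≠ 0 := hz.2
      rcases hcover z hz.1 with h | h
      · exact absurd (by linear_combination h) hz2
      · exact h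
    obtain ⟨h1, h2⟩ := omega_aux_final hO₂ hO₂ne hUopen hUne (Set.inter_subset_left)
      H₁ H₂ A' B' C' D' hdetM hmob hz0 hw0 heq
    exact ⟨A', B', C', D', hdetM, h1, h2⟩
  · -- U empty: the `+` branch holds on all of O₁
    have hmob : ∀ z ∈ O₁, H₁ z * (C * z + D) = A * z + B := by
      intro z hz
      by_contra hcon
      refine hUne ⟨z, hz, fun h0 => hcon ?_⟩
      have h0' : H₁ z * (C * z + D) - (A * z + B) = 0 := h0
      linear_combination h0'
    obtain ⟨h1, h2⟩ := omega_aux_final hO₂ hO₂ne hO₁ hO₁ne (subset_refl O₁)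
      H₁ H₂ A B C D hdetP hmob hz0 hw0 heq
    exact ⟨A, B, C, D, hdetP, h1, h2⟩
end

section
/- Let O ⊆ G₀ = {(z,w) ∈ ℂ × ℂ : z ≠ w} be a nonempty open set and let T = (T₁, T₂) : O → G₀ be holomorphic. Assume that for every holomorphic function F : G₀ → ℂ and every (z,w) ∈ O, (z − w)² · ∂_z∂_w(F ∘ T)(z,w) = (T₁(z,w) − T₂(z,w))² · (∂₁∂₂F)(T(z,w)). Then there exist nonempty open connected sets D₁, D₂ ⊆ ℂ with D₁ × D₂ ⊆ O and holomorphic functions H₁ : D₁ → ℂ, H₂ : D₂ → ℂ such that T₁(z,w) − T₂(z,w) = H₁(z) − H₂(w) and (H₁(z) − H₂(w))² = (z − w)² · H₁′(z) · H₂′(w) for all (z,w) ∈ D₁ × D₂. -/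
open Complex Metric Real MeasureTheory intervalIntegral Filter Topology

/-- The affine chart of the second configuration space of the Riemann sphere. -/
def G0 : Set (ℂ × ℂ) := {p | p.1 ≠ p.2}

/-- The mixed second complex partial derivative ∂_z∂_w F of F : ℂ × ℂ → ℂ. -/
noncomputable def mixedDeriv (F : ℂ × ℂ → ℂ) (p : ℂ × ℂ) : ℂ :=
  deriv (fun z => deriv (fun w => F (z, w)) p.2) p.1

private lemma sliceDeriv₁ {f : ℂ × ℂ → ℂ} {p : ℂ × ℂ} (hf : DifferentiableAt ℂ f p) :
    HasDerivAt (fun z => f (z, p.2)) (fderiv ℂ f p (1, 0)) p.1 := by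
  have h1 : HasDerivAt (fun z : ℂ => ((z, p.2) : ℂ × ℂ)) (1, 0) p.1 :=
    (hasDerivAt_id p.1).prodMk (hasDerivAt_const p.1 p.2)
  exact hf.hasFDerivAt.comp_hasDerivAt p.1 h1

private lemma sliceDeriv₂ {f : ℂ × ℂ → ℂ} {p : ℂ × ℂ} (hf : DifferentiableAt ℂ f p) :
    HasDerivAt (fun w => f (p.1, w)) (fderiv ℂ f p (0, 1)) p.2 := by
  have h1 : HasDerivAt (fun w : ℂ => ((p.1, w) : ℂ × ℂ)) (0, 1) p.2 :=
    (hasDerivAt_const p.2 p.1).prodMk (hasDerivAt_id p.2)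
  exact hf.hasFDerivAt.comp_hasDerivAt p.2 h1

/-- For a jointly holomorphic function on an open set, the partial derivative in the second
variable is holomorphic in the first variable. -/
private lemma diff_partial₂ {S : ℂ × ℂ → ℂ} {O : Set (ℂ × ℂ)} (hO : IsOpen O)
    (hS : DifferentiableOn ℂ S O) {p : ℂ × ℂ} (hp : p ∈ O) :
    DifferentiableAt ℂ (fun z => fderiv ℂ S (z, p.2) (0, 1)) p.1 := by
  have hSd : ∀ q ∈ O, DifferentiableAt ℂ S q := fun q hq => hS.differentiableAt (hO.mem_nhds hq)
  obtain ⟨δ, hδ, hδO⟩ := (Metric.nhds_basis_closedBall.mem_iff).1 (hO.mem_nhds hp)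
  have hKO : ∀ z ∈ closedBall p.1 δ, ∀ ζ ∈ closedBall p.2 δ, ((z, ζ) : ℂ × ℂ) ∈ O := by
    intro z hz ζ hζ
    apply hδO
    rw [← closedBall_prod_same]
    exact ⟨hz, hζ⟩
  -- bound on S
  obtain ⟨M, hM⟩ : ∃ M, ∀ q ∈ closedBall p.1 δ ×ˢ closedBall p.2 δ, ‖S q‖ ≤ M :=
    ((isCompact_closedBall _ _).prod (isCompact_closedBall _ _)).exists_bound_of_continuousOn
      (hS.continuousOn.mono (fun q hq => hKO q.1 hq.1 q.2 hq.2))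
  -- slice in z is holomorphic on the open slice set
  have hslice₁ : ∀ ζ : ℂ, DifferentiableOn ℂ (fun z => S (z, ζ)) {z | ((z, ζ) : ℂ × ℂ) ∈ O} :=
    fun ζ z hz => ((sliceDeriv₁ (hSd _ hz)).differentiableAt).differentiableWithinAt
  have hopen₁ : ∀ ζ : ℂ, IsOpen {z | ((z, ζ) : ℂ × ℂ) ∈ O} := fun ζ =>
    hO.preimage (continuous_id.prodMk continuous_const)
  have hslice₂ : ∀ z : ℂ, DifferentiableOn ℂ (fun ζ => S (z, ζ)) {ζ | ((z, ζ) : ℂ × ℂ) ∈ O} :=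
    fun z ζ hζ => ((sliceDeriv₂ (hSd _ hζ)).differentiableAt).differentiableWithinAt
  have hopen₂ : ∀ z : ℂ, IsOpen {ζ | ((z, ζ) : ℂ × ℂ) ∈ O} := fun z =>
    hO.preimage (continuous_const.prodMk continuous_id)
  set σ : ℝ := δ / 2 with hσ_def
  have hσ : 0 < σ := by positivity
  set g₁ : ℂ → ℂ → ℂ := fun z ζ => deriv (fun z' => S (z', ζ)) z with hg₁_def
  have hder₁ : ∀ z ζ : ℂ, ((z, ζ) : ℂ × ℂ) ∈ O →
      HasDerivAt (fun z' => S (z', ζ)) (g₁ z ζ) z := by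
    intro z ζ h
    have h2 := sliceDeriv₁ (hSd (z, ζ) h)
    rwa [← h2.deriv] at h2
  -- Cauchy estimate for g₁
  have hhalf : σ + σ = δ := by rw [hσ_def]; ring
  have hg₁bound : ∀ z ∈ closedBall p.1 σ, ∀ ζ ∈ closedBall p.2 δ, ‖g₁ z ζ‖ ≤ M / σ := by
    intro z hz ζ hζ
    rw [mem_closedBall] at hz
    have hsub : closedBall z σ ⊆ {z' | ((z', ζ) : ℂ × ℂ) ∈ O} := by
      intro x hx
      rw [mem_closedBall] at hx
      refine hKO x ?_ ζ hζ
      rw [mem_closedBall]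
      calc dist x p.1 ≤ dist x z + dist z p.1 := dist_triangle x z p.1
        _ ≤ σ + σ := add_le_add hx hz
        _ = δ := hhalf
    have hval : g₁ z ζ = cderiv σ (fun z' => S (z', ζ)) z := by
      rw [cderiv_eq_deriv (hopen₁ ζ) (hslice₁ ζ) hσ hsub]
    rw [hval]
    refine norm_cderiv_le hσ ?_
    intro x hx
    rw [mem_sphere] at hx
    refine hM (x, ζ) ⟨?_, hζ⟩
    rw [mem_closedBall]
    calc dist x p.1 ≤ dist x z + dist z p.1 := dist_triangle x z p.1
      _ ≤ σ + σ := add_le_add hx.le hz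
      _ = δ := hhalf
  -- the circle in the w-variable
  set c : ℝ → ℂ := fun θ => circleMap p.2 σ θ with hc_def
  have hcmem : ∀ θ : ℝ, c θ ∈ closedBall p.2 δ := by
    intro θ
    rw [mem_closedBall]
    have := circleMap_mem_sphere p.2 hσ.le θ
    rw [mem_sphere] at this
    rw [hc_def]
    simp only []
    rw [this]
    linarith [hhalf]
  set a : ℝ → ℂ := fun θ => deriv (circleMap p.2 σ) θ * ((c θ - p.2) ^ 2)⁻¹ with ha_def
  have ha_eq : a = fun θ => circleMap 0 σ θ * I * ((circleMap 0 σ θ) ^ 2)⁻¹ := by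
    funext θ
    rw [ha_def]
    simp only [deriv_circleMap, hc_def, circleMap_sub_center]
  have hacont : Continuous a := by
    rw [ha_eq]
    exact ((continuous_circleMap 0 σ).mul continuous_const).mul
      (((continuous_circleMap 0 σ).pow 2).inv₀
        (fun θ => pow_ne_zero 2 (circleMap_ne_center hσ.ne')))
  have ha_norm : ∀ θ : ℝ, ‖a θ‖ = σ⁻¹ := by
    intro θ
    rw [ha_eq]
    simp only [norm_mul, norm_inv, norm_pow, norm_circleMap_zero, Complex.norm_I,
      _root_.abs_of_pos hσ]
    field_simp
  set F : ℂ → ℝ → ℂ := fun z θ => a θ * S (z, c θ) with hF_def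
  set F' : ℂ → ℝ → ℂ := fun z θ => a θ * g₁ z (c θ) with hF'_def
  have hScont : ∀ z ∈ closedBall p.1 δ, Continuous fun θ => S (z, c θ) := by
    intro z hz
    rw [continuous_iff_continuousAt]
    intro θ
    have hmem : ((z, c θ) : ℂ × ℂ) ∈ O := hKO z hz (c θ) (hcmem θ)
    have h1 : ContinuousAt S (z, c θ) := hS.continuousOn.continuousAt (hO.mem_nhds hmem)
    have h2 : ContinuousAt (fun θ : ℝ => ((z, c θ) : ℂ × ℂ)) θ :=
      (continuous_const.prodMk (continuous_circleMap p.2 σ)).continuousAt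
    have h3 := ContinuousAt.comp (f := fun θ : ℝ => ((z, c θ) : ℂ × ℂ)) (x := θ) h1 h2
    simpa [Function.comp_def] using h3
  -- measurability of F' p.1
  have hsm : StronglyMeasurable fun θ => g₁ p.1 (c θ) := by
    have hseq : ∀ n : ℕ, (0 : ℝ) < σ / (n + 1) := by
      intro n; positivity
    have hseqle : ∀ n : ℕ, σ / (n + 1) ≤ δ := by
      intro n
      rw [div_le_iff₀ (by positivity)]
      nlinarith [hseq n, hσ, hhalf, Nat.cast_nonneg (α := ℝ) n]
    apply stronglyMeasurable_of_tendsto (u := atTop)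
      (f := fun (n : ℕ) θ =>
        (S (p.1 + ((σ / (n + 1) : ℝ) : ℂ), c θ) - S (p.1, c θ)) / ((σ / (n + 1) : ℝ) : ℂ))
    · intro n
      apply Continuous.stronglyMeasurable
      have hzn : (p.1 + ((σ / (n + 1) : ℝ) : ℂ)) ∈ closedBall p.1 δ := by
        rw [mem_closedBall, dist_eq_norm, add_sub_cancel_left, Complex.norm_real,
          Real.norm_eq_abs, _root_.abs_of_pos (hseq n)]
        exact hseqle n
      exact ((hScont _ hzn).sub (hScont p.1 (mem_closedBall_self hδ.le))).div_const _
    · rw [tendsto_pi_nhds]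
      intro θ
      have hmem : ((p.1, c θ) : ℂ × ℂ) ∈ O :=
        hKO p.1 (mem_closedBall_self hδ.le) (c θ) (hcmem θ)
      have hda := hder₁ p.1 (c θ) hmem
      have hslope := hasDerivAt_iff_tendsto_slope.1 hda
      have hzn0 : ∀ n : ℕ, ((σ / (n + 1) : ℝ) : ℂ) ≠ 0 := fun n =>
        Complex.ofReal_ne_zero.2 (hseq n).ne'
      have htend : Filter.Tendsto (fun n : ℕ => p.1 + ((σ / (n + 1) : ℝ) : ℂ)) Filter.atTop
          (nhdsWithin p.1 {x | x ≠ p.1}) := by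
        apply tendsto_nhdsWithin_of_tendsto_nhds_of_eventually_within
        · have h0 : Filter.Tendsto (fun n : ℕ => σ / (n + 1 : ℝ)) Filter.atTop (nhds 0) := by
            have := tendsto_one_div_add_atTop_nhds_zero_nat.const_mul σ
            simpa [mul_one_div, div_eq_mul_inv] using this
          have h1 : Filter.Tendsto (fun n : ℕ => ((σ / (n + 1) : ℝ) : ℂ)) Filter.atTop
              (nhds 0) := by
            have h2 := (Complex.continuous_ofReal.tendsto 0).comp h0
            simpa [Function.comp_def] using h2
          simpa using tendsto_const_nhds.add h1
        · exact Filter.Eventually.of_forall fun n => by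
            simp only [Set.mem_setOf_eq, ne_eq, add_eq_left]
            exact hzn0 n
      have := hslope.comp htend
      refine this.congr fun n => ?_
      simp only [Function.comp_apply]
      rw [slope_def_field]
      simp [add_sub_cancel_left]
  have h'meas : AEStronglyMeasurable (F' p.1)
      (MeasureTheory.volume.restrict (Set.uIoc (0 : ℝ) (2 * π))) := by
    rw [hF'_def]
    exact (hacont.stronglyMeasurable.mul hsm).aestronglyMeasurable
  -- the parametric integral
  have hε4 : (0 : ℝ) < δ / 4 := by positivity
  have hb4 : ball p.1 (δ / 4) ⊆ closedBall p.1 σ := by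
    apply ball_subset_closedBall.trans
    apply closedBall_subset_closedBall
    rw [hσ_def]; linarith
  have hbδ : ball p.1 (δ / 4) ⊆ closedBall p.1 δ :=
    hb4.trans (closedBall_subset_closedBall (by rw [hσ_def]; linarith))
  have hmeas : ∀ᶠ z in nhds p.1,
      AEStronglyMeasurable (F z) (MeasureTheory.volume.restrict (Set.uIoc (0 : ℝ) (2 * π))) := by
    filter_upwards [closedBall_mem_nhds p.1 hδ] with z hz
    exact (hacont.mul (hScont z hz)).aestronglyMeasurable
  have hint : IntervalIntegrable (F p.1) MeasureTheory.volume 0 (2 * π) :=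
    (hacont.mul (hScont p.1 (mem_closedBall_self hδ.le))).intervalIntegrable _ _
  have hbound : ∀ᵐ θ ∂MeasureTheory.volume, θ ∈ Set.uIoc (0 : ℝ) (2 * π) →
      ∀ z ∈ ball p.1 (δ / 4), ‖F' z θ‖ ≤ σ⁻¹ * (M / σ) := by
    apply MeasureTheory.ae_of_all
    intro θ _ z hz
    rw [hF'_def]
    simp only [norm_mul]
    rw [ha_norm θ]
    exact mul_le_mul_of_nonneg_left (hg₁bound z (hb4 hz) (c θ) (hcmem θ)) (by positivity)
  have hbi : IntervalIntegrable (fun _ : ℝ => σ⁻¹ * (M / σ)) MeasureTheory.volume 0 (2 * π) :=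
    intervalIntegrable_const
  have hdiff : ∀ᵐ θ ∂MeasureTheory.volume, θ ∈ Set.uIoc (0 : ℝ) (2 * π) →
      ∀ z ∈ ball p.1 (δ / 4), HasDerivAt (fun z' => F z' θ) (F' z θ) z := by
    apply MeasureTheory.ae_of_all
    intro θ _ z hz
    have hmem : ((z, c θ) : ℂ × ℂ) ∈ O := hKO z (hbδ hz) (c θ) (hcmem θ)
    exact (hder₁ z (c θ) hmem).const_mul (a θ)
  have key := intervalIntegral.hasDerivAt_integral_of_dominated_loc_of_deriv_le (ball_mem_nhds p.1 hε4) hmeas hint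
    h'meas hbound hbi hdiff
  -- identify the integral with the partial derivative
  have hD : DifferentiableAt ℂ
      (fun z => (2 * ↑π * I : ℂ)⁻¹ * ∫ θ in (0 : ℝ)..2 * π, F z θ) p.1 :=
    (key.2.const_mul _).differentiableAt
  apply hD.congr_of_eventuallyEq
  filter_upwards [ball_mem_nhds p.1 hε4] with z hz
  have hzδ : z ∈ closedBall p.1 δ := hbδ hz
  have hmem : ((z, p.2) : ℂ × ℂ) ∈ O := hKO z hzδ p.2 (mem_closedBall_self hδ.le)
  have hsub₂ : closedBall p.2 σ ⊆ {ζ | ((z, ζ) : ℂ × ℂ) ∈ O} := by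
    intro ζ hζ
    rw [mem_closedBall] at hζ
    exact hKO z hzδ ζ (by rw [mem_closedBall]; linarith [hhalf, hσ])
  have e1 : fderiv ℂ S (z, p.2) (0, 1) = deriv (fun ζ => S (z, ζ)) p.2 :=
    (sliceDeriv₂ (hSd (z, p.2) hmem)).deriv.symm
  have e2 : deriv (fun ζ => S (z, ζ)) p.2 = cderiv σ (fun ζ => S (z, ζ)) p.2 :=
    (cderiv_eq_deriv (hopen₂ z) (hslice₂ z) hσ hsub₂).symm
  have e3 : cderiv σ (fun ζ => S (z, ζ)) p.2
      = (2 * ↑π * I : ℂ)⁻¹ * ∫ θ in (0 : ℝ)..2 * π, F z θ := by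
    rw [cderiv, circleIntegral, smul_eq_mul]
    congr 1
    apply intervalIntegral.integral_congr
    intro θ _
    rw [hF_def]
    simp only [ha_def, smul_eq_mul, hc_def]
    ring
  rw [e1, e2, e3]

/-- if the Laplacian (z−w)²∂_z∂_w on G₀ is T-invariant, then on some
product of open connected sets D₁ × D₂ ⊆ O one has T₁ − T₂ = H₁(z) − H₂(w) with
holomorphic H₁, H₂ satisfying (H₁(z) − H₂(w))² = (z − w)² H₁′(z) H₂′(w). -/
theorem laplacian_invariance_separates_variables
    (O : Set (ℂ × ℂ)) (hO : IsOpen O) (hOne : O.Nonempty) (hOG : O ⊆ G0)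
    (T₁ T₂ : ℂ × ℂ → ℂ)
    (hT₁ : DifferentiableOn ℂ T₁ O) (hT₂ : DifferentiableOn ℂ T₂ O)
    (hTmaps : ∀ p ∈ O, ((T₁ p, T₂ p) : ℂ × ℂ) ∈ G0)
    (hinv : ∀ F : ℂ × ℂ → ℂ, DifferentiableOn ℂ F G0 →
      ∀ p ∈ O, (p.1 - p.2) ^ 2 * mixedDeriv (fun q => F (T₁ q, T₂ q)) p
        = (T₁ p - T₂ p) ^ 2 * mixedDeriv F (T₁ p, T₂ p)) :
    ∃ D₁ D₂ : Set ℂ, IsOpen D₁ ∧ IsOpen D₂ ∧ IsConnected D₁ ∧ IsConnected D₂ ∧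
      D₁ ×ˢ D₂ ⊆ O ∧
      ∃ H₁ H₂ : ℂ → ℂ, DifferentiableOn ℂ H₁ D₁ ∧ DifferentiableOn ℂ H₂ D₂ ∧
        ∀ z ∈ D₁, ∀ w ∈ D₂,
          T₁ (z, w) - T₂ (z, w) = H₁ z - H₂ w ∧
          (H₁ z - H₂ w) ^ 2 = (z - w) ^ 2 * deriv H₁ z * deriv H₂ w := by
  classical
  set S : ℂ × ℂ → ℂ := fun q => T₁ q - T₂ q with hS_def
  have hS : DifferentiableOn ℂ S O := hT₁.sub hT₂
  have hSd : ∀ p ∈ O, DifferentiableAt ℂ S p := fun p hp =>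
    hS.differentiableAt (hO.mem_nhds hp)
  set g₁ : ℂ × ℂ → ℂ := fun q => fderiv ℂ S q (1, 0) with hg₁_def
  set g₂ : ℂ × ℂ → ℂ := fun q => fderiv ℂ S q (0, 1) with hg₂_def
  -- nearby slices stay in O
  have hmem : ∀ p ∈ O, ∀ᶠ z in nhds p.1, (z, p.2) ∈ O := by
    intro p hp
    have hcont : Continuous fun z : ℂ => ((z, p.2) : ℂ × ℂ) :=
      continuous_id.prodMk continuous_const
    exact (hO.preimage hcont).mem_nhds hp
  -- mixedDeriv S via g₂
  have hmix : ∀ p ∈ O, mixedDeriv S p = deriv (fun z => g₂ (z, p.2)) p.1 := by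
    intro p hp
    apply Filter.EventuallyEq.deriv_eq
    filter_upwards [hmem p hp] with z hz
    exact (sliceDeriv₂ (hSd _ hz)).deriv
  -- Step 2: mixedDeriv S = 0 on O
  have hmixzero : ∀ p ∈ O, mixedDeriv S p = 0 := by
    intro p hp
    have hF : DifferentiableOn ℂ (fun q : ℂ × ℂ => q.1 - q.2) G0 :=
      (differentiable_fst.sub differentiable_snd).differentiableOn
    have h := hinv _ hF p hp
    have hmf : mixedDeriv (fun q : ℂ × ℂ => q.1 - q.2) (T₁ p, T₂ p) = 0 := by
      unfold mixedDeriv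
      have h1 : (fun z : ℂ => deriv (fun w => ((z, w) : ℂ × ℂ).1 - (z, w).2) (T₁ p, T₂ p).2)
          = fun _ : ℂ => (-1 : ℂ) := by
        funext z
        simpa using ((hasDerivAt_id ((T₁ p, T₂ p) : ℂ × ℂ).2).const_sub z).deriv
      rw [h1, deriv_const]
    have hcomp : (fun q => (fun q' : ℂ × ℂ => q'.1 - q'.2) (T₁ q, T₂ q)) = S := rfl
    rw [hcomp, hmf, mul_zero] at h
    have hne : (p.1 - p.2) ^ 2 ≠ 0 := pow_ne_zero _ (sub_ne_zero.2 (hOG hp))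
    exact (mul_eq_zero.1 h).resolve_left hne
  -- derivative of z ↦ g₂(z,w) is 0 on O
  have hg2z : ∀ p ∈ O, HasDerivAt (fun z => g₂ (z, p.2)) 0 p.1 := by
    intro p hp
    have hd : DifferentiableAt ℂ (fun z => g₂ (z, p.2)) p.1 := by
      have := diff_partial₂ hO hS hp
      exact this
    have h0 : deriv (fun z => g₂ (z, p.2)) p.1 = 0 := by
      rw [← hmix p hp]; exact hmixzero p hp
    have h1 := hd.hasDerivAt
    rwa [h0] at h1
  -- Step 3: key pointwise identity
  have hkey : ∀ p ∈ O, (p.1 - p.2) ^ 2 * (g₁ p * g₂ p) = -(S p) ^ 2 := by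
    intro p hp
    have hF : DifferentiableOn ℂ (fun q : ℂ × ℂ => (q.1 - q.2) ^ 2) G0 :=
      ((differentiable_fst.sub differentiable_snd).pow 2).differentiableOn
    have h := hinv _ hF p hp
    -- mixedDeriv of F at T p is -2
    have hmf : mixedDeriv (fun q : ℂ × ℂ => (q.1 - q.2) ^ 2) (T₁ p, T₂ p) = -2 := by
      unfold mixedDeriv
      set b := ((T₁ p, T₂ p) : ℂ × ℂ).2 with hb
      have h1 : (fun z : ℂ => deriv (fun w => (((z, w) : ℂ × ℂ).1 - (z, w).2) ^ 2) b)
          = fun z : ℂ => -(2 * (z - b)) := by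
        funext z
        have : HasDerivAt (fun w : ℂ => (z - w) ^ 2) (-(2 * (z - b))) b := by
          simpa [pow_one, mul_comm, mul_assoc] using ((hasDerivAt_id b).const_sub z).fun_pow 2
        simpa using this.deriv
      rw [h1]
      have h2 : HasDerivAt (fun z : ℂ => -(2 * (z - b))) (-2 : ℂ)
          ((T₁ p, T₂ p) : ℂ × ℂ).1 := by
        simpa using (((hasDerivAt_id (((T₁ p, T₂ p) : ℂ × ℂ).1)).sub_const b).const_mul
          (2 : ℂ)).fun_neg
      exact h2.deriv
    -- mixedDeriv of S² at p
    have hmS : mixedDeriv (fun q => (S q) ^ 2) p = 2 * (g₁ p * g₂ p) := by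
      unfold mixedDeriv
      have heq : (fun z : ℂ => deriv (fun w => (S (z, w)) ^ 2) p.2)
          =ᶠ[nhds p.1] fun z => 2 * S (z, p.2) * g₂ (z, p.2) := by
        filter_upwards [hmem p hp] with z hz
        have := (sliceDeriv₂ (hSd _ hz)).fun_pow 2
        simpa [pow_one, mul_comm, mul_assoc] using this.deriv
      rw [heq.deriv_eq]
      have hd : HasDerivAt (fun z => 2 * S (z, p.2) * g₂ (z, p.2))
          (2 * g₁ p * g₂ p + 2 * S p * 0) p.1 := by
        have hs : HasDerivAt (fun z => 2 * S (z, p.2)) (2 * g₁ p) p.1 :=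
          (sliceDeriv₁ (hSd p hp)).const_mul 2
        exact hs.mul (hg2z p hp)
      rw [hd.deriv]; ring
    have hcomp : (fun q => (fun q' : ℂ × ℂ => (q'.1 - q'.2) ^ 2) (T₁ q, T₂ q))
        = fun q => (S q) ^ 2 := rfl
    rw [hcomp, hmf, hmS] at h
    have hTS : T₁ p - T₂ p = S p := rfl
    rw [hTS] at h
    linear_combination h / 2
  -- choose the product of balls
  obtain ⟨p₀, hp₀⟩ := hOne
  obtain ⟨r, hr, hball⟩ := Metric.isOpen_iff.1 hO p₀ hp₀
  refine ⟨ball p₀.1 r, ball p₀.2 r, isOpen_ball, isOpen_ball,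
    ⟨⟨p₀.1, mem_ball_self hr⟩, (convex_ball _ _).isPreconnected⟩,
    ⟨⟨p₀.2, mem_ball_self hr⟩, (convex_ball _ _).isPreconnected⟩, ?_, ?_⟩
  · rw [ball_prod_same]; exact hball
  have hmemO : ∀ z ∈ ball p₀.1 r, ∀ w ∈ ball p₀.2 r, ((z, w) : ℂ × ℂ) ∈ O := by
    intro z hz w hw
    apply hball
    rw [← ball_prod_same]
    exact ⟨hz, hw⟩
  -- Claim A: g₂ doesn't depend on z
  have hA : ∀ w ∈ ball p₀.2 r, ∀ z ∈ ball p₀.1 r, g₂ (z, w) = g₂ (p₀.1, w) := by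
    intro w hw z hz
    have hdiff : DifferentiableOn ℂ (fun z => g₂ (z, w)) (ball p₀.1 r) := by
      intro x hx
      exact (hg2z (x, w) (hmemO x hx w hw)).differentiableAt.differentiableWithinAt
    have hzero : ∀ x ∈ ball p₀.1 r,
        fderivWithin ℂ (fun z => g₂ (z, w)) (ball p₀.1 r) x = 0 := by
      intro x hx
      rw [fderivWithin_of_isOpen isOpen_ball hx]
      rw [(hg2z (x, w) (hmemO x hx w hw)).hasFDerivAt.fderiv]
      ext
      simp
    exact Convex.is_const_of_fderivWithin_eq_zero (f := fun z => g₂ (z, w))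
      (convex_ball _ _) hdiff hzero hz (mem_ball_self hr)
  -- Claim B: separation
  set H₁ : ℂ → ℂ := fun z => S (z, p₀.2) with hH₁_def
  set H₂ : ℂ → ℂ := fun w => S (p₀.1, p₀.2) - S (p₀.1, w) with hH₂_def
  have hsep : ∀ z ∈ ball p₀.1 r, ∀ w ∈ ball p₀.2 r, S (z, w) = H₁ z - H₂ w := by
    intro z hz w hw
    have hdiff : DifferentiableOn ℂ (fun w' => S (z, w') - S (p₀.1, w')) (ball p₀.2 r) := by
      intro x hx
      exact ((sliceDeriv₂ (p := (z, x)) (hSd (z, x) (hmemO z hz x hx))).sub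
        (sliceDeriv₂ (p := (p₀.1, x)) (hSd (p₀.1, x)
          (hmemO p₀.1 (mem_ball_self hr) x hx)))).differentiableAt.differentiableWithinAt
    have hzero : ∀ x ∈ ball p₀.2 r,
        fderivWithin ℂ (fun w' => S (z, w') - S (p₀.1, w')) (ball p₀.2 r) x = 0 := by
      intro x hx
      rw [fderivWithin_of_isOpen isOpen_ball hx]
      have hder : HasDerivAt (fun w' => S (z, w') - S (p₀.1, w'))
          (g₂ (z, x) - g₂ (p₀.1, x)) x :=
        (sliceDeriv₂ (p := (z, x)) (hSd (z, x) (hmemO z hz x hx))).sub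
          (sliceDeriv₂ (p := (p₀.1, x)) (hSd (p₀.1, x) (hmemO p₀.1 (mem_ball_self hr) x hx)))
      rw [hA x hx z hz, sub_self] at hder
      rw [hder.hasFDerivAt.fderiv]
      ext
      simp
    have := Convex.is_const_of_fderivWithin_eq_zero (f := fun w' => S (z, w') - S (p₀.1, w'))
      (convex_ball _ _) hdiff hzero hw (mem_ball_self hr)
    -- this : S (z,w) - S (p₀.1,w) = S (z,p₀.2) - S (p₀.1,p₀.2)
    simp only [hH₁_def, hH₂_def]
    linear_combination this
  -- derivative formulas
  have hH₁deriv : ∀ z ∈ ball p₀.1 r, ∀ w ∈ ball p₀.2 r, deriv H₁ z = g₁ (z, w) := by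
    intro z hz w hw
    have h1 : HasDerivAt (fun z' => S (z', w)) (g₁ (z, w)) z :=
      sliceDeriv₁ (hSd (z, w) (hmemO z hz w hw))
    have heq : (fun z' => S (z', w)) =ᶠ[nhds z] fun z' => H₁ z' - H₂ w := by
      filter_upwards [isOpen_ball.mem_nhds hz] with z' hz'
      exact hsep z' hz' w hw
    rw [← deriv_sub_const (H₂ w), ← heq.deriv_eq]
    exact h1.deriv
  have hH₂deriv : ∀ z ∈ ball p₀.1 r, ∀ w ∈ ball p₀.2 r, deriv H₂ w = -g₂ (z, w) := by
    intro z hz w hw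
    have h1 : HasDerivAt (fun w' => H₁ z - S (z, w')) (-g₂ (z, w)) w :=
      (sliceDeriv₂ (hSd (z, w) (hmemO z hz w hw))).const_sub (H₁ z)
    have heq : (fun w' => H₁ z - S (z, w')) =ᶠ[nhds w] H₂ := by
      filter_upwards [isOpen_ball.mem_nhds hw] with w' hw'
      have := hsep z hz w' hw'
      linear_combination -this
    rw [← heq.deriv_eq]
    exact h1.deriv
  refine ⟨H₁, H₂, ?_, ?_, ?_⟩
  · intro z hz
    exact (sliceDeriv₁ (hSd (z, p₀.2)
      (hmemO z hz p₀.2 (mem_ball_self hr)))).differentiableAt.differentiableWithinAt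
  · intro w hw
    exact ((sliceDeriv₂ (hSd (p₀.1, w)
      (hmemO p₀.1 (mem_ball_self hr) w hw))).const_sub _).differentiableAt.differentiableWithinAt
  · intro z hz w hw
    have hSzw : S (z, w) = T₁ (z, w) - T₂ (z, w) := rfl
    have hsep' := hsep z hz w hw
    constructor
    · rw [← hSzw]; exact hsep'
    · rw [hH₁deriv z hz w hw, hH₂deriv z hz w hw]
      have hk := hkey (z, w) (hmemO z hz w hw)
      simp only at hk
      rw [← hsep']
      linear_combination hk
end

section
/- Let a,b,c,d ∈ ℂ with ad − bc ≠ 0 and set ψ(z) = (az+b)/(cz+d). Let O ⊆ {(z,w) ∈ ℂ × ℂ : z ≠ w, cz+d ≠ 0, cw+d ≠ 0} be open, and define T(z,w) = (ψ(z), ψ(w)) (or T(z,w) = (ψ(w), ψ(z))). Then T maps O into G₀ = {(z,w) ∈ ℂ² : z ≠ w}, and for every holomorphic function F : G₀ → ℂ and every (z,w) ∈ O, (z − w)² · ∂_z∂_w(F ∘ T)(z,w) = (T₁(z,w) − T₂(z,w))² · (∂₁∂₂F)(T(z,w)). -/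
open Complex

open Metric Filter Set
open scoped Topology

lemma isOpen_G0 : IsOpen G0 :=
  isOpen_ne_fun continuous_fst continuous_snd

lemma sliceDiffAt_snd {U : Set (ℂ × ℂ)} (hU : IsOpen U) {F : ℂ × ℂ → ℂ}
    (hF : DifferentiableOn ℂ F U) {z w : ℂ} (h : (z, w) ∈ U) :
    DifferentiableAt ℂ (fun y => F (z, y)) w :=
  (hF.differentiableAt (hU.mem_nhds h)).comp w
    ((differentiableAt_const z).prodMk differentiableAt_id)

lemma sliceDiffAt_fst {U : Set (ℂ × ℂ)} (hU : IsOpen U) {F : ℂ × ℂ → ℂ}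
    (hF : DifferentiableOn ℂ F U) {z w : ℂ} (h : (z, w) ∈ U) :
    DifferentiableAt ℂ (fun x => F (x, w)) z :=
  (hF.differentiableAt (hU.mem_nhds h)).comp z
    (differentiableAt_id.prodMk (differentiableAt_const w))

/-- Junk-value-safe chain rule for `deriv`. -/
lemma deriv_comp_junk {ψ : ℂ → ℂ} {z0 : ℂ} (h : ℂ → ℂ)
    (hψ : ∀ᶠ z in 𝓝 z0, DifferentiableAt ℂ ψ z) (hd : deriv ψ z0 ≠ 0) :
    deriv (fun z => h (ψ z)) z0 = deriv h (ψ z0) * deriv ψ z0 := by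
  by_cases hh : DifferentiableAt ℂ h (ψ z0)
  · exact deriv_comp z0 hh hψ.self_of_nhds
  · obtain ⟨s, hs, hsd⟩ := hψ.exists_mem
    obtain ⟨t, hts, hto, hzt⟩ := _root_.mem_nhds_iff.1 hs
    have hdo : DifferentiableOn ℂ ψ t := fun z hz => (hsd z (hts hz)).differentiableWithinAt
    have han : AnalyticAt ℂ ψ z0 := hdo.analyticAt (hto.mem_nhds hzt)
    obtain ⟨p, hp⟩ := han
    have hstrict : HasStrictDerivAt ψ (deriv ψ z0) z0 := by
      have h1 := hp.hasStrictDerivAt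
      have h2 : deriv ψ z0 = (p 1) fun _ => 1 := h1.hasDerivAt.deriv
      rwa [h2]
    have hcontr : ¬ DifferentiableAt ℂ (fun z => h (ψ z)) z0 := by
      intro hcomp
      apply hh
      have hE := hstrict.hasStrictFDerivAt_equiv hd
      have hinv : ∀ᶠ y in 𝓝 (ψ z0), ψ (hE.localInverse ψ _ z0 y) = y :=
        hE.eventually_right_inverse
      have hgd : DifferentiableAt ℂ (hE.localInverse ψ _ z0) (ψ z0) :=
        hE.to_localInverse.differentiableAt
      have hgz : hE.localInverse ψ _ z0 (ψ z0) = z0 := hE.localInverse_apply_image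
      have hEq : (fun y => h (ψ (hE.localInverse ψ _ z0 y))) =ᶠ[𝓝 (ψ z0)] h :=
        hinv.mono fun y hy => by simp only [hy]
      have hcomp' : DifferentiableAt ℂ (fun z => h (ψ z)) (hE.localInverse ψ _ z0 (ψ z0)) := by
        rw [hgz]; exact hcomp
      have hdiff : DifferentiableAt ℂ (fun y => h (ψ (hE.localInverse ψ _ z0 y))) (ψ z0) := by
        have := hcomp'.comp (ψ z0) hgd
        exact this
      exact (hEq.differentiableAt_iff).1 hdiff
    rw [deriv_zero_of_not_differentiableAt hh, deriv_zero_of_not_differentiableAt hcontr,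
      zero_mul]

/-- Clairaut / symmetry of the mixed complex partial derivatives for a holomorphic
function of two complex variables, proved via locally uniform convergence of
difference quotients (Cauchy integral estimates). -/
lemma clairaut_holo {U : Set (ℂ × ℂ)} (hU : IsOpen U) {F : ℂ × ℂ → ℂ}
    (hF : DifferentiableOn ℂ F U) {x0 y0 : ℂ} (hq : (x0, y0) ∈ U) :
    deriv (fun x => deriv (fun y => F (x, y)) y0) x0
      = deriv (fun y => deriv (fun x => F (x, y)) x0) y0 := by
  obtain ⟨ε, hε, hball⟩ := Metric.isOpen_iff.1 hU (x0, y0) hq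
  set r := ε / 2 with hrdef
  have hr0 : 0 < r := by positivity
  have hrsub : closedBall x0 r ×ˢ closedBall y0 r ⊆ U := by
    rw [closedBall_prod_same]
    refine (Metric.closedBall_subset_ball ?_).trans hball
    rw [hrdef]; linarith
  have hmem : ∀ {z w : ℂ}, z ∈ closedBall x0 r → w ∈ closedBall y0 r → (z, w) ∈ U :=
    fun hz hw => hrsub (Set.mk_mem_prod hz hw)
  obtain ⟨M, hM⟩ := ((isCompact_closedBall x0 r).prod
    (isCompact_closedBall y0 r)).exists_bound_of_continuousOn (hF.continuousOn.mono hrsub)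
  set C0 := max M 0 with hC0def
  have hC0 : ∀ z w : ℂ, z ∈ closedBall x0 r → w ∈ closedBall y0 r → ‖F (z, w)‖ ≤ C0 :=
    fun z w hz hw => le_trans (hM _ (Set.mk_mem_prod hz hw)) (le_max_left _ _)
  set g : ℂ → ℂ := fun z => deriv (fun y => F (z, y)) y0 with hgdef
  set Φ : ℂ → ℂ → ℂ := fun w z => (w - y0)⁻¹ * (F (z, w) - F (z, y0)) with hΦdef
  have h2πI : (2 * ↑Real.pi * I : ℂ) ≠ 0 := by
    simp [Real.pi_ne_zero, I_ne_zero]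
  -- key uniform estimate
  have key : ∀ w ∈ ball y0 (r / 2), w ≠ y0 → ∀ z ∈ closedBall x0 r,
      ‖Φ w z - g z‖ ≤ r * (‖w - y0‖ * ((2 / r) * ((r⁻¹ * r⁻¹) * C0))) := by
    intro w hw hwne z hz
    set f : ℂ → ℂ := fun y => F (z, y) with hfdef
    have hfd : DifferentiableOn ℂ f (closedBall y0 r) := fun y hy =>
      (sliceDiffAt_snd hU hF (hmem hz hy)).differentiableWithinAt
    have hwb : w ∈ ball y0 r := ball_subset_ball (by linarith) hw
    have I1 : (∮ ζ in C(y0, r), (ζ - w)⁻¹ • f ζ) = (2 * ↑Real.pi * I) • f w :=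
      hfd.circleIntegral_sub_inv_smul hwb
    have I2 : (∮ ζ in C(y0, r), (ζ - y0)⁻¹ • f ζ) = (2 * ↑Real.pi * I) • f y0 :=
      hfd.circleIntegral_sub_inv_smul (mem_ball_self hr0)
    have I3 : deriv f y0
        = (2 * ↑Real.pi * I)⁻¹ • ∮ ζ in C(y0, r), ((ζ - y0) ^ (-2 : ℤ)) • f ζ :=
      by
        have h := hfd.deriv_eq_smul_circleIntegral hr0
        rw [show (fun ζ => (ζ - y0) ^ (-2 : ℤ) • f ζ) = fun ζ => (1 / (ζ - y0) ^ 2) • f ζ from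
          funext fun ζ => by rw [zpow_neg, one_div, zpow_two, pow_two]]
        rw [h, smul_smul, inv_mul_cancel₀ h2πI, one_smul]
    have hzpow : ∀ ζ : ℂ, ((ζ - y0) ^ (-2 : ℤ) : ℂ) = ((ζ - y0) * (ζ - y0))⁻¹ := by
      intro ζ; rw [zpow_neg, zpow_two]
    have I3' : (∮ ζ in C(y0, r), ((ζ - y0) * (ζ - y0))⁻¹ • f ζ)
        = (2 * ↑Real.pi * I) • deriv f y0 := by
      rw [I3, smul_smul, mul_inv_cancel₀ h2πI, one_smul]
      congr 1
      funext ζ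
      rw [hzpow]
    have hfc : ContinuousOn f (sphere y0 r) :=
      hfd.continuousOn.mono sphere_subset_closedBall
    have hζw : ∀ ζ ∈ sphere y0 r, ζ - w ≠ 0 := by
      intro ζ hζ
      have h1 : dist ζ y0 = r := mem_sphere.mp hζ
      have h2 : dist w y0 < r / 2 := mem_ball.mp hw
      have h3 := dist_triangle ζ w y0
      have : (0 : ℝ) < dist ζ w := by linarith
      exact sub_ne_zero.2 (dist_pos.mp this)
    have hζy : ∀ ζ ∈ sphere y0 r, ζ - y0 ≠ 0 := by
      intro ζ hζ
      have h1 : dist ζ y0 = r := mem_sphere.mp hζ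
      intro hcon
      rw [sub_eq_zero] at hcon
      rw [hcon] at h1
      simp at h1
      linarith
    have hc1 : CircleIntegrable (fun ζ => (ζ - w)⁻¹ • f ζ) y0 r :=
      ContinuousOn.circleIntegrable hr0.le
        ((((continuous_id.sub continuous_const).continuousOn).inv₀ hζw).smul hfc)
    have hc2 : CircleIntegrable (fun ζ => (ζ - y0)⁻¹ • f ζ) y0 r :=
      ContinuousOn.circleIntegrable hr0.le
        ((((continuous_id.sub continuous_const).continuousOn).inv₀ hζy).smul hfc)
    have hc3 : CircleIntegrable (fun ζ => ((ζ - y0) * (ζ - y0))⁻¹ • f ζ) y0 r :=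
      ContinuousOn.circleIntegrable hr0.le
        (((((continuous_id.sub continuous_const).mul
            (continuous_id.sub continuous_const)).continuousOn).inv₀
          (fun ζ hζ => mul_ne_zero (hζy ζ hζ) (hζy ζ hζ))).smul hfc)
    have hc12 : CircleIntegrable
        (fun ζ => (w - y0)⁻¹ • ((ζ - w)⁻¹ • f ζ - (ζ - y0)⁻¹ • f ζ)) y0 r :=
      ContinuousOn.circleIntegrable hr0.le
        ((((((continuous_id.sub continuous_const).continuousOn).inv₀ hζw).smul hfc).sub
          ((((continuous_id.sub continuous_const).continuousOn).inv₀ hζy).smul hfc)).const_smul ((w - y0)⁻¹))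
    set K : ℂ → ℂ :=
      fun ζ => (w - y0)⁻¹ * ((ζ - w)⁻¹ - (ζ - y0)⁻¹) - ((ζ - y0) * (ζ - y0))⁻¹ with hKdef
    have split : (∮ ζ in C(y0, r), K ζ • f ζ)
        = (w - y0)⁻¹ • ((∮ ζ in C(y0, r), (ζ - w)⁻¹ • f ζ)
            - ∮ ζ in C(y0, r), (ζ - y0)⁻¹ • f ζ)
          - ∮ ζ in C(y0, r), ((ζ - y0) * (ζ - y0))⁻¹ • f ζ := by
      rw [← circleIntegral.integral_sub hc1 hc2, ← circleIntegral.integral_smul,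
        ← circleIntegral.integral_sub hc12 hc3]
      congr 1
      funext ζ
      simp only [hKdef, smul_eq_mul]
      ring
    have comb : Φ w z - g z = (2 * ↑Real.pi * I)⁻¹ • ∮ ζ in C(y0, r), K ζ • f ζ := by
      rw [split, I1, I2, I3']
      have hΦwz : Φ w z = (w - y0)⁻¹ * (f w - f y0) := rfl
      have hgz : g z = deriv f y0 := rfl
      rw [hΦwz, hgz]
      have hwy : (w - y0 : ℂ) ≠ 0 := sub_ne_zero.2 hwne
      simp only [smul_eq_mul]
      field_simp
    have hb : ∀ ζ ∈ sphere y0 r,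
        ‖K ζ • f ζ‖ ≤ ‖w - y0‖ * ((2 / r) * ((r⁻¹ * r⁻¹) * C0)) := by
      intro ζ hζ
      have h1 : dist ζ y0 = r := mem_sphere.mp hζ
      have hny : ‖ζ - y0‖ = r := by rw [← dist_eq_norm]; exact h1
      have h2 : ‖w - y0‖ < r / 2 := by rw [← dist_eq_norm]; exact mem_ball.mp hw
      have hnw : r / 2 ≤ ‖ζ - w‖ := by
        have t : ‖ζ - y0‖ ≤ ‖ζ - w‖ + ‖w - y0‖ := by
          simpa [sub_add_sub_cancel] using norm_add_le (ζ - w) (w - y0)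
        rw [hny] at t; linarith
      have hKval : K ζ = (w - y0) * ((ζ - w)⁻¹ * ((ζ - y0) * (ζ - y0))⁻¹) := by
        have hw0 : (w - y0 : ℂ) ≠ 0 := sub_ne_zero.2 hwne
        have hζw' := hζw ζ hζ
        have hζy' := hζy ζ hζ
        rw [hKdef]
        field_simp
        ring
      have hfb : ‖f ζ‖ ≤ C0 := hC0 z ζ hz (sphere_subset_closedBall hζ)
      have hfnn : (0 : ℝ) ≤ ‖f ζ‖ := norm_nonneg _
      have hinv : ‖ζ - w‖⁻¹ ≤ 2 / r := by
        rw [show (2 / r : ℝ) = (r / 2)⁻¹ by rw [inv_div]]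
        exact inv_anti₀ (by positivity) hnw
      calc ‖K ζ • f ζ‖ = ‖w - y0‖ * (‖ζ - w‖⁻¹ * ((r⁻¹ * r⁻¹) * ‖f ζ‖)) := by
            rw [smul_eq_mul, hKval, norm_mul, norm_mul, norm_mul, norm_inv, norm_inv,
              norm_mul, hny]
            ring
        _ ≤ ‖w - y0‖ * ((2 / r) * ((r⁻¹ * r⁻¹) * C0)) := by
            have hrinn : (0:ℝ) ≤ r⁻¹ * r⁻¹ := by positivity
            gcongr
    calc ‖Φ w z - g z‖
        = ‖(2 * ↑Real.pi * I)⁻¹ • ∮ ζ in C(y0, r), K ζ • f ζ‖ := by rw [comb]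
      _ ≤ r * (‖w - y0‖ * ((2 / r) * ((r⁻¹ * r⁻¹) * C0))) :=
          circleIntegral.norm_two_pi_i_inv_smul_integral_le_of_norm_le_const hr0.le hb
  have hC0nn : (0 : ℝ) ≤ C0 := le_max_right _ _
  have hev1 : ∀ᶠ w in 𝓝 y0, w ∈ ball y0 (r / 2) :=
    isOpen_ball.eventually_mem (mem_ball_self (by positivity))
  -- uniform convergence of difference quotients
  have TU : TendstoUniformlyOn Φ g (𝓝[≠] y0) (ball x0 r) := by
    rw [Metric.tendstoUniformlyOn_iff]
    intro ε' hε'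
    have hten : Tendsto (fun w : ℂ => r * (‖w - y0‖ * ((2 / r) * ((r⁻¹ * r⁻¹) * C0))))
        (𝓝 y0) (𝓝 0) := by
      have h1 : Tendsto (fun w : ℂ => ‖w - y0‖) (𝓝 y0) (𝓝 0) := by
        have hc : Continuous (fun w : ℂ => ‖w - y0‖) :=
          (continuous_id.sub continuous_const).norm
        have := hc.tendsto y0
        simpa using this
      have := (h1.mul_const ((2 / r) * ((r⁻¹ * r⁻¹) * C0))).const_mul r
      simpa using this
    have hev2 : ∀ᶠ w in 𝓝 y0,
        r * (‖w - y0‖ * ((2 / r) * ((r⁻¹ * r⁻¹) * C0))) < ε' :=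
      hten.eventually_lt_const hε'
    filter_upwards [hev2.filter_mono nhdsWithin_le_nhds,
      hev1.filter_mono nhdsWithin_le_nhds, eventually_mem_nhdsWithin] with w h2 h1 h3 z hzb
    rw [dist_comm, dist_eq_norm]
    calc ‖Φ w z - g z‖
        ≤ r * (‖w - y0‖ * ((2 / r) * ((r⁻¹ * r⁻¹) * C0))) :=
          key w h1 (by simpa using h3) z (ball_subset_closedBall hzb)
      _ < ε' := h2
  have hΦdiff : ∀ᶠ w in 𝓝[≠] y0, DifferentiableOn ℂ (Φ w) (ball x0 r) := by
    filter_upwards [hev1.filter_mono nhdsWithin_le_nhds] with w hw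
    intro z hz
    have hzc : z ∈ closedBall x0 r := ball_subset_closedBall hz
    have hwc : w ∈ closedBall y0 r :=
      ball_subset_closedBall (ball_subset_ball (by linarith) hw)
    have hy0c : y0 ∈ closedBall y0 r := mem_closedBall_self hr0.le
    exact (((sliceDiffAt_fst hU hF (hmem hzc hwc)).sub
      (sliceDiffAt_fst hU hF (hmem hzc hy0c))).const_mul _).differentiableWithinAt
  have TLU := (TU.tendstoLocallyUniformlyOn).deriv hΦdiff isOpen_ball
  have htend : Tendsto (fun w => deriv (Φ w) x0) (𝓝[≠] y0) (𝓝 (deriv g x0)) := by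
    have := TLU.tendsto_at (mem_ball_self hr0)
    simpa using this
  set k : ℂ → ℂ := fun w => deriv (fun x => F (x, w)) x0 with hkdef
  have hderivΦ : ∀ᶠ w in 𝓝[≠] y0, deriv (Φ w) x0 = (w - y0)⁻¹ * (k w - k y0) := by
    filter_upwards [hev1.filter_mono nhdsWithin_le_nhds] with w hw
    have hwc : w ∈ closedBall y0 r :=
      ball_subset_closedBall (ball_subset_ball (by linarith) hw)
    have hx0c : x0 ∈ closedBall x0 r := mem_closedBall_self hr0.le
    have hy0c : y0 ∈ closedBall y0 r := mem_closedBall_self hr0.le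
    have h1 : DifferentiableAt ℂ (fun x => F (x, w)) x0 :=
      sliceDiffAt_fst hU hF (hmem hx0c hwc)
    have h2 : DifferentiableAt ℂ (fun x => F (x, y0)) x0 :=
      sliceDiffAt_fst hU hF (hmem hx0c hy0c)
    have hstep : deriv (Φ w) x0
        = (w - y0)⁻¹ * deriv (fun z => F (z, w) - F (z, y0)) x0 :=
      deriv_const_mul_field _
    rw [hstep, deriv_fun_sub h1 h2]
  have htend2 : Tendsto (slope k y0) (𝓝[≠] y0) (𝓝 (deriv g x0)) := by
    refine (htend.congr' hderivΦ).congr' ?_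
    filter_upwards with w
    rw [slope_def_field, div_eq_inv_mul]
  have hk : HasDerivAt k (deriv g x0) y0 := hasDerivAt_iff_tendsto_slope.2 htend2
  exact hk.deriv.symm

/-- easy direction: diagonal Möbius maps T = (ψ, ψ) and their flips
T = (ψ ∘ swap) map into G₀ and leave the Laplacian (z−w)²∂_z∂_w invariant. -/
theorem moebius_leaves_laplacian_invariant
    (a b c d : ℂ) (hmob : a * d - b * c ≠ 0)
    (ψ : ℂ → ℂ) (hψ : ∀ z : ℂ, c * z + d ≠ 0 → ψ z = (a * z + b) / (c * z + d))
    (O : Set (ℂ × ℂ)) (hO : IsOpen O)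
    (hOsub : O ⊆ {p : ℂ × ℂ | p.1 ≠ p.2 ∧ c * p.1 + d ≠ 0 ∧ c * p.2 + d ≠ 0})
    (T : ℂ × ℂ → ℂ × ℂ)
    (hT : (∀ p ∈ O, T p = (ψ p.1, ψ p.2)) ∨ (∀ p ∈ O, T p = (ψ p.2, ψ p.1))) :
    Set.MapsTo T O G0 ∧
    ∀ F : ℂ × ℂ → ℂ, DifferentiableOn ℂ F G0 →
      ∀ p ∈ O, (p.1 - p.2) ^ 2 * mixedDeriv (F ∘ T) p
        = ((T p).1 - (T p).2) ^ 2 * mixedDeriv F (T p) := by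
  set ψd : ℂ → ℂ := fun z => (a * d - b * c) / (c * z + d) ^ 2 with hψddef
  clear_value ψd
  have hVopen : IsOpen {z : ℂ | c * z + d ≠ 0} :=
    isOpen_ne_fun ((continuous_const.mul continuous_id).add continuous_const) continuous_const
  have hψHas : ∀ z : ℂ, c * z + d ≠ 0 → HasDerivAt ψ (ψd z) z := by
    intro z hz
    have hnum : HasDerivAt (fun z : ℂ => a * z + b) a z := by
      simpa using ((hasDerivAt_id z).const_mul a).add_const b
    have hden : HasDerivAt (fun z : ℂ => c * z + d) c z := by
      simpa using ((hasDerivAt_id z).const_mul c).add_const d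
    have hdiv := hnum.div hden hz
    have heq : ψ =ᶠ[𝓝 z] (fun x => (a * x + b) / (c * x + d)) := by
      filter_upwards [hVopen.eventually_mem hz] with x hx
      exact hψ x hx
    have hval : (a * (c * z + d) - (a * z + b) * c) / (c * z + d) ^ 2 = ψd z := by
      rw [hψddef]
      congr 1
      ring
    rw [← hval]
    exact hdiv.congr_of_eventuallyEq heq
  have hψdne : ∀ z : ℂ, c * z + d ≠ 0 → ψd z ≠ 0 := by
    intro z hz
    simp only [hψddef]
    exact div_ne_zero hmob (pow_ne_zero _ hz)
  have hsub : ∀ z w : ℂ, c * z + d ≠ 0 → c * w + d ≠ 0 → z ≠ w → ψ z ≠ ψ w := by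
    intro z w hz hw hzw hcon
    rw [hψ z hz, hψ w hw, div_eq_div_iff hz hw] at hcon
    have h0 : (a * d - b * c) * (z - w) = 0 := by linear_combination hcon
    rcases mul_eq_zero.1 h0 with h | h
    · exact hmob h
    · exact hzw (sub_eq_zero.1 h)
  have hkey : ∀ z w : ℂ, c * z + d ≠ 0 → c * w + d ≠ 0 →
      (ψ z - ψ w) ^ 2 = (z - w) ^ 2 * ψd z * ψd w := by
    intro z w hz hw
    rw [hψ z hz, hψ w hw, hψddef]
    have hz' : z * c + d ≠ 0 := by rwa [mul_comm]
    have hw' : w * c + d ≠ 0 := by rwa [mul_comm]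
    field_simp
    ring
  have hmap : Set.MapsTo T O G0 := by
    intro p hp
    obtain ⟨hne, hz, hw⟩ := hOsub hp
    rcases hT with hTd | hTf
    · rw [hTd p hp]
      exact hsub p.1 p.2 hz hw hne
    · rw [hTf p hp]
      exact hsub p.2 p.1 hw hz (Ne.symm hne)
  refine ⟨hmap, ?_⟩
  intro F hF p hp
  obtain ⟨z0, w0⟩ := p
  obtain ⟨hne0, hz0, hw0⟩ := hOsub hp
  simp only [] at hne0 hz0 hw0
  have hψev : ∀ x : ℂ, c * x + d ≠ 0 → ∀ᶠ z in 𝓝 x, DifferentiableAt ℂ ψ z := by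
    intro x hx
    filter_upwards [hVopen.eventually_mem hx] with y hy
    exact (hψHas y hy).differentiableAt
  have hOz : IsOpen {z : ℂ | (z, w0) ∈ O} :=
    hO.preimage (continuous_id.prodMk continuous_const)
  have hOw : ∀ z : ℂ, IsOpen {w : ℂ | (z, w) ∈ O} := fun z =>
    hO.preimage (continuous_const.prodMk continuous_id)
  have hz0O : z0 ∈ {z : ℂ | (z, w0) ∈ O} := hp
  have hdz : deriv ψ z0 = ψd z0 := (hψHas z0 hz0).deriv
  have hdzne : deriv ψ z0 ≠ 0 := by rw [hdz]; exact hψdne z0 hz0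
  rcases hT with hTd | hTf
  · -- diagonal case
    set g : ℂ → ℂ := fun x => deriv (fun y => F (x, y)) (ψ w0) with hgdef
    have hstep : ∀ᶠ z in 𝓝 z0,
        deriv (fun w => (F ∘ T) (z, w)) w0 = g (ψ z) * ψd w0 := by
      filter_upwards [hOz.eventually_mem hz0O] with z hzO
      obtain ⟨hzw, hzV, -⟩ := hOsub hzO
      have hinner : (fun w => (F ∘ T) (z, w)) =ᶠ[𝓝 w0] (fun w => F (ψ z, ψ w)) := by
        filter_upwards [(hOw z).eventually_mem hzO] with w hwO
        simp only [Function.comp_apply]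
        rw [hTd (z, w) hwO]
      rw [hinner.deriv_eq]
      have hTzG : (ψ z, ψ w0) ∈ G0 := hsub z w0 hzV hw0 hzw
      have hsl : DifferentiableAt ℂ (fun y => F (ψ z, y)) (ψ w0) :=
        sliceDiffAt_snd isOpen_G0 hF hTzG
      exact (hsl.hasDerivAt.comp w0 (hψHas w0 hw0)).deriv
    have houter : mixedDeriv (F ∘ T) (z0, w0) = deriv (fun z => g (ψ z) * ψd w0) z0 :=
      Filter.EventuallyEq.deriv_eq hstep
    have hmul : deriv (fun z => g (ψ z) * ψd w0) z0
        = deriv (fun z => g (ψ z)) z0 * ψd w0 := deriv_mul_const_field _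
    have hjunk : deriv (fun z => g (ψ z)) z0 = deriv g (ψ z0) * deriv ψ z0 :=
      deriv_comp_junk g (hψev z0 hz0) hdzne
    have hTp : T (z0, w0) = (ψ z0, ψ w0) := hTd (z0, w0) hp
    have hRHS : mixedDeriv F (T (z0, w0)) = deriv g (ψ z0) := by
      rw [hTp]; rfl
    have hk := hkey z0 w0 hz0 hw0
    simp only [hTp]
    rw [show mixedDeriv (F ∘ T) ((z0, w0) : ℂ × ℂ) = deriv g (ψ z0) * deriv ψ z0 * ψd w0 by
      rw [houter, hmul, hjunk]]
    rw [show mixedDeriv F ((ψ z0, ψ w0) : ℂ × ℂ) = deriv g (ψ z0) from by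
      rw [← hTp]; exact hRHS]
    rw [hdz]
    linear_combination (-(deriv g (ψ z0))) * hk
  · -- flipped case
    set k : ℂ → ℂ := fun y => deriv (fun x => F (x, y)) (ψ w0) with hkdef
    have hstep : ∀ᶠ z in 𝓝 z0,
        deriv (fun w => (F ∘ T) (z, w)) w0 = k (ψ z) * ψd w0 := by
      filter_upwards [hOz.eventually_mem hz0O] with z hzO
      obtain ⟨hzw, hzV, -⟩ := hOsub hzO
      have hinner : (fun w => (F ∘ T) (z, w)) =ᶠ[𝓝 w0] (fun w => F (ψ w, ψ z)) := by
        filter_upwards [(hOw z).eventually_mem hzO] with w hwO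
        simp only [Function.comp_apply]
        rw [hTf (z, w) hwO]
      rw [hinner.deriv_eq]
      have hTzG : (ψ w0, ψ z) ∈ G0 := hsub w0 z hw0 hzV (Ne.symm hzw)
      have hsl : DifferentiableAt ℂ (fun x => F (x, ψ z)) (ψ w0) :=
        sliceDiffAt_fst isOpen_G0 hF hTzG
      exact (hsl.hasDerivAt.comp w0 (hψHas w0 hw0)).deriv
    have houter : mixedDeriv (F ∘ T) (z0, w0) = deriv (fun z => k (ψ z) * ψd w0) z0 :=
      Filter.EventuallyEq.deriv_eq hstep
    have hmul : deriv (fun z => k (ψ z) * ψd w0) z0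
        = deriv (fun z => k (ψ z)) z0 * ψd w0 := deriv_mul_const_field _
    have hjunk : deriv (fun z => k (ψ z)) z0 = deriv k (ψ z0) * deriv ψ z0 :=
      deriv_comp_junk k (hψev z0 hz0) hdzne
    have hTp : T (z0, w0) = (ψ w0, ψ z0) := hTf (z0, w0) hp
    have hG : (ψ w0, ψ z0) ∈ G0 := hsub w0 z0 hw0 hz0 (Ne.symm hne0)
    have hsym : mixedDeriv F (T (z0, w0)) = deriv k (ψ z0) := by
      rw [hTp]
      exact clairaut_holo isOpen_G0 hF hG
    have hk := hkey z0 w0 hz0 hw0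
    simp only [hTp]
    rw [show mixedDeriv (F ∘ T) ((z0, w0) : ℂ × ℂ) = deriv k (ψ z0) * deriv ψ z0 * ψd w0 by
      rw [houter, hmul, hjunk]]
    rw [show mixedDeriv F ((ψ w0, ψ z0) : ℂ × ℂ) = deriv k (ψ z0) from by
      rw [← hTp]; exact hsym]
    rw [hdz]
    linear_combination (-(deriv k (ψ z0))) * hk
end

section
/- Let a,b,c,d ∈ ℂ with ad − bc ≠ 0, set ψ(z) = (az+b)/(cz+d) and σ(w) = (dw+c)/(bw+a). Let O ⊆ {(z,w) ∈ ℂ × ℂ : zw ≠ 1, cz+d ≠ 0, bw+a ≠ 0} be open and define T(z,w) = (ψ(z), σ(w)). Then ψ(z)·σ(w) ≠ 1 for all (z,w) ∈ O, and for every holomorphic function F : Ω₀ → ℂ and every (z,w) ∈ O, (1 − zw)² · ∂_z∂_w(F ∘ T)(z,w) = (1 − ψ(z)σ(w))² · (∂₁∂₂F)(T(z,w)). Moreover, ψ′(z)·σ′(w)·(1 − zw)² = (1 − ψ(z)σ(w))² for all z,w ∈ ℂ with cz+d ≠ 0 and bw+a ≠ 0. -/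
open Complex
open Complex Metric Set MeasureTheory intervalIntegral
open scoped Real Topology

lemma mob_hasDerivAt (a b c d z : ℂ) (h : c*z+d ≠ 0) :
    HasDerivAt (fun z => (a*z+b)/(c*z+d)) ((a*d-b*c)/(c*z+d)^2) z := by
  have h1 : HasDerivAt (fun z : ℂ => a*z+b) a z := by
    simpa using ((hasDerivAt_id z).const_mul a).add_const b
  have h2 : HasDerivAt (fun z : ℂ => c*z+d) c z := by
    simpa using ((hasDerivAt_id z).const_mul c).add_const d
  have := h1.div h2 h
  refine this.congr_deriv ?_
  ring

lemma key_id (a b c d z w : ℂ) (hc : c*z+d ≠ 0) (hb : b*w+a ≠ 0) :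
    1 - (a*z+b)/(c*z+d) * ((d*w+c)/(b*w+a)) = (a*d-b*c)*(1-z*w)/((c*z+d)*(b*w+a)) := by
  rw [div_mul_div_comm, one_sub_div (mul_ne_zero hc hb)]
  congr 1
  ring


/-- partial derivative in first variable of a jointly differentiable function -/
lemma hasDerivAt_fst (F : ℂ × ℂ → ℂ) {u v : ℂ} (h : DifferentiableAt ℂ F (u, v)) :
    HasDerivAt (fun u' => F (u', v)) (fderiv ℂ F (u, v) (1, 0)) u := by
  have h1 : HasDerivAt (fun u' : ℂ => (u', v)) ((1 : ℂ), (0 : ℂ)) u := by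
    simpa using (hasDerivAt_id u).prodMk (hasDerivAt_const u v)
  exact h.hasFDerivAt.comp_hasDerivAt u h1

lemma hasDerivAt_snd (F : ℂ × ℂ → ℂ) {u v : ℂ} (h : DifferentiableAt ℂ F (u, v)) :
    HasDerivAt (fun v' => F (u, v')) (fderiv ℂ F (u, v) (0, 1)) v := by
  have h1 : HasDerivAt (fun v' : ℂ => (u, v')) ((0 : ℂ), (1 : ℂ)) v := by
    simpa using (hasDerivAt_const v u).prodMk (hasDerivAt_id v)
  exact h.hasFDerivAt.comp_hasDerivAt v h1

lemma diff_partial2 (F : ℂ × ℂ → ℂ) {U : Set (ℂ × ℂ)} (hU : IsOpen U)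
    (hF : DifferentiableOn ℂ F U) {u₀ v₀ : ℂ} (h : (u₀, v₀) ∈ U) :
    DifferentiableAt ℂ (fun u => deriv (fun v => F (u, v)) v₀) u₀ := by
  -- choose r with the product of closed balls of radius 2r inside U
  obtain ⟨ε, hε, hball⟩ := Metric.isOpen_iff.mp hU (u₀, v₀) h
  set r : ℝ := ε / 5 with hr_def
  have hr : 0 < r := by positivity
  have hK : closedBall u₀ (2 * r) ×ˢ closedBall v₀ (2 * r) ⊆ U := by
    rw [closedBall_prod_same]
    refine subset_trans (closedBall_subset_ball ?_) hball
    rw [hr_def]; linarith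
  -- differentiability at points of the product
  have hFd : ∀ {u v : ℂ}, u ∈ closedBall u₀ (2 * r) → v ∈ closedBall v₀ (2 * r) →
      DifferentiableAt ℂ F (u, v) := by
    intro u v hu hv
    exact (hF.differentiableAt (hU.mem_nhds (hK (mk_mem_prod hu hv))))
  -- bound on F
  obtain ⟨M, hM⟩ := (isCompact_closedBall u₀ (2 * r) |>.prod
    (isCompact_closedBall v₀ (2 * r))).exists_bound_of_continuousOn
    ((hF.mono hK).continuousOn)
  -- notation
  set D : ℂ → ℂ → ℂ := fun u v => fderiv ℂ F (u, v) (1, 0) with hD_def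
  set cm : ℝ → ℂ := circleMap v₀ r with hcm
  set cc : ℝ → ℂ := fun θ => deriv (circleMap v₀ r) θ * ((cm θ - v₀) ^ 2)⁻¹ with hcc
  set φ : ℂ → ℝ → ℂ := fun u θ => cc θ * F (u, cm θ) with hφ
  set φ' : ℂ → ℝ → ℂ := fun u θ => cc θ * D u (cm θ) with hφ'
  have hmem_sph : ∀ θ, cm θ ∈ sphere v₀ r := fun θ => circleMap_mem_sphere v₀ hr.le θ
  have hmem_cm : ∀ θ, cm θ ∈ closedBall v₀ (2 * r) := fun θ =>
    closedBall_subset_closedBall (by linarith) (sphere_subset_closedBall (hmem_sph θ))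
  -- continuity of cc
  have hcc_cont : Continuous cc := by
    have h0 : ∀ θ, (cm θ - v₀) ≠ 0 := by
      intro θ
      rw [hcm, circleMap_sub_center]
      simpa using circleMap_ne_center (ne_of_gt hr) (c := v₀) (θ := θ)
    have : Continuous fun θ => (cm θ - v₀) := by
      rw [hcm]; exact (continuous_circleMap v₀ r).sub continuous_const
    refine Continuous.mul ?_ (((this.pow 2).inv₀ (fun θ => pow_ne_zero 2 (h0 θ))))
    exact ((continuous_circleMap 0 r).mul continuous_const).congr
      fun θ => (deriv_circleMap v₀ r θ).symm
  have hcm_cont : Continuous cm := continuous_circleMap v₀ r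
  -- norm of cc
  have hcc_norm : ∀ θ, ‖cc θ‖ = r⁻¹ := by
    intro θ
    rw [hcc]
    simp only [deriv_circleMap, hcm, circleMap_sub_center, norm_mul, norm_inv, norm_pow]
    rw [show ‖circleMap 0 r θ‖ = r by simpa [abs_of_pos hr] using abs_circleMap_zero r θ]
    simp [norm_I]
    field_simp
  -- bound on D
  have hr2 : (0:ℝ) < r / 2 := by positivity
  have hDbound : ∀ u ∈ ball u₀ r, ∀ θ : ℝ, ‖D u (cm θ)‖ ≤ M / (r / 2) := by
    intro u hu θ
    have hu2 : u ∈ closedBall u₀ (2 * r) := by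
      have := mem_ball.mp hu
      simp only [mem_closedBall]
      rw [dist_comm] at this ⊢
      linarith [this.le]
    have hdf : DifferentiableOn ℂ (fun u' => F (u', cm θ)) (ball u₀ (2 * r)) := by
      intro u' hu'
      exact ((hasDerivAt_fst F (hFd (ball_subset_closedBall hu') (hmem_cm θ))).differentiableAt).differentiableWithinAt
    have hsub : closedBall u (r / 2) ⊆ ball u₀ (2 * r) := by
      intro x hx
      have h1 : dist x u ≤ r / 2 := mem_closedBall.mp hx
      have h2 : dist u u₀ < r := mem_ball.mp hu
      have := dist_triangle x u u₀
      simp only [mem_ball]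
      linarith
    have heq : Complex.cderiv (r / 2) (fun u' => F (u', cm θ)) u
        = deriv (fun u' => F (u', cm θ)) u :=
      Complex.cderiv_eq_deriv isOpen_ball hdf hr2 hsub
    have hDeq : deriv (fun u' => F (u', cm θ)) u = D u (cm θ) :=
      (hasDerivAt_fst F (hFd hu2 (hmem_cm θ))).deriv
    rw [← hDeq, ← heq]
    refine Complex.norm_cderiv_le hr2 ?_
    intro u' hu'
    refine hM (u', cm θ) (mk_mem_prod ?_ (hmem_cm θ))
    have h1 : dist u' u = r / 2 := mem_sphere.mp hu'
    have h2 : dist u u₀ < r := mem_ball.mp hu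
    have := dist_triangle u' u u₀
    simp only [mem_closedBall]
    linarith
  -- measurability of φ' u₀
  have hDmeas : Measurable fun θ => D u₀ (cm θ) := by
    have m1 : Measurable (fderiv ℂ F) := measurable_fderiv ℂ F
    have m2 : Continuous fun θ => ((u₀ : ℂ), cm θ) := by fun_prop
    exact ((ContinuousLinearMap.apply ℂ ℂ ((1 : ℂ), (0 : ℂ))).continuous.measurable).comp
      (m1.comp m2.measurable)
  -- continuity of φ u for u in the ball
  have hφcont : ∀ u ∈ ball u₀ r, Continuous (φ u) := by
    intro u hu
    have hu2 : u ∈ closedBall u₀ (2 * r) := by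
      have := mem_ball.mp hu
      simp only [mem_closedBall]
      rw [dist_comm] at this ⊢
      linarith [this.le]
    refine hcc_cont.mul (continuous_iff_continuousAt.mpr fun θ => ?_)
    exact ContinuousAt.comp (f := fun θ : ℝ => (u, cm θ)) (x := θ)
      ((hFd hu2 (hmem_cm θ)).continuousAt)
      ((continuous_const.prodMk hcm_cont).continuousAt)
  have hu₀ball : u₀ ∈ ball u₀ r := mem_ball_self hr
  -- differentiate under the integral
  have key := intervalIntegral.hasDerivAt_integral_of_dominated_loc_of_deriv_le
    (μ := MeasureTheory.volume) (a := (0:ℝ)) (b := 2 * π)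
    (F := φ) (F' := φ') (x₀ := u₀) (bound := fun _ => r⁻¹ * (M / (r / 2))) (ball_mem_nhds u₀ hr)
    (Filter.eventually_of_mem (ball_mem_nhds u₀ hr) fun u hu =>
      ((hφcont u hu).aestronglyMeasurable))
    ((hφcont u₀ hu₀ball).intervalIntegrable 0 (2 * π))
    (((hcc_cont.measurable).mul hDmeas).aestronglyMeasurable)
    (Filter.Eventually.of_forall fun θ _ u hu => by
      rw [hφ']
      simp only [norm_mul, hcc_norm θ]
      exact mul_le_mul_of_nonneg_left (hDbound u hu θ) (by positivity))
    (intervalIntegrable_const)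
    (Filter.Eventually.of_forall fun θ _ u hu =>
      (hasDerivAt_fst F (hFd (by
        have := mem_ball.mp hu
        simp only [mem_closedBall]
        rw [dist_comm] at this ⊢
        linarith [this.le]) (hmem_cm θ))).const_mul (cc θ))
  -- representation of the inner deriv as the integral
  have hrep : ∀ u ∈ ball u₀ r,
      deriv (fun v => F (u, v)) v₀ = (2 * π * Complex.I)⁻¹ • ∫ θ in (0:ℝ)..2 * π, φ u θ := by
    intro u hu
    have hu2 : u ∈ closedBall u₀ (2 * r) := by
      have := mem_ball.mp hu
      simp only [mem_closedBall]
      rw [dist_comm] at this ⊢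
      linarith [this.le]
    have hdf : DifferentiableOn ℂ (fun v => F (u, v)) (ball v₀ (2 * r)) := by
      intro v hv
      exact ((hasDerivAt_snd F (hFd hu2 (ball_subset_closedBall hv))).differentiableAt).differentiableWithinAt
    have heq : Complex.cderiv r (fun v => F (u, v)) v₀ = deriv (fun v => F (u, v)) v₀ :=
      Complex.cderiv_eq_deriv isOpen_ball hdf hr
        (closedBall_subset_ball (by linarith))
    rw [← heq, Complex.cderiv, circleIntegral]
    congr 1
    refine intervalIntegral.integral_congr fun θ _ => ?_
    rw [hφ, hcc, hcm]
    simp only [smul_eq_mul]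
    ring
  have heq : (fun u => deriv (fun v => F (u, v)) v₀)
      =ᶠ[𝓝 u₀] fun u => (2 * π * Complex.I)⁻¹ • ∫ θ in (0:ℝ)..2 * π, φ u θ :=
    Filter.eventually_of_mem (ball_mem_nhds u₀ hr) hrep
  rw [Filter.EventuallyEq.differentiableAt_iff heq]
  exact (key.2.differentiableAt).const_smul ((2 * π * Complex.I)⁻¹)


lemma isOpen_Omega0 : IsOpen Omega0 :=
  isOpen_ne_fun (continuous_fst.mul continuous_snd) continuous_const

/-- easy direction: for ψ(z) = (az+b)/(cz+d) and σ(w) = (dw+c)/(bw+a)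
(with ad − bc ≠ 0), the map T = (ψ, σ) maps into Ω₀ and leaves the canonical Laplacian
(1−zw)²∂_z∂_w invariant; moreover ψ′(z)σ′(w)(1−zw)² = (1−ψ(z)σ(w))². -/
theorem moebius_leaves_laplacian_invariant_omega
    (a b c d : ℂ) (hmob : a * d - b * c ≠ 0)
    (ψ σ : ℂ → ℂ)
    (hψ : ∀ z : ℂ, c * z + d ≠ 0 → ψ z = (a * z + b) / (c * z + d))
    (hσ : ∀ w : ℂ, b * w + a ≠ 0 → σ w = (d * w + c) / (b * w + a))
    (O : Set (ℂ × ℂ)) (hO : IsOpen O)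
    (hOsub : O ⊆ {p : ℂ × ℂ | p.1 * p.2 ≠ 1 ∧ c * p.1 + d ≠ 0 ∧ b * p.2 + a ≠ 0})
    (T : ℂ × ℂ → ℂ × ℂ) (hT : ∀ p ∈ O, T p = (ψ p.1, σ p.2)) :
    (∀ p ∈ O, ψ p.1 * σ p.2 ≠ 1) ∧
    (∀ F : ℂ × ℂ → ℂ, DifferentiableOn ℂ F Omega0 →
      ∀ p ∈ O, (1 - p.1 * p.2) ^ 2 * mixedDeriv (F ∘ T) p
        = (1 - ψ p.1 * σ p.2) ^ 2 * mixedDeriv F (T p)) ∧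
    (∀ z w : ℂ, c * z + d ≠ 0 → b * w + a ≠ 0 →
      deriv ψ z * deriv σ w * (1 - z * w) ^ 2 = (1 - ψ z * σ w) ^ 2) := by
  -- derivatives of ψ and σ
  have hψd : ∀ z : ℂ, c * z + d ≠ 0 → HasDerivAt ψ ((a*d-b*c)/(c*z+d)^2) z := by
    intro z hz
    have hopen : IsOpen {z : ℂ | c * z + d ≠ 0} :=
      isOpen_ne_fun (by fun_prop) continuous_const
    have hev : (fun z => (a*z+b)/(c*z+d)) =ᶠ[nhds z] ψ := by
      filter_upwards [hopen.mem_nhds hz] with x hx using (hψ x hx).symm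
    exact (mob_hasDerivAt a b c d z hz).congr_of_eventuallyEq hev.symm
  have hσd : ∀ w : ℂ, b * w + a ≠ 0 → HasDerivAt σ ((a*d-b*c)/(b*w+a)^2) w := by
    intro w hw
    have hopen : IsOpen {w : ℂ | b * w + a ≠ 0} :=
      isOpen_ne_fun (by fun_prop) continuous_const
    have hev : (fun w => (d*w+c)/(b*w+a)) =ᶠ[nhds w] σ := by
      filter_upwards [hopen.mem_nhds hw] with x hx using (hσ x hx).symm
    have := mob_hasDerivAt d c b a w hw
    have h2 : HasDerivAt (fun w => (d*w+c)/(b*w+a)) ((a*d-b*c)/(b*w+a)^2) w := by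
      convert this using 2 <;> ring
    exact h2.congr_of_eventuallyEq hev.symm
  -- part 1
  have part1 : ∀ p ∈ O, ψ p.1 * σ p.2 ≠ 1 := by
    intro p hp
    obtain ⟨h1, h2, h3⟩ := hOsub hp
    have hne : (a*d-b*c) * (1 - p.1 * p.2) / ((c*p.1+d) * (b*p.2+a)) ≠ 0 :=
      div_ne_zero (mul_ne_zero hmob (sub_ne_zero.mpr (Ne.symm h1))) (mul_ne_zero h2 h3)
    have hsub : 1 - ψ p.1 * σ p.2 ≠ 0 := by
      rw [hψ _ h2, hσ _ h3, key_id a b c d p.1 p.2 h2 h3]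
      exact hne
    intro hcon
    exact hsub (by rw [hcon, sub_self])
  -- part 3
  have part3 : ∀ z w : ℂ, c * z + d ≠ 0 → b * w + a ≠ 0 →
      deriv ψ z * deriv σ w * (1 - z * w) ^ 2 = (1 - ψ z * σ w) ^ 2 := by
    intro z w hcz hbw
    rw [(hψd z hcz).deriv, (hσd w hbw).deriv, hψ z hcz, hσ w hbw,
      key_id a b c d z w hcz hbw]
    field_simp
  refine ⟨part1, ?_, part3⟩
  -- part 2
  intro F hF p hp
  obtain ⟨z₀, w₀⟩ := p
  obtain ⟨h1, h2, h3⟩ := hOsub hp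
  have hq : (ψ z₀, σ w₀) ∈ Omega0 := by
    have := part1 _ hp
    simpa [Omega0] using this
  set G : ℂ → ℂ := fun u => deriv (fun v => F (u, v)) (σ w₀) with hG
  have hGdiff : DifferentiableAt ℂ G (ψ z₀) := diff_partial2 F isOpen_Omega0 hF hq
  -- Step A: the inner derivative
  have stepA : ∀ z : ℂ, (z, w₀) ∈ O →
      deriv (fun w => (F ∘ T) (z, w)) w₀ = (a*d-b*c)/(b*w₀+a)^2 * G (ψ z) := by
    intro z hz
    obtain ⟨hz1, hz2, hz3⟩ := hOsub hz
    have hqz : (ψ z, σ w₀) ∈ Omega0 := by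
      have := part1 _ hz
      simpa [Omega0] using this
    have hFq : DifferentiableAt ℂ F (ψ z, σ w₀) :=
      hF.differentiableAt (isOpen_Omega0.mem_nhds hqz)
    -- eventual equality in w
    have hOw : IsOpen {w : ℂ | (z, w) ∈ O} := hO.preimage (Continuous.prodMk_right z)
    have hev : (fun w => (F ∘ T) (z, w)) =ᶠ[nhds w₀] fun w => F (ψ z, σ w) := by
      filter_upwards [hOw.mem_nhds hz] with w hw
      simp [Function.comp, hT _ hw]
    rw [hev.deriv_eq]
    -- chain rule in w
    have hpair : HasDerivAt (fun w => (ψ z, σ w)) ((0 : ℂ), (a*d-b*c)/(b*w₀+a)^2) w₀ :=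
      (hasDerivAt_const w₀ (ψ z)).prodMk (hσd w₀ hz3)
    have hcomp : HasDerivAt (fun w => F (ψ z, σ w))
        (fderiv ℂ F (ψ z, σ w₀) ((0 : ℂ), (a*d-b*c)/(b*w₀+a)^2)) w₀ :=
      hFq.hasFDerivAt.comp_hasDerivAt w₀ hpair
    have hsm : fderiv ℂ F (ψ z, σ w₀) ((0 : ℂ), (a*d-b*c)/(b*w₀+a)^2)
        = (a*d-b*c)/(b*w₀+a)^2 * fderiv ℂ F (ψ z, σ w₀) ((0 : ℂ), (1 : ℂ)) := by
      rw [show ((0 : ℂ), (a*d-b*c)/(b*w₀+a)^2) = ((a*d-b*c)/(b*w₀+a)^2) • ((0:ℂ), (1:ℂ)) by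
        simp]
      rw [ContinuousLinearMap.map_smul]
      simp
    have hGval : G (ψ z) = fderiv ℂ F (ψ z, σ w₀) ((0 : ℂ), (1 : ℂ)) :=
      (hasDerivAt_snd F hFq).deriv
    rw [hcomp.deriv, hsm, hGval]
  -- Step B: outer derivative
  have hOz : IsOpen {z : ℂ | (z, w₀) ∈ O} := hO.preimage (by fun_prop)
  have hevz : (fun z => deriv (fun w => (F ∘ T) (z, w)) w₀)
      =ᶠ[nhds z₀] fun z => (a*d-b*c)/(b*w₀+a)^2 * G (ψ z) := by
    filter_upwards [hOz.mem_nhds hp] with z hz using stepA z hz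
  have hcompB : HasDerivAt (fun z => G (ψ z))
      (deriv G (ψ z₀) * ((a*d-b*c)/(c*z₀+d)^2)) z₀ :=
    (hGdiff.hasDerivAt.comp z₀ (hψd z₀ h2))
  have hfinal : HasDerivAt (fun z => (a*d-b*c)/(b*w₀+a)^2 * G (ψ z))
      ((a*d-b*c)/(b*w₀+a)^2 * (deriv G (ψ z₀) * ((a*d-b*c)/(c*z₀+d)^2))) z₀ :=
    hcompB.const_mul _
  have hmd1 : mixedDeriv (F ∘ T) (z₀, w₀)
      = (a*d-b*c)/(b*w₀+a)^2 * (deriv G (ψ z₀) * ((a*d-b*c)/(c*z₀+d)^2)) := by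
    rw [mixedDeriv, hevz.deriv_eq, hfinal.deriv]
  have hmd2 : mixedDeriv F (T (z₀, w₀)) = deriv G (ψ z₀) := by
    rw [hT _ hp]
    rfl
  rw [hmd1, hmd2]
  have e3 := part3 z₀ w₀ h2 h3
  rw [(hψd z₀ h2).deriv, (hσd w₀ h3).deriv] at e3
  simp only
  linear_combination deriv G (ψ z₀) * e3
end

section
/- Let O ⊆ ℂ be a nonempty open connected set and let T : O → ℂ be holomorphic with (1 + |z|²)·|T′(z)| = 1 + |T(z)|² for all z ∈ O. Then there exist a, b ∈ ℂ with |a|² + |b|² = 1 such that −conj(b)·z + conj(a) ≠ 0 and T(z) = (a·z + b)/(−conj(b)·z + conj(a)) for all z ∈ O; in particular, T extends to a holomorphic rigid motion of the Riemann sphere. -/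
open Complex Filter Metric Asymptotics

lemma hasDerivAt_conjConj {f : ℂ → ℂ} {d x : ℂ}
    (hf : HasDerivAt f d ((starRingEnd ℂ) x)) :
    HasDerivAt (fun z => (starRingEnd ℂ) (f ((starRingEnd ℂ) z))) ((starRingEnd ℂ) d) x := by
  rw [hasDerivAt_iff_isLittleO] at hf ⊢
  have hc : Filter.Tendsto (starRingEnd ℂ) (nhds x) (nhds ((starRingEnd ℂ) x)) :=
    Complex.continuous_conj.tendsto x
  have h2 := hf.comp_tendsto hc
  rw [isLittleO_iff] at h2 ⊢
  intro ε hε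
  filter_upwards [h2 hε] with y hy
  have e1 : (starRingEnd ℂ) (f ((starRingEnd ℂ) y)) - (starRingEnd ℂ) (f ((starRingEnd ℂ) x))
      - (y - x) • (starRingEnd ℂ) d
      = (starRingEnd ℂ) (f ((starRingEnd ℂ) y) - f ((starRingEnd ℂ) x)
        - ((starRingEnd ℂ) y - (starRingEnd ℂ) x) • d) := by
    simp [smul_eq_mul, map_sub, map_mul]
  rw [e1, RCLike.norm_conj]
  have e2 : ‖y - x‖ = ‖(starRingEnd ℂ) y - (starRingEnd ℂ) x‖ := by
    rw [← map_sub, RCLike.norm_conj]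
  rw [e2]; exact hy


noncomputable def mob (c z : ℂ) : ℂ := (z + c) / (1 - (starRingEnd ℂ) c * z)

lemma mob_hasDerivAt_s19 (c z : ℂ) (hz : 1 - (starRingEnd ℂ) c * z ≠ 0) :
    HasDerivAt (mob c) ((1 + (starRingEnd ℂ) c * c) / (1 - (starRingEnd ℂ) c * z)^2) z := by
  have h1 : HasDerivAt (fun z : ℂ => z + c) 1 z := (hasDerivAt_id z).add_const c
  have h2 : HasDerivAt (fun z : ℂ => 1 - (starRingEnd ℂ) c * z) (-(starRingEnd ℂ) c) z := by
    simpa using ((hasDerivAt_id z).const_mul ((starRingEnd ℂ) c)).const_sub 1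
  have := h1.div h2 hz
  refine HasDerivAt.congr_deriv this ?_
  ring

lemma norm_sq_add_key (c z : ℂ) :
    ‖z + c‖^2 + ‖1 - (starRingEnd ℂ) c * z‖^2 = (1 + ‖z‖^2) * (1 + ‖c‖^2) := by
  have key : (z + c) * (starRingEnd ℂ) (z + c)
      + (1 - (starRingEnd ℂ) c * z) * (starRingEnd ℂ) (1 - (starRingEnd ℂ) c * z)
      = (1 + z * (starRingEnd ℂ) z) * (1 + c * (starRingEnd ℂ) c) := by
    simp only [map_add, map_sub, map_mul, map_one, Complex.conj_conj]
    ring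
  rw [Complex.mul_conj, Complex.mul_conj, Complex.mul_conj, Complex.mul_conj] at key
  have key2 : (Complex.normSq (z + c) + Complex.normSq (1 - (starRingEnd ℂ) c * z) : ℝ)
      = ((1 + Complex.normSq z) * (1 + Complex.normSq c) : ℝ) := by
    exact_mod_cast key
  simpa only [← Complex.sq_norm] using key2

lemma mob_isom (c z : ℂ) (hz : 1 - (starRingEnd ℂ) c * z ≠ 0) :
    (1 + ‖z‖^2) * ‖deriv (mob c) z‖ = 1 + ‖mob c z‖^2 := by
  have hd := (mob_hasDerivAt_s19 c z hz).deriv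
  rw [hd]
  have h1 : (1 + (starRingEnd ℂ) c * c) = ((1 + ‖c‖^2 : ℝ) : ℂ) := by
    rw [Complex.conj_mul']
    push_cast [← Complex.sq_norm]
    ring
  have hznorm : ‖1 - (starRingEnd ℂ) c * z‖ ≠ 0 := norm_ne_zero_iff.2 hz
  rw [norm_div, h1, norm_pow, Complex.norm_real]
  have h2 : |(1 + ‖c‖^2 : ℝ)| = 1 + ‖c‖^2 := by
    rw [abs_of_pos]; positivity
  rw [Real.norm_eq_abs, h2]
  have h3 : ‖mob c z‖^2 = ‖z + c‖^2 / ‖1 - (starRingEnd ℂ) c * z‖^2 := by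
    rw [mob, norm_div, div_pow]
  rw [h3]
  have h4 := norm_sq_add_key c z
  field_simp
  linear_combination - h4
lemma key_polarization {r : ℝ} (hr : 0 < r) {h : ℂ → ℂ}
    (hd : DifferentiableOn ℂ h (Metric.ball 0 r))
    (h0 : h 0 = 0) (h1 : deriv h 0 = 1)
    (hiso : ∀ z ∈ Metric.ball (0:ℂ) r, (1 + ‖z‖^2) * ‖deriv h z‖ = 1 + ‖h z‖^2) :
    ∀ z ∈ Metric.ball (0:ℂ) r, h z = z := by
  have h0mem : (0:ℂ) ∈ Metric.ball (0:ℂ) r := by simpa using hr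
  have hconjmem : ∀ {z : ℂ}, z ∈ Metric.ball (0:ℂ) r → (starRingEnd ℂ) z ∈ Metric.ball (0:ℂ) r := by
    intro z hz
    rw [mem_ball_zero_iff] at hz ⊢
    simpa using hz
  have hh : ∀ z ∈ Metric.ball (0:ℂ) r, HasDerivAt h (deriv h z) z := fun z hz =>
    (hd.differentiableAt (isOpen_ball.mem_nhds hz)).hasDerivAt
  set S : ℂ → ℂ := fun w => (starRingEnd ℂ) (h ((starRingEnd ℂ) w)) with hSdef
  have hS : ∀ w ∈ Metric.ball (0:ℂ) r,
      HasDerivAt S ((starRingEnd ℂ) (deriv h ((starRingEnd ℂ) w))) w := fun w hw =>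
    hasDerivAt_conjConj (hh _ (hconjmem hw))
  have hSderiv : ∀ w ∈ Metric.ball (0:ℂ) r,
      deriv S w = (starRingEnd ℂ) (deriv h ((starRingEnd ℂ) w)) := fun w hw => (hS w hw).deriv
  have hSdiff : DifferentiableOn ℂ S (Metric.ball 0 r) := fun w hw =>
    ((hS w hw).differentiableAt).differentiableWithinAt
  have hd' : DifferentiableOn ℂ (deriv h) (Metric.ball 0 r) :=
    ((hd.analyticOnNhd isOpen_ball).deriv).differentiableOn
  have hS'' : ∀ w ∈ Metric.ball (0:ℂ) r, HasDerivAt (deriv S)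
      ((starRingEnd ℂ) (deriv (deriv h) ((starRingEnd ℂ) w))) w := by
    intro w hw
    have : HasDerivAt (fun w => (starRingEnd ℂ) (deriv h ((starRingEnd ℂ) w)))
        ((starRingEnd ℂ) (deriv (deriv h) ((starRingEnd ℂ) w))) w :=
      hasDerivAt_conjConj ((hd'.differentiableAt (isOpen_ball.mem_nhds (hconjmem hw))).hasDerivAt)
    apply this.congr_of_eventuallyEq
    filter_upwards [isOpen_ball.mem_nhds hw] with y hy
    exact hSderiv y hy
  have hS'diff : DifferentiableOn ℂ (deriv S) (Metric.ball 0 r) := fun w hw =>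
    ((hS'' w hw).differentiableAt).differentiableWithinAt
  set F : ℂ → ℂ → ℂ := fun z w =>
    deriv h z * deriv S w * (1 + z*w)^2 - (1 + h z * S w)^2 with hFdef
  -- the diagonal identity
  have diag : ∀ z ∈ Metric.ball (0:ℂ) r, F z ((starRingEnd ℂ) z) = 0 := by
    intro z hz
    have e1 : deriv S ((starRingEnd ℂ) z) = (starRingEnd ℂ) (deriv h z) := by
      rw [hSderiv _ (hconjmem hz), Complex.conj_conj]
    have e2 : S ((starRingEnd ℂ) z) = (starRingEnd ℂ) (h z) := by
      simp only [hSdef, Complex.conj_conj]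
    have hsq : ‖deriv h z‖^2 * (1+‖z‖^2)^2 = (1+‖h z‖^2)^2 := by
      linear_combination ((1+‖z‖^2) * ‖deriv h z‖ + 1 + ‖h z‖^2) * hiso z hz
    have hsqC := congrArg (Complex.ofReal) hsq
    push_cast at hsqC
    simp only [hFdef, e1, e2]
    rw [mul_comm (deriv h z) ((starRingEnd ℂ) (deriv h z)), Complex.conj_mul',
      Complex.mul_conj, Complex.mul_conj]
    rw [sub_eq_zero]
    simp only [Complex.normSq_eq_norm_sq]
    push_cast
    linear_combination hsqC
  -- differentiability of slices
  have Fdiff : ∀ (s : Set ℂ) (u v : ℂ → ℂ), DifferentiableOn ℂ u s → DifferentiableOn ℂ v s →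
      (∀ x ∈ s, u x ∈ Metric.ball (0:ℂ) r) → (∀ x ∈ s, v x ∈ Metric.ball (0:ℂ) r) →
      DifferentiableOn ℂ (fun x => F (u x) (v x)) s := by
    intro s u v hu hv hus hvs
    have d1 : DifferentiableOn ℂ (fun x => deriv h (u x)) s := hd'.comp hu hus
    have d2 : DifferentiableOn ℂ (fun x => deriv S (v x)) s := hS'diff.comp hv hvs
    have d3 : DifferentiableOn ℂ (fun x => h (u x)) s := hd.comp hu hus
    have d4 : DifferentiableOn ℂ (fun x => S (v x)) s := hSdiff.comp hv hvs
    exact ((d1.mul d2).mul (((differentiableOn_const 1).add (hu.mul hv)).pow 2)).sub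
      (((differentiableOn_const 1).add (d3.mul d4)).pow 2)
  have realzero : ∀ a b : ℝ, ‖(a:ℂ) + Complex.I * (b:ℂ)‖ < r →
      F ((a:ℂ) + Complex.I*(b:ℂ)) ((a:ℂ) - Complex.I*(b:ℂ)) = 0 := by
    intro a b hab
    have hzmem : ((a:ℂ) + Complex.I*(b:ℂ)) ∈ Metric.ball (0:ℂ) r := mem_ball_zero_iff.2 hab
    have hc : (starRingEnd ℂ) ((a:ℂ) + Complex.I*(b:ℂ)) = (a:ℂ) - Complex.I*(b:ℂ) := by
      simp only [map_add, map_mul, Complex.conj_ofReal, Complex.conj_I]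
      ring
    rw [← hc]; exact diag _ hzmem
  -- frequently-zero from vanishing on small positive reals
  have freq : ∀ (f : ℂ → ℂ) (δ : ℝ), 0 < δ → (∀ t : ℝ, 0 < t → t < δ → f (t:ℂ) = 0) →
      ∃ᶠ x in nhdsWithin (0:ℂ) {(0:ℂ)}ᶜ, f x = 0 := by
    intro f δ hδ hf
    have hseq : Filter.Tendsto (fun n : ℕ => (1/((n:ℝ)+1) : ℝ)) Filter.atTop (nhds 0) :=
      tendsto_one_div_add_atTop_nhds_zero_nat
    have hseqC : Filter.Tendsto (fun n : ℕ => ((1/((n:ℝ)+1) : ℝ) : ℂ)) Filter.atTop (nhds 0) := by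
      have h2 := (Complex.continuous_ofReal.tendsto (0:ℝ)).comp hseq
      rw [Complex.ofReal_zero] at h2
      exact h2
    have hseqC' : Filter.Tendsto (fun n : ℕ => ((1/((n:ℝ)+1) : ℝ) : ℂ)) Filter.atTop
        (nhdsWithin (0:ℂ) {(0:ℂ)}ᶜ) := by
      apply tendsto_nhdsWithin_of_tendsto_nhds_of_eventually_within _ hseqC
      apply Filter.Eventually.of_forall
      intro n
      simp only [Set.mem_compl_iff, Set.mem_singleton_iff]
      exact Complex.ofReal_ne_zero.2 (by positivity)
    apply hseqC'.frequently
    have hev : ∀ᶠ n : ℕ in Filter.atTop, (1/((n:ℝ)+1) : ℝ) < δ :=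
      hseq.eventually_lt_const hδ
    apply Filter.Eventually.frequently
    filter_upwards [hev] with n hn
    exact hf _ (by positivity) hn
  -- first slicing step: real y, complex x
  have key1 : ∀ y : ℝ, |y| < r/2 → ∀ x : ℂ, ‖x‖ < r - |y| →
      F (x + Complex.I*(y:ℂ)) (x - Complex.I*(y:ℂ)) = 0 := by
    intro y hy x hx
    have hrs : 0 < r - |y| := by
      have := abs_nonneg y; linarith
    have hIy : ‖Complex.I * (y:ℂ)‖ = |y| := by
      rw [norm_mul, Complex.norm_I, one_mul, Complex.norm_real, Real.norm_eq_abs]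
    have hus : ∀ x' ∈ Metric.ball (0:ℂ) (r - |y|),
        x' + Complex.I*(y:ℂ) ∈ Metric.ball (0:ℂ) r := by
      intro x' hx'
      rw [mem_ball_zero_iff] at hx' ⊢
      calc ‖x' + Complex.I*(y:ℂ)‖ ≤ ‖x'‖ + ‖Complex.I*(y:ℂ)‖ := norm_add_le _ _
        _ < r := by rw [hIy]; linarith
    have hvs : ∀ x' ∈ Metric.ball (0:ℂ) (r - |y|),
        x' - Complex.I*(y:ℂ) ∈ Metric.ball (0:ℂ) r := by
      intro x' hx'
      rw [mem_ball_zero_iff] at hx' ⊢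
      calc ‖x' - Complex.I*(y:ℂ)‖ ≤ ‖x'‖ + ‖Complex.I*(y:ℂ)‖ := norm_sub_le _ _
        _ < r := by rw [hIy]; linarith
    have hud : DifferentiableOn ℂ (fun x' : ℂ => x' + Complex.I*(y:ℂ))
        (Metric.ball (0:ℂ) (r - |y|)) :=
      (differentiable_id.add_const _).differentiableOn
    have hvd : DifferentiableOn ℂ (fun x' : ℂ => x' - Complex.I*(y:ℂ))
        (Metric.ball (0:ℂ) (r - |y|)) :=
      (differentiable_id.sub_const _).differentiableOn
    have hFd := Fdiff _ _ _ hud hvd hus hvs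
    have hEq := (hFd.analyticOnNhd isOpen_ball).eqOn_zero_of_preconnected_of_frequently_eq_zero
      (convex_ball (0:ℂ) (r - |y|)).isPreconnected (mem_ball_zero_iff.2 (by simpa using hrs))
      (freq _ (r - |y|) hrs ?_)
    · exact hEq (mem_ball_zero_iff.2 hx)
    · intro t ht htδ
      apply realzero t y
      calc ‖(t:ℂ) + Complex.I*(y:ℂ)‖ ≤ ‖(t:ℂ)‖ + ‖Complex.I*(y:ℂ)‖ := norm_add_le _ _
        _ < r := by
          rw [hIy, Complex.norm_real, Real.norm_eq_abs, abs_of_pos ht]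
          linarith
  -- second slicing step: complex x and y
  have key2 : ∀ x : ℂ, ‖x‖ < r/2 → ∀ y : ℂ, ‖y‖ < r/2 →
      F (x + Complex.I*y) (x - Complex.I*y) = 0 := by
    intro x hx y hy
    have hr2 : 0 < r/2 := by linarith
    have hus : ∀ y' ∈ Metric.ball (0:ℂ) (r/2),
        x + Complex.I*y' ∈ Metric.ball (0:ℂ) r := by
      intro y' hy'
      rw [mem_ball_zero_iff] at hy' ⊢
      calc ‖x + Complex.I*y'‖ ≤ ‖x‖ + ‖Complex.I*y'‖ := norm_add_le _ _
        _ < r := by rw [norm_mul, Complex.norm_I, one_mul]; linarith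
    have hvs : ∀ y' ∈ Metric.ball (0:ℂ) (r/2),
        x - Complex.I*y' ∈ Metric.ball (0:ℂ) r := by
      intro y' hy'
      rw [mem_ball_zero_iff] at hy' ⊢
      calc ‖x - Complex.I*y'‖ ≤ ‖x‖ + ‖Complex.I*y'‖ := norm_sub_le _ _
        _ < r := by rw [norm_mul, Complex.norm_I, one_mul]; linarith
    have hud : DifferentiableOn ℂ (fun y' : ℂ => x + Complex.I*y') (Metric.ball (0:ℂ) (r/2)) :=
      ((differentiable_const x).add ((differentiable_const Complex.I).mul differentiable_id)).differentiableOn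
    have hvd : DifferentiableOn ℂ (fun y' : ℂ => x - Complex.I*y') (Metric.ball (0:ℂ) (r/2)) :=
      ((differentiable_const x).sub ((differentiable_const Complex.I).mul differentiable_id)).differentiableOn
    have hFd := Fdiff _ _ _ hud hvd hus hvs
    have hEq := (hFd.analyticOnNhd isOpen_ball).eqOn_zero_of_preconnected_of_frequently_eq_zero
      (convex_ball (0:ℂ) (r/2)).isPreconnected (mem_ball_zero_iff.2 (by simpa using hr2))
      (freq _ (r/2) hr2 ?_)
    · exact hEq (mem_ball_zero_iff.2 hy)
    · intro t ht htδ
      have := key1 t (by rwa [abs_of_pos ht]) x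
        (by rw [abs_of_pos ht]; linarith)
      exact this
  -- conclude deriv h = 1 on the ball
  have derivOne : ∀ z ∈ Metric.ball (0:ℂ) r, deriv h z = 1 := by
    intro z hz
    rw [mem_ball_zero_iff] at hz
    have hx : ‖z/2‖ < r/2 := by
      rw [norm_div, Complex.norm_ofNat]
      linarith [hz]
    have hy : ‖-(Complex.I*z)/2‖ < r/2 := by
      rw [norm_div, norm_neg, norm_mul, Complex.norm_I, one_mul, Complex.norm_ofNat]
      linarith [hz]
    have hF := key2 (z/2) hx (-(Complex.I*z)/2) hy
    have e1 : z/2 + Complex.I * (-(Complex.I*z)/2) = z := by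
      linear_combination (-z/2) * Complex.I_mul_I
    have e2 : z/2 - Complex.I * (-(Complex.I*z)/2) = 0 := by
      linear_combination (z/2) * Complex.I_mul_I
    rw [e1, e2] at hF
    have hS0 : S 0 = 0 := by simp [hSdef, h0]
    have hS'0 : deriv S 0 = 1 := by
      rw [hSderiv 0 h0mem]
      simp [h1]
    simp only [hFdef, hS0, hS'0, mul_zero, mul_one, add_zero] at hF
    linear_combination hF
  -- conclude h = id
  intro z hz
  have hderiv0 : ∀ x ∈ Metric.ball (0:ℂ) r,
      HasFDerivWithinAt (fun w => h w - w) (0 : ℂ →L[ℂ] ℂ) (Metric.ball (0:ℂ) r) x := by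
    intro x hx
    have : HasDerivAt (fun w => h w - w) (deriv h x - 1) x := (hh x hx).sub (hasDerivAt_id x)
    rw [derivOne x hx, sub_self] at this
    have h3 := this.hasFDerivAt.hasFDerivWithinAt (s := Metric.ball (0:ℂ) r)
    simpa using h3
  have hbound : ∀ x ∈ Metric.ball (0:ℂ) r, ‖(0 : ℂ →L[ℂ] ℂ)‖ ≤ 0 := by
    intro x hx; simp
  have := (convex_ball (0:ℂ) r).norm_image_sub_le_of_norm_hasFDerivWithin_le
    (f' := fun _ => (0 : ℂ →L[ℂ] ℂ)) hderiv0 hbound h0mem hz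
  simp only [h0, sub_zero, zero_mul] at this
  have : h z - z = 0 := by
    have hn : ‖h z - z‖ ≤ 0 := by simpa using this
    have := norm_le_zero_iff.1 hn
    exact this
  linear_combination this


/-- a local holomorphic isometry of the spherical metric (in the affine
chart) is the restriction of a rotation of the Riemann sphere:
T(z) = (az + b)/(−conj(b)z + conj(a)) with |a|² + |b|² = 1. -/
theorem spherical_isometry_is_rotation
    (O : Set ℂ) (hO : IsOpen O) (hOc : IsConnected O)
    (T : ℂ → ℂ) (hT : DifferentiableOn ℂ T O)
    (hiso : ∀ z ∈ O, (1 + ‖z‖ ^ 2) * ‖deriv T z‖ = 1 + ‖T z‖ ^ 2) :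
    ∃ a b : ℂ, ‖a‖ ^ 2 + ‖b‖ ^ 2 = 1 ∧
      ∀ z ∈ O, -(starRingEnd ℂ) b * z + (starRingEnd ℂ) a ≠ 0 ∧
        T z = (a * z + b) / (-(starRingEnd ℂ) b * z + (starRingEnd ℂ) a) := by
  obtain ⟨z₀, hz₀⟩ := hOc.nonempty
  set w₀ := T z₀ with hw₀def
  have mc : ∀ w : ℂ, w * (starRingEnd ℂ) w = ((‖w‖^2 : ℝ) : ℂ) := by
    intro w
    rw [Complex.mul_conj]
    norm_cast
    rw [Complex.normSq_eq_norm_sq]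
  set α : ℝ := (Real.sqrt (1 + ‖z₀‖^2))⁻¹ with hαdef
  set β : ℝ := (Real.sqrt (1 + ‖w₀‖^2))⁻¹ with hβdef
  have hz₀sq : (0:ℝ) < 1 + ‖z₀‖^2 := by positivity
  have hw₀sq : (0:ℝ) < 1 + ‖w₀‖^2 := by positivity
  have hα0 : (0:ℝ) < α := by rw [hαdef]; positivity
  have hβ0 : (0:ℝ) < β := by rw [hβdef]; positivity
  have hαr : α^2 * (1 + ‖z₀‖^2) = 1 := by
    rw [hαdef, inv_pow, Real.sq_sqrt hz₀sq.le]
    field_simp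
  have hβr : β^2 * (1 + ‖w₀‖^2) = 1 := by
    rw [hβdef, inv_pow, Real.sq_sqrt hw₀sq.le]
    field_simp
  have hα : (α:ℂ)^2 * (1 + z₀ * (starRingEnd ℂ) z₀) = 1 := by
    rw [mc]
    have := congrArg (Complex.ofReal) hαr
    push_cast at this ⊢
    linear_combination this
  have hβ : (β:ℂ)^2 * (1 + w₀ * (starRingEnd ℂ) w₀) = 1 := by
    rw [mc]
    have := congrArg (Complex.ofReal) hβr
    push_cast at this ⊢
    linear_combination this
  -- continuity facts and choice of radius
  have cT : ContinuousAt T z₀ := (hT.differentiableAt (hO.mem_nhds hz₀)).continuousAt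
  have hm0 : mob z₀ 0 = z₀ := by simp [mob]
  have cm : ContinuousAt (mob z₀) 0 := by
    apply ContinuousAt.div
    · fun_prop
    · fun_prop
    · simp
  have ev1 : ∀ᶠ z in nhds (0:ℂ), 1 - (starRingEnd ℂ) z₀ * z ≠ 0 := by
    have hc : ContinuousAt (fun z : ℂ => 1 - (starRingEnd ℂ) z₀ * z) 0 := by fun_prop
    have : (fun z : ℂ => 1 - (starRingEnd ℂ) z₀ * z) 0 ≠ 0 := by simp
    exact hc.eventually_ne this
  have ev2 : ∀ᶠ z in nhds (0:ℂ), mob z₀ z ∈ O := by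
    apply cm.eventually_mem
    rw [hm0]
    exact hO.mem_nhds hz₀
  have ev3 : ∀ᶠ z in nhds (0:ℂ), 1 + (starRingEnd ℂ) w₀ * T (mob z₀ z) ≠ 0 := by
    have hTc : ContinuousAt (fun z : ℂ => T (mob z₀ z)) 0 := by
      apply ContinuousAt.comp (x := (0:ℂ)) _ cm
      rw [hm0]; exact cT
    have hc : ContinuousAt (fun z : ℂ => 1 + (starRingEnd ℂ) w₀ * T (mob z₀ z)) 0 :=
      continuousAt_const.add (continuousAt_const.mul hTc)
    have hne : (fun z : ℂ => 1 + (starRingEnd ℂ) w₀ * T (mob z₀ z)) 0 ≠ 0 := by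
      simp only [hm0]
      rw [mul_comm, mc]
      intro hcon
      rw [← hw₀def] at hcon
      have h2 : ((1 + ‖w₀‖^2 : ℝ) : ℂ) = 0 := by push_cast at hcon ⊢; linear_combination hcon
      rw [Complex.ofReal_eq_zero] at h2
      linarith
    exact hc.eventually_ne hne
  -- choose radius
  obtain ⟨r, hrpos, hrball⟩ := Metric.eventually_nhds_iff_ball.1 ((ev1.and ev2).and ev3)
  have hball : ∀ z ∈ Metric.ball (0:ℂ) r,
      (1 - (starRingEnd ℂ) z₀ * z ≠ 0) ∧ mob z₀ z ∈ O ∧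
      (1 + (starRingEnd ℂ) w₀ * T (mob z₀ z) ≠ 0) := by
    intro z hz
    obtain ⟨⟨a1, a2⟩, a3⟩ := hrball z hz
    exact ⟨a1, a2, a3⟩
  set g₀ : ℂ → ℂ := fun z => mob (-w₀) (T (mob z₀ z)) with hg₀def
  -- derivative and isometry transfer for g₀
  have hg₀fact : ∀ z ∈ Metric.ball (0:ℂ) r, DifferentiableAt ℂ g₀ z ∧
      (1 + ‖z‖^2) * ‖deriv g₀ z‖ = 1 + ‖g₀ z‖^2 := by
    intro z hz
    obtain ⟨e1, e2, e3⟩ := hball z hz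
    have hm1 := mob_hasDerivAt_s19 z₀ z e1
    have hTd : HasDerivAt T (deriv T (mob z₀ z)) (mob z₀ z) :=
      (hT.differentiableAt (hO.mem_nhds e2)).hasDerivAt
    have e3' : 1 - (starRingEnd ℂ) (-w₀) * T (mob z₀ z) ≠ 0 := by
      simp only [map_neg, neg_mul, sub_neg_eq_add]
      exact e3
    have hm2 := mob_hasDerivAt_s19 (-w₀) (T (mob z₀ z)) e3'
    have hcomp : HasDerivAt g₀
        ((1 + (starRingEnd ℂ) (-w₀) * (-w₀)) / (1 - (starRingEnd ℂ) (-w₀) * T (mob z₀ z))^2 *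
          (deriv T (mob z₀ z) *
            ((1 + (starRingEnd ℂ) z₀ * z₀) / (1 - (starRingEnd ℂ) z₀ * z)^2))) z :=
      by exact hm2.comp z (hTd.comp z hm1)
    refine ⟨hcomp.differentiableAt, ?_⟩
    have i1 : (1 + ‖z‖^2) * ‖(1 + (starRingEnd ℂ) z₀ * z₀) / (1 - (starRingEnd ℂ) z₀ * z)^2‖
        = 1 + ‖mob z₀ z‖^2 := by
      rw [← hm1.deriv]; exact mob_isom z₀ z e1
    have i2 : (1 + ‖T (mob z₀ z)‖^2) *
        ‖(1 + (starRingEnd ℂ) (-w₀) * (-w₀)) / (1 - (starRingEnd ℂ) (-w₀) * T (mob z₀ z))^2‖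
        = 1 + ‖mob (-w₀) (T (mob z₀ z))‖^2 := by
      rw [← hm2.deriv]; exact mob_isom (-w₀) (T (mob z₀ z)) e3'
    have iT := hiso (mob z₀ z) e2
    rw [hcomp.deriv, norm_mul, norm_mul]
    set N1 := ‖(1 + (starRingEnd ℂ) z₀ * z₀) / (1 - (starRingEnd ℂ) z₀ * z)^2‖
    set N2 := ‖(1 + (starRingEnd ℂ) (-w₀) * (-w₀)) / (1 - (starRingEnd ℂ) (-w₀) * T (mob z₀ z))^2‖
    calc (1 + ‖z‖^2) * (N2 * (‖deriv T (mob z₀ z)‖ * N1))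
        = N2 * ‖deriv T (mob z₀ z)‖ * ((1 + ‖z‖^2) * N1) := by ring
      _ = N2 * ‖deriv T (mob z₀ z)‖ * (1 + ‖mob z₀ z‖^2) := by rw [i1]
      _ = N2 * ((1 + ‖mob z₀ z‖^2) * ‖deriv T (mob z₀ z)‖) := by ring
      _ = N2 * (1 + ‖T (mob z₀ z)‖^2) := by rw [iT]
      _ = (1 + ‖T (mob z₀ z)‖^2) * N2 := by ring
      _ = 1 + ‖g₀ z‖^2 := i2
  have hg₀diff : DifferentiableOn ℂ g₀ (Metric.ball (0:ℂ) r) := fun z hz =>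
    ((hg₀fact z hz).1).differentiableWithinAt
  have hg₀iso : ∀ z ∈ Metric.ball (0:ℂ) r, (1 + ‖z‖^2) * ‖deriv g₀ z‖ = 1 + ‖g₀ z‖^2 :=
    fun z hz => (hg₀fact z hz).2
  have h0mem : (0:ℂ) ∈ Metric.ball (0:ℂ) r := mem_ball_zero_iff.2 (by simpa using hrpos)
  have hg₀0 : g₀ 0 = 0 := by
    rw [hg₀def]
    simp only [hm0, ← hw₀def, mob]
    simp [hw₀def]
  set u : ℂ := deriv g₀ 0 with hudef
  have hu : ‖u‖ = 1 := by
    have := hg₀iso 0 h0mem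
    rw [hg₀0] at this
    simp only [norm_zero] at this
    nlinarith [this]
  have huu : u * (starRingEnd ℂ) u = 1 := by rw [mc, hu]; norm_num
  -- normalize
  set h : ℂ → ℂ := fun z => (starRingEnd ℂ) u * g₀ z with hhdef
  have hhdiff : DifferentiableOn ℂ h (Metric.ball (0:ℂ) r) := hg₀diff.const_mul _
  have hhderiv : ∀ z ∈ Metric.ball (0:ℂ) r, deriv h z = (starRingEnd ℂ) u * deriv g₀ z :=
    fun z hz => by
      rw [hhdef]
      exact deriv_const_mul _ (hg₀fact z hz).1
  have hh0 : h 0 = 0 := by rw [hhdef]; simp [hg₀0]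
  have hh1 : deriv h 0 = 1 := by
    rw [hhderiv 0 h0mem, ← hudef, mul_comm]
    exact huu
  have hhiso : ∀ z ∈ Metric.ball (0:ℂ) r, (1 + ‖z‖^2) * ‖deriv h z‖ = 1 + ‖h z‖^2 := by
    intro z hz
    rw [hhderiv z hz, norm_mul, RCLike.norm_conj, hu, one_mul, hhdef]
    simp only [norm_mul, RCLike.norm_conj, hu, one_mul]
    exact hg₀iso z hz
  have hid := key_polarization hrpos hhdiff hh0 hh1 hhiso
  have hg₀eq : ∀ z ∈ Metric.ball (0:ℂ) r, g₀ z = u * z := by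
    intro z hz
    have h1 := hid z hz
    simp only [hhdef] at h1
    calc g₀ z = (u * (starRingEnd ℂ) u) * g₀ z := by rw [huu, one_mul]
      _ = u * ((starRingEnd ℂ) u * g₀ z) := by ring
      _ = u * z := by rw [h1]
  -- square root of conj u
  obtain ⟨v, hv2⟩ : ∃ v : ℂ, v^2 = (starRingEnd ℂ) u :=
    IsAlgClosed.exists_pow_nat_eq ((starRingEnd ℂ) u) (by norm_num : (0:ℕ) < 2)
  have hvnorm : ‖v‖ = 1 := by
    have h1 : ‖v‖^2 = 1 := by
      rw [← norm_pow, hv2, RCLike.norm_conj, hu]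
    nlinarith [norm_nonneg v]
  have hv : v * (starRingEnd ℂ) v = 1 := by rw [mc, hvnorm]; norm_num
  have hvne : v ≠ 0 := by
    intro h0
    rw [h0] at hvnorm
    simp at hvnorm
  have hu' : u = ((starRingEnd ℂ) v)^2 := by
    rw [← map_pow, hv2, Complex.conj_conj]
  set A : ℂ := (α:ℂ)*(β:ℂ)*((starRingEnd ℂ) v + v*w₀*(starRingEnd ℂ) z₀) with hAdef
  set B : ℂ := (α:ℂ)*(β:ℂ)*(v*w₀ - (starRingEnd ℂ) v*z₀) with hBdef
  have hABC : A * (starRingEnd ℂ) A + B * (starRingEnd ℂ) B = 1 := by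
    simp only [hAdef, hBdef, map_mul, map_add, map_sub, Complex.conj_conj, Complex.conj_ofReal]
    linear_combination ((α:ℂ)^2*(β:ℂ)^2*(1+z₀*(starRingEnd ℂ) z₀)*(1+w₀*(starRingEnd ℂ) w₀))*hv
      + ((β:ℂ)^2*(1+w₀*(starRingEnd ℂ) w₀))*hα + hβ
  have hAB : ‖A‖^2 + ‖B‖^2 = 1 := by
    rw [mc, mc] at hABC
    exact_mod_cast hABC
  -- local identity near z₀
  have hd₀ne : (1:ℂ) + (starRingEnd ℂ) z₀ * z₀ ≠ 0 := by
    rw [mul_comm, mc]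
    intro hcon
    have h2 : ((1 + ‖z₀‖^2 : ℝ) : ℂ) = 0 := by push_cast at hcon ⊢; linear_combination hcon
    rw [Complex.ofReal_eq_zero] at h2
    linarith
  have evA : ∀ᶠ ζ in nhds z₀, 1 + (starRingEnd ℂ) z₀ * ζ ≠ 0 := by
    have hc : ContinuousAt (fun ζ : ℂ => 1 + (starRingEnd ℂ) z₀ * ζ) z₀ := by fun_prop
    exact hc.eventually_ne (by simpa using hd₀ne)
  have hmz0 : mob (-z₀) z₀ = 0 := by simp [mob]
  have cmz : ContinuousAt (mob (-z₀)) z₀ := by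
    apply ContinuousAt.div
    · fun_prop
    · fun_prop
    · simp only [map_neg, neg_mul, sub_neg_eq_add]
      exact hd₀ne
  set r' : ℝ := min r (1/(1+‖w₀‖)) with hr'def
  have hr'pos : 0 < r' := by
    apply lt_min hrpos
    positivity
  have evB : ∀ᶠ ζ in nhds z₀, mob (-z₀) ζ ∈ Metric.ball (0:ℂ) r' := by
    apply cmz.eventually_mem
    rw [hmz0]
    exact isOpen_ball.mem_nhds (mem_ball_self hr'pos)
  have hmain : ∀ᶠ ζ in nhds z₀,
      T ζ * (-(starRingEnd ℂ) B * ζ + (starRingEnd ℂ) A) - (A*ζ + B) = 0 := by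
    filter_upwards [evA, evB] with ζ hA1 hB1
    set z : ℂ := mob (-z₀) ζ with hzdef
    have hzr : z ∈ Metric.ball (0:ℂ) r :=
      Metric.ball_subset_ball (min_le_left _ _) hB1
    have hzsmall : ‖z‖*‖w₀‖ < 1 := by
      have hpos : (0:ℝ) < 1+‖w₀‖ := by positivity
      have h1 : ‖z‖ < 1/(1+‖w₀‖) :=
        lt_of_lt_of_le (mem_ball_zero_iff.1 hB1) (min_le_right _ _)
      have h2 : ‖z‖*(1+‖w₀‖) < 1 := (lt_div_iff₀ hpos).1 h1
      nlinarith [norm_nonneg z, norm_nonneg w₀]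
    obtain ⟨e1, e2, e3⟩ := hball z hzr
    have hz_eq : z * (1 + (starRingEnd ℂ) z₀ * ζ) = ζ - z₀ := by
      rw [hzdef]
      simp only [mob, map_neg, neg_mul, sub_neg_eq_add]
      exact div_mul_cancel₀ _ hA1
    have hmobz : mob z₀ z = ζ := by
      rw [mob, div_eq_iff e1]
      linear_combination hz_eq
    have e3' : 1 + (starRingEnd ℂ) w₀ * T ζ ≠ 0 := by rwa [hmobz] at e3
    have hg := hg₀eq z hzr
    simp only [hg₀def] at hg
    rw [hmobz] at hg
    have hcross : T ζ * (1 - u * (starRingEnd ℂ) w₀ * z) = u*z + w₀ := by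
      have h5 : (T ζ + -w₀)/(1 + (starRingEnd ℂ) w₀ * T ζ) = u*z := by
        have := hg
        simp only [mob, map_neg, neg_mul, sub_neg_eq_add] at this
        exact this
      rw [div_eq_iff e3'] at h5
      linear_combination h5
    have hden_id : -(starRingEnd ℂ) B * ζ + (starRingEnd ℂ) A
        = (α:ℂ)*(β:ℂ)*(1 + (starRingEnd ℂ) z₀*ζ)*v*(1 - u*(starRingEnd ℂ) w₀*z) := by
      simp only [hAdef, hBdef, map_mul, map_add, map_sub, Complex.conj_conj,
        Complex.conj_ofReal, hu']
      linear_combination ((α:ℂ)*(β:ℂ)*(starRingEnd ℂ) v*(starRingEnd ℂ) w₀*(ζ-z₀))*hv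
        + ((α:ℂ)*(β:ℂ)*v*((starRingEnd ℂ) v)^2*(starRingEnd ℂ) w₀)*hz_eq
    have hnum_id : A*ζ + B
        = (α:ℂ)*(β:ℂ)*(1 + (starRingEnd ℂ) z₀*ζ)*v*(u*z + w₀) := by
      simp only [hAdef, hBdef, map_mul, map_add, map_sub, Complex.conj_conj,
        Complex.conj_ofReal, hu']
      linear_combination (-(α:ℂ)*(β:ℂ)*(starRingEnd ℂ) v*(ζ-z₀))*hv
        + (-(α:ℂ)*(β:ℂ)*v*((starRingEnd ℂ) v)^2)*hz_eq
    rw [hden_id, hnum_id]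
    linear_combination ((α:ℂ)*(β:ℂ)*(1+(starRingEnd ℂ) z₀*ζ)*v) * hcross
  -- globalize by the identity theorem
  have hφdiff : DifferentiableOn ℂ
      (fun ζ => T ζ * (-(starRingEnd ℂ) B * ζ + (starRingEnd ℂ) A) - (A*ζ + B)) O := by
    apply DifferentiableOn.sub
    · exact hT.mul ((differentiable_id.const_mul _).add_const _).differentiableOn
    · exact ((differentiable_id.const_mul _).add_const _).differentiableOn
  have hφzero : Set.EqOn
      (fun ζ => T ζ * (-(starRingEnd ℂ) B * ζ + (starRingEnd ℂ) A) - (A*ζ + B)) 0 O :=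
    (hφdiff.analyticOnNhd hO).eqOn_zero_of_preconnected_of_eventuallyEq_zero
      hOc.isPreconnected hz₀ hmain
  refine ⟨A, B, hAB, fun ζ hζ => ?_⟩
  have hz0 : T ζ * (-(starRingEnd ℂ) B * ζ + (starRingEnd ℂ) A) - (A*ζ + B) = 0 := hφzero hζ
  have hden : -(starRingEnd ℂ) B * ζ + (starRingEnd ℂ) A ≠ 0 := by
    intro hd0
    have hnum0 : A*ζ + B = 0 := by
      linear_combination -hz0 + T ζ * hd0
    have h2 : (starRingEnd ℂ) A = (starRingEnd ℂ) B * ζ := by linear_combination hd0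
    have h3 : A = B * (starRingEnd ℂ) ζ := by
      have := congrArg (starRingEnd ℂ) h2
      simpa only [Complex.conj_conj, map_mul] using this
    have h4 : B * ((starRingEnd ℂ) ζ * ζ + 1) = 0 := by
      linear_combination hnum0 - ζ * h3
    have h5 : (starRingEnd ℂ) ζ * ζ + 1 ≠ 0 := by
      rw [mul_comm, mc]
      intro hcon
      have h6 : ((‖ζ‖^2 + 1 : ℝ) : ℂ) = 0 := by push_cast at hcon ⊢; linear_combination hcon
      rw [Complex.ofReal_eq_zero] at h6
      nlinarith [sq_nonneg ‖ζ‖]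
    have hB0 : B = 0 := by
      rcases mul_eq_zero.1 h4 with h | h
      · exact h
      · exact absurd h h5
    have hA0 : A = 0 := by rw [h3, hB0, zero_mul]
    rw [hA0, hB0] at hAB
    simp at hAB
  refine ⟨hden, ?_⟩
  rw [eq_div_iff hden]
  linear_combination hz0
end
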